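/- arXiv:2601.19748 — 11 statements merged into one kernel-verified Lean document; each statement's English description precedes it below -/
import Mathlib

section
/- Let G be a finite simple graph, let f be a Roman dominating function on G, and let A be a two-neighbour packing of G. Then |A| ≤ Σ_{v∈V(G)} f(v), i.e., the size of any two-neighbour packing is at most the weight of any Roman dominating function. -/
open SimpleGraph

/-- The closed neighbourhood `N[v]` of a vertex `v`: `v` together with its neighbours. -/
def closedNbhd {V : Type*} (G : SimpleGraph V) (v : V) : Set V :=
  insert v (G.neighborSet v)

/-- A Roman dominating function on `G`: a map into `{0,1,2}` such that every vertex with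
value `0` has a neighbour with value `2`. -/
def IsRomanDominating {V : Type*} (G : SimpleGraph V) (f : V → ℕ) : Prop :=
  (∀ v, f v ≤ 2) ∧ ∀ v, f v = 0 → ∃ u, G.Adj v u ∧ f u = 2

/-- A two-neighbour packing of `G`: a set of vertices such that every closed
neighbourhood contains at most two of its members. -/
def IsTwoNbrPacking {V : Type*} (G : SimpleGraph V) (A : Set V) : Prop :=
  ∀ v, (closedNbhd G v ∩ A).ncard ≤ 2

/-! Send every `a ∈ A` of weight `0` to a neighbour of weight `2` and every other vertex to
itself. The fibre over `u` lies in `N[u] ∩ A`, so it has at most two elements; when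
`f u ≠ 2` it is contained in `{u}`, and it is empty when `f u = 0`. Summing over `u` gives
`|A| ≤ ∑ f`. -/

section

variable {V : Type*} {G : SimpleGraph V}

theorem IsRomanDominating.exists_shift {f : V → ℕ} (hf : IsRomanDominating G f) :
    ∃ φ : V → V, ∀ a, (G.Adj a (φ a) ∧ f (φ a) = 2) ∨ (φ a = a ∧ f a ≠ 0) := by
  have h (a : V) : ∃ b, (G.Adj a b ∧ f b = 2) ∨ (b = a ∧ f a ≠ 0) := by
    by_cases ha : f a = 0
    · exact (hf.2 a ha).imp fun _ ↦ Or.inl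
    · exact ⟨a, Or.inr ⟨rfl, ha⟩⟩
  choose φ hφ using h
  exact ⟨φ, hφ⟩

theorem IsTwoNbrPacking.ncard_fiber_le [Finite V] {A : Set V} (hA : IsTwoNbrPacking G A)
    {f : V → ℕ} {φ : V → V}
    (hφ : ∀ a, (G.Adj a (φ a) ∧ f (φ a) = 2) ∨ (φ a = a ∧ f a ≠ 0)) (u : V) :
    {a ∈ A | φ a = u}.ncard ≤ f u := by
  obtain h2 | h2 := eq_or_ne (f u) 2
  · have hsub : {a ∈ A | φ a = u} ⊆ closedNbhd G u ∩ A := by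
      rintro a ⟨ha, rfl⟩
      refine ⟨?_, ha⟩
      rcases hφ a with ⟨hadj, -⟩ | ⟨hfix, -⟩
      · exact Set.mem_insert_of_mem _ hadj.symm
      · rw [hfix]
        exact Set.mem_insert a _
    exact h2 ▸ (Set.ncard_le_ncard hsub).trans (hA u)
  · have hsub : {a ∈ A | φ a = u} ⊆ {a | a = u ∧ f u ≠ 0} := by
      rintro a ⟨-, rfl⟩
      rcases hφ a with ⟨-, h⟩ | ⟨hfix, h⟩
      · exact absurd h h2
      · rw [hfix]
        exact ⟨rfl, h⟩
    refine (Set.ncard_le_ncard hsub).trans ?_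
    by_cases h0 : f u = 0 <;> simp [h0]
    omega

end

theorem weak_duality_pointwise {V : Type*} [Fintype V] (G : SimpleGraph V)
    (f : V → ℕ) (hf : IsRomanDominating G f)
    (A : Set V) (hA : IsTwoNbrPacking G A) :
    A.ncard ≤ ∑ v, f v := by
  obtain ⟨φ, hφ⟩ := hf.exists_shift
  calc A.ncard = (⋃ u, {a ∈ A | φ a = u}).ncard := by
        congr 1; ext a; simp
    _ ≤ ∑ u, {a ∈ A | φ a = u}.ncard := Set.ncard_iUnion_le_of_fintype _
    _ ≤ ∑ u, f u := Finset.sum_le_sum fun u _ ↦ hA.ncard_fiber_le hφ u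
end

section
/- For every finite simple graph G, the two-neighbour packing number is at most the Roman domination number: γ̄_R(G) ≤ γ_R(G) (weak duality). -/
open SimpleGraph

/-- The Roman domination number `γ_R(G)`: the minimum weight of a Roman dominating
function on `G`. -/
noncomputable def romanNumber {V : Type*} [Fintype V] (G : SimpleGraph V) : ℕ :=
  sInf {w | ∃ f : V → ℕ, IsRomanDominating G f ∧ ∑ v, f v = w}

/-- The two-neighbour packing number `γ̄_R(G)`: the maximum size of a two-neighbour
packing of `G`. -/
noncomputable def tnpNumber {V : Type*} [Fintype V] (G : SimpleGraph V) : ℕ :=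
  sSup {n | ∃ A : Set V, IsTwoNbrPacking G A ∧ A.ncard = n}

lemma key_counting {V : Type*} [Fintype V] (G : SimpleGraph V) (A : Set V)
    (hA : IsTwoNbrPacking G A) (f : V → ℕ) (hf : IsRomanDominating G f) :
    A.ncard ≤ ∑ v, f v := by
  classical
  set A' := A.toFinset with hA'
  set V1 := Finset.univ.filter (fun v => f v = 1) with hV1
  set V2 := Finset.univ.filter (fun v => f v = 2) with hV2
  -- weight lower bound
  have hdisj : Disjoint V1 V2 := by
    rw [Finset.disjoint_filter]
    intro x _ h1 h2
    omega
  have h1 : ∑ v ∈ V1, f v = V1.card := by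
    rw [Finset.sum_congr rfl (fun v hv => (Finset.mem_filter.mp hv).2)]
    simp
    rfl
  have h2 : ∑ v ∈ V2, f v = 2 * V2.card := by
    rw [Finset.sum_congr rfl (fun v hv => (Finset.mem_filter.mp hv).2)]
    simp [mul_comm]
    rfl
  have hw : V1.card + 2 * V2.card ≤ ∑ v, f v := by
    calc V1.card + 2 * V2.card = ∑ v ∈ V1 ∪ V2, f v := by
          rw [Finset.sum_union hdisj, h1, h2]
      _ ≤ ∑ v, f v := Finset.sum_le_sum_of_subset (Finset.subset_univ _)
  -- the map from packing vertices with f = 0 or 2 into V2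
  have hg0 : ∀ a, f a = 0 → G.Adj a (if h : f a = 0 then (hf.2 a h).choose else a)
      ∧ f (if h : f a = 0 then (hf.2 a h).choose else a) = 2 := by
    intro a ha
    simp only [ha, dif_pos]
    exact (hf.2 a ha).choose_spec
  set g : V → V := fun a => if h : f a = 0 then (hf.2 a h).choose else a with hgdef
  set B := A'.filter (fun a => f a ≠ 1) with hB
  have hBA : ∀ a ∈ B, a ∈ A := by
    intro a ha
    exact Set.mem_toFinset.mp (Finset.mem_filter.mp ha).1
  have hcases : ∀ a ∈ B, f a = 0 ∨ f a = 2 := by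
    intro a ha
    have := hf.1 a
    have := (Finset.mem_filter.mp ha).2
    omega
  have hg : ∀ a ∈ B, g a ∈ V2 := by
    intro a ha
    rcases hcases a ha with h | h
    · exact Finset.mem_filter.mpr ⟨Finset.mem_univ _, (hg0 a h).2⟩
    · have : g a = a := by
        simp only [hgdef]
        exact dif_neg (by omega)
      rw [this]
      exact Finset.mem_filter.mpr ⟨Finset.mem_univ _, h⟩
  have hBcard : B.card = ∑ u ∈ V2, (B.filter (fun a => g a = u)).card :=
    Finset.card_eq_sum_card_fiberwise hg
  have hfib : ∀ u ∈ V2, (B.filter (fun a => g a = u)).card ≤ 2 := by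
    intro u hu
    have hsub : B.filter (fun a => g a = u) ⊆ (closedNbhd G u ∩ A).toFinset := by
      intro a ha
      obtain ⟨haB, hgu⟩ := Finset.mem_filter.mp ha
      rw [Set.mem_toFinset]
      refine ⟨?_, hBA a haB⟩
      rcases hcases a haB with h | h
      · have hadj : G.Adj a (g a) := (hg0 a h).1
        rw [hgu] at hadj
        exact Set.mem_insert_iff.mpr (Or.inr hadj.symm)
      · have : g a = a := by
          simp only [hgdef]
          exact dif_neg (by omega)
        rw [this] at hgu
        rw [← hgu]
        exact Set.mem_insert _ _
    calc (B.filter (fun a => g a = u)).card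
        ≤ (closedNbhd G u ∩ A).toFinset.card := Finset.card_le_card hsub
      _ = (closedNbhd G u ∩ A).ncard := (Set.ncard_eq_toFinset_card' _).symm
      _ ≤ 2 := hA u
  have hB2 : B.card ≤ 2 * V2.card := by
    rw [hBcard]
    calc ∑ u ∈ V2, (B.filter (fun a => g a = u)).card ≤ ∑ _u ∈ V2, 2 :=
          Finset.sum_le_sum hfib
      _ = 2 * V2.card := by simp [mul_comm]
  have hsplit : (A'.filter (fun a => f a = 1)).card + B.card = A'.card :=
    Finset.card_filter_add_card_filter_not (fun a => f a = 1)
  have hA1 : (A'.filter (fun a => f a = 1)).card ≤ V1.card := by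
    apply Finset.card_le_card
    intro a ha
    exact Finset.mem_filter.mpr ⟨Finset.mem_univ _, (Finset.mem_filter.mp ha).2⟩
  have hAcard : A.ncard = A'.card := Set.ncard_eq_toFinset_card' A
  omega

theorem weak_duality {V : Type*} [Fintype V] (G : SimpleGraph V) :
    tnpNumber G ≤ romanNumber G := by
  classical
  have hroman : romanNumber G ∈
      {w | ∃ f : V → ℕ, IsRomanDominating G f ∧ ∑ v, f v = w} := by
    apply Nat.sInf_mem
    exact ⟨Fintype.card V, fun _ => 1, ⟨fun v => by norm_num, fun v h => by simp at h⟩, by simp⟩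
  obtain ⟨f, hf, hfw⟩ := hroman
  apply csSup_le
  · exact ⟨0, ∅, fun v => by simp, by simp⟩
  · rintro n ⟨A, hA, rfl⟩
    rw [← hfw]
    exact key_counting G A hA f hf
end

section
/- For every finite tree T (a finite connected acyclic simple graph), the Roman domination number equals the two-neighbour packing number: γ_R(T) = γ̄_R(T) (strong duality on trees). -/
open SimpleGraph

set_option linter.unusedSectionVars false

namespace RomanDual

open Classical Finset

variable {V : Type*} [Fintype V] (T : SimpleGraph V)

/-- closed neighbourhood as a Finset -/
noncomputable def cl (v : V) : Finset V := insert v (Finset.univ.filter (fun u => T.Adj v u))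

lemma mem_cl {v u : V} : u ∈ cl T v ↔ u = v ∨ T.Adj v u := by
  simp [cl]

/-- reachability within a vertex set -/
def Rch (S : Finset V) (u v : V) : Prop :=
  ∃ p : T.Walk u v, ∀ x ∈ p.support, x ∈ S

/-- domination on S -/
def Dom (S : Finset V) (f : V → ℕ) : Prop :=
  ∀ v ∈ S, f v = 0 → ∃ u ∈ S, T.Adj v u ∧ f u = 2

/-- domination on S except possibly at x -/
def DomExc (S : Finset V) (x : V) (f : V → ℕ) : Prop :=
  ∀ v ∈ S, v ≠ x → f v = 0 → ∃ u ∈ S, T.Adj v u ∧ f u = 2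

noncomputable def gam (S : Finset V) : ℕ :=
  sInf {w | ∃ f : V → ℕ, (∀ v, f v ≤ 2) ∧ Dom T S f ∧ ∑ v ∈ S, f v = w}

noncomputable def eN (S : Finset V) (r : V) : ℕ :=
  sInf {w | ∃ f : V → ℕ, (∀ v, f v ≤ 2) ∧ f r = 0 ∧ DomExc T S r f ∧ ∑ v ∈ S, f v = w}

noncomputable def zN (S : Finset V) (r : V) : ℕ :=
  sInf {w | ∃ f : V → ℕ, (∀ v, f v ≤ 2) ∧ f r = 2 ∧ Dom T S f ∧ ∑ v ∈ S, f v = w}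

/-- packing within S -/
def Pack (S A : Finset V) : Prop :=
  A ⊆ S ∧ ∀ v ∈ S, (cl T v ∩ A).card ≤ 2

lemma gam_set_nonempty (S : Finset V) :
    {w | ∃ f : V → ℕ, (∀ v, f v ≤ 2) ∧ Dom T S f ∧ ∑ v ∈ S, f v = w}.Nonempty := by
  refine ⟨∑ v ∈ S, (1:ℕ), fun _ => 1, fun _ => one_le_two, fun v _ h => by simp at h, rfl⟩

lemma eN_set_nonempty (S : Finset V) (r : V) :
    {w | ∃ f : V → ℕ, (∀ v, f v ≤ 2) ∧ f r = 0 ∧ DomExc T S r f ∧ ∑ v ∈ S, f v = w}.Nonempty := by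
  classical
  refine ⟨_, fun v => if v = r then 0 else 2, ?_, by simp, ?_, rfl⟩
  · intro v; by_cases h : v = r <;> simp [h]
  · intro v hv hvr h0
    simp only [if_neg hvr] at h0
    omega

lemma zN_set_nonempty (S : Finset V) (r : V) :
    {w | ∃ f : V → ℕ, (∀ v, f v ≤ 2) ∧ f r = 2 ∧ Dom T S f ∧ ∑ v ∈ S, f v = w}.Nonempty := by
  classical
  refine ⟨_, fun v => if v = r then 2 else 1, ?_, by simp, ?_, rfl⟩
  · intro v; by_cases h : v = r <;> simp [h]
  · intro v hv h0
    by_cases hvr : v = r <;> simp [hvr] at h0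

lemma gam_spec (S : Finset V) :
    ∃ f : V → ℕ, (∀ v, f v ≤ 2) ∧ Dom T S f ∧ ∑ v ∈ S, f v = gam T S :=
  Nat.sInf_mem (gam_set_nonempty T S)

lemma eN_spec (S : Finset V) (r : V) :
    ∃ f : V → ℕ, (∀ v, f v ≤ 2) ∧ f r = 0 ∧ DomExc T S r f ∧ ∑ v ∈ S, f v = eN T S r :=
  Nat.sInf_mem (eN_set_nonempty T S r)

lemma zN_spec (S : Finset V) (r : V) :
    ∃ f : V → ℕ, (∀ v, f v ≤ 2) ∧ f r = 2 ∧ Dom T S f ∧ ∑ v ∈ S, f v = zN T S r :=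
  Nat.sInf_mem (zN_set_nonempty T S r)

lemma gam_le {S : Finset V} {f : V → ℕ} (h1 : ∀ v, f v ≤ 2) (h2 : Dom T S f) :
    gam T S ≤ ∑ v ∈ S, f v :=
  Nat.sInf_le ⟨f, h1, h2, rfl⟩

lemma eN_le {S : Finset V} {r : V} {f : V → ℕ} (h1 : ∀ v, f v ≤ 2) (h0 : f r = 0)
    (h2 : DomExc T S r f) : eN T S r ≤ ∑ v ∈ S, f v :=
  Nat.sInf_le ⟨f, h1, h0, h2, rfl⟩

lemma zN_le {S : Finset V} {r : V} {f : V → ℕ} (h1 : ∀ v, f v ≤ 2) (h0 : f r = 2)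
    (h2 : Dom T S f) : zN T S r ≤ ∑ v ∈ S, f v :=
  Nat.sInf_le ⟨f, h1, h0, h2, rfl⟩

/-- F2 : γ ≤ z -/
lemma gam_le_zN (S : Finset V) (r : V) : gam T S ≤ zN T S r := by
  obtain ⟨f, h1, _, h2, hw⟩ := zN_spec T S r
  calc gam T S ≤ ∑ v ∈ S, f v := gam_le T h1 h2
  _ = _ := hw

/-- F1 : γ ≤ e + 1 -/
lemma gam_le_eN_add_one (S : Finset V) (r : V) (hr : r ∈ S) : gam T S ≤ eN T S r + 1 := by
  classical
  obtain ⟨f, h1, h0, h2, hw⟩ := eN_spec T S r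
  have hle : gam T S ≤ ∑ v ∈ S, (Function.update f r 1) v := by
    apply gam_le
    · intro v
      by_cases hv : v = r
      · subst hv; simp
      · rw [Function.update_of_ne hv]; exact h1 v
    · intro v hv hv0
      have hvr : v ≠ r := by
        intro h; subst h; simp [Function.update_self] at hv0
      rw [Function.update_of_ne hvr] at hv0
      obtain ⟨u, hu, hadj, hu2⟩ := h2 v hv hvr hv0
      have hur : u ≠ r := by intro h; subst h; omega
      exact ⟨u, hu, hadj, by rwa [Function.update_of_ne hur]⟩
  have hsum : ∑ v ∈ S, (Function.update f r 1) v = (∑ v ∈ S, f v) + 1 := by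
    rw [Finset.sum_update_of_mem hr, Finset.sum_eq_sum_sdiff_singleton_add hr f, h0]
    omega
  omega

/-- γ ≥ 1 on nonempty S -/
lemma one_le_gam {S : Finset V} {r : V} (hr : r ∈ S) : 1 ≤ gam T S := by
  obtain ⟨f, h1, h2, hw⟩ := gam_spec T S
  rcases Nat.eq_zero_or_pos (gam T S) with h | h
  · exfalso
    rw [h] at hw
    have hz : ∀ v ∈ S, f v = 0 := by
      intro v hv
      have := Finset.sum_eq_zero_iff.mp hw v hv
      omega
    obtain ⟨u, hu, _, hu2⟩ := h2 r hr (hz r hr)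
    rw [hz u hu] at hu2; omega
  · omega

end RomanDual

namespace RomanDual
open Classical Finset
variable {V : Type*} [Fintype V] (T : SimpleGraph V)
variable {S A B : Finset V} {r b : V}

/-- merged function -/
noncomputable def mg (A : Finset V) (fA fB : V → ℕ) : V → ℕ :=
  fun v => if v ∈ A then fA v else fB v

section merge
variable (hU : A ∪ B = S) (hD : Disjoint A B) (hrA : r ∈ A) (hbB : b ∈ B)
  (hcross : ∀ u ∈ A, ∀ v ∈ B, T.Adj u v → u = r ∧ v = b) (hadj : T.Adj r b)

lemma mg_A {fA fB : V → ℕ} {v : V} (hv : v ∈ A) : mg A fA fB v = fA v := if_pos hv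

include hD in
lemma mg_B {fA fB : V → ℕ} {v : V} (hv : v ∈ B) : mg A fA fB v = fB v :=
  if_neg (Finset.disjoint_right.mp hD hv)

include hU in
lemma mem_S_of_A (hv : v ∈ A) : v ∈ S := hU ▸ Finset.mem_union_left _ hv
include hU in
lemma mem_S_of_B (hv : v ∈ B) : v ∈ S := hU ▸ Finset.mem_union_right _ hv

include hU hD in
lemma sum_split (f : V → ℕ) : ∑ v ∈ S, f v = ∑ v ∈ A, f v + ∑ v ∈ B, f v := by
  rw [← hU, Finset.sum_union hD]

include hU hD in
lemma mg_sum {fA fB : V → ℕ} :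
    ∑ v ∈ S, mg A fA fB v = ∑ v ∈ A, fA v + ∑ v ∈ B, fB v := by
  rw [sum_split (hU := hU) (hD := hD)]
  congr 1
  · exact Finset.sum_congr rfl (fun v hv => mg_A hv)
  · exact Finset.sum_congr rfl (fun v hv => mg_B (hD := hD) hv)

lemma mg_le2 {fA fB : V → ℕ} (h1 : ∀ v, fA v ≤ 2) (h2 : ∀ v, fB v ≤ 2) :
    ∀ v, mg A fA fB v ≤ 2 := by
  intro v; unfold mg; split
  · exact h1 v
  · exact h2 v

include hU hD hrA hbB hcross hadj

/-- C1 : γ_T ≤ γ_A + γ_B -/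
lemma gam_union_le : gam T S ≤ gam T A + gam T B := by
  obtain ⟨fA, hA1, hA2, hAw⟩ := gam_spec T A
  obtain ⟨fB, hB1, hB2, hBw⟩ := gam_spec T B
  have hd : Dom T S (mg A fA fB) := by
    intro v hv h0
    rw [← hU, Finset.mem_union] at hv
    rcases hv with hv | hv
    · rw [mg_A hv] at h0
      obtain ⟨u, hu, huadj, hu2⟩ := hA2 v hv h0
      exact ⟨u, mem_S_of_A hU hu, huadj, by rwa [mg_A hu]⟩
    · rw [mg_B hD hv] at h0
      obtain ⟨u, hu, huadj, hu2⟩ := hB2 v hv h0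
      exact ⟨u, mem_S_of_B hU hu, huadj, by rwa [mg_B hD hu]⟩
  calc gam T S ≤ ∑ v ∈ S, mg A fA fB v := gam_le T (mg_le2 hA1 hB1) hd
  _ = _ := by rw [mg_sum hU hD, hAw, hBw]

/-- C2 : γ_T ≤ e_A + z_B -/
lemma gam_le_eA_zB : gam T S ≤ eN T A r + zN T B b := by
  obtain ⟨fA, hA1, hA0, hA2, hAw⟩ := eN_spec T A r
  obtain ⟨fB, hB1, hB0, hB2, hBw⟩ := zN_spec T B b
  have hd : Dom T S (mg A fA fB) := by
    intro v hv h0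
    rw [← hU, Finset.mem_union] at hv
    rcases hv with hv | hv
    · rw [mg_A hv] at h0
      by_cases hvr : v = r
      · subst hvr
        exact ⟨b, mem_S_of_B hU hbB, hadj, by rwa [mg_B hD hbB]⟩
      · obtain ⟨u, hu, huadj, hu2⟩ := hA2 v hv hvr h0
        exact ⟨u, mem_S_of_A hU hu, huadj, by rwa [mg_A hu]⟩
    · rw [mg_B hD hv] at h0
      obtain ⟨u, hu, huadj, hu2⟩ := hB2 v hv h0
      exact ⟨u, mem_S_of_B hU hu, huadj, by rwa [mg_B hD hu]⟩
  calc gam T S ≤ ∑ v ∈ S, mg A fA fB v := gam_le T (mg_le2 hA1 hB1) hd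
  _ = _ := by rw [mg_sum hU hD, hAw, hBw]

/-- C3 : e_T ≤ e_A + γ_B -/
lemma eN_union_le : eN T S r ≤ eN T A r + gam T B := by
  obtain ⟨fA, hA1, hA0, hA2, hAw⟩ := eN_spec T A r
  obtain ⟨fB, hB1, hB2, hBw⟩ := gam_spec T B
  have hd : DomExc T S r (mg A fA fB) := by
    intro v hv hvr h0
    rw [← hU, Finset.mem_union] at hv
    rcases hv with hv | hv
    · rw [mg_A hv] at h0
      obtain ⟨u, hu, huadj, hu2⟩ := hA2 v hv hvr h0
      exact ⟨u, mem_S_of_A hU hu, huadj, by rwa [mg_A hu]⟩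
    · rw [mg_B hD hv] at h0
      obtain ⟨u, hu, huadj, hu2⟩ := hB2 v hv h0
      exact ⟨u, mem_S_of_B hU hu, huadj, by rwa [mg_B hD hu]⟩
  calc eN T S r ≤ ∑ v ∈ S, mg A fA fB v :=
        eN_le T (mg_le2 hA1 hB1) (by rw [mg_A hrA]; exact hA0) hd
  _ = _ := by rw [mg_sum hU hD, hAw, hBw]

/-- C4 : z_T ≤ z_A + γ_B -/
lemma zN_union_le_gam : zN T S r ≤ zN T A r + gam T B := by
  obtain ⟨fA, hA1, hA0, hA2, hAw⟩ := zN_spec T A r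
  obtain ⟨fB, hB1, hB2, hBw⟩ := gam_spec T B
  have hd : Dom T S (mg A fA fB) := by
    intro v hv h0
    rw [← hU, Finset.mem_union] at hv
    rcases hv with hv | hv
    · rw [mg_A hv] at h0
      obtain ⟨u, hu, huadj, hu2⟩ := hA2 v hv h0
      exact ⟨u, mem_S_of_A hU hu, huadj, by rwa [mg_A hu]⟩
    · rw [mg_B hD hv] at h0
      obtain ⟨u, hu, huadj, hu2⟩ := hB2 v hv h0
      exact ⟨u, mem_S_of_B hU hu, huadj, by rwa [mg_B hD hu]⟩
  calc zN T S r ≤ ∑ v ∈ S, mg A fA fB v :=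
        zN_le T (mg_le2 hA1 hB1) (by rw [mg_A hrA]; exact hA0) hd
  _ = _ := by rw [mg_sum hU hD, hAw, hBw]

/-- C5 : z_T ≤ z_A + e_B -/
lemma zN_union_le_eN : zN T S r ≤ zN T A r + eN T B b := by
  obtain ⟨fA, hA1, hA0, hA2, hAw⟩ := zN_spec T A r
  obtain ⟨fB, hB1, hB0, hB2, hBw⟩ := eN_spec T B b
  have hd : Dom T S (mg A fA fB) := by
    intro v hv h0
    rw [← hU, Finset.mem_union] at hv
    rcases hv with hv | hv
    · rw [mg_A hv] at h0
      obtain ⟨u, hu, huadj, hu2⟩ := hA2 v hv h0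
      exact ⟨u, mem_S_of_A hU hu, huadj, by rwa [mg_A hu]⟩
    · rw [mg_B hD hv] at h0
      by_cases hvb : v = b
      · subst hvb
        exact ⟨r, mem_S_of_A hU hrA, hadj.symm, by rw [mg_A hrA]; exact hA0⟩
      · obtain ⟨u, hu, huadj, hu2⟩ := hB2 v hv hvb h0
        exact ⟨u, mem_S_of_B hU hu, huadj, by rwa [mg_B hD hu]⟩
  calc zN T S r ≤ ∑ v ∈ S, mg A fA fB v :=
        zN_le T (mg_le2 hA1 hB1) (by rw [mg_A hrA]; exact hA0) hd
  _ = _ := by rw [mg_sum hU hD, hAw, hBw]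

/-- D1 : e_A + γ_B ≤ e_T -/
lemma eN_split_ge : eN T A r + gam T B ≤ eN T S r := by
  obtain ⟨f, h1, h0, h2, hw⟩ := eN_spec T S r
  have hA : DomExc T A r f := by
    intro v hv hvr hv0
    obtain ⟨u, hu, huadj, hu2⟩ := h2 v (mem_S_of_A hU hv) hvr hv0
    rw [← hU, Finset.mem_union] at hu
    rcases hu with hu | hu
    · exact ⟨u, hu, huadj, hu2⟩
    · exact absurd (hcross v hv u hu huadj).1 hvr
  have hB : Dom T B f := by
    intro v hv hv0
    have hvr : v ≠ r := fun h => Finset.disjoint_left.mp hD (h ▸ hrA) hv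
    obtain ⟨u, hu, huadj, hu2⟩ := h2 v (mem_S_of_B hU hv) hvr hv0
    rw [← hU, Finset.mem_union] at hu
    rcases hu with hu | hu
    · exfalso
      have := (hcross u hu v hv huadj.symm).1
      subst this
      rw [h0] at hu2
      omega
    · exact ⟨u, hu, huadj, hu2⟩
  calc eN T A r + gam T B ≤ (∑ v ∈ A, f v) + (∑ v ∈ B, f v) :=
        Nat.add_le_add (eN_le T h1 h0 hA) (gam_le T h1 hB)
  _ = ∑ v ∈ S, f v := (sum_split hU hD f).symm
  _ = _ := hw


section packmerge
variable {SA SB : Finset V}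
omit hU hD hrA hbB hcross hadj

include hD hcross in
lemma cl_inter_empty_A (hSB : SB ⊆ B) {v : V} (hv : v ∈ A) (hvr : v ≠ r) :
    cl T v ∩ SB = ∅ := by
  rw [Finset.eq_empty_iff_forall_notMem]
  intro x hx
  rw [Finset.mem_inter, mem_cl] at hx
  obtain ⟨hcl, hxSB⟩ := hx
  have hxB : x ∈ B := hSB hxSB
  rcases hcl with h | h
  · subst h; exact Finset.disjoint_left.mp hD hv hxB
  · exact hvr (hcross v hv x hxB h).1

include hD hcross hrA in
lemma cl_r_inter_subset (hSB : SB ⊆ B) : cl T r ∩ SB ⊆ {b} := by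
  intro x hx
  rw [Finset.mem_inter, mem_cl] at hx
  obtain ⟨hcl, hxSB⟩ := hx
  have hxB : x ∈ B := hSB hxSB
  rcases hcl with h | h
  · exact absurd (h ▸ hxB) (Finset.disjoint_left.mp hD hrA)
  · rw [Finset.mem_singleton]
    exact (hcross r hrA x hxB h).2

include hD hcross in
lemma cl_inter_empty_B (hSA : SA ⊆ A) {v : V} (hv : v ∈ B) (hvb : v ≠ b) :
    cl T v ∩ SA = ∅ := by
  rw [Finset.eq_empty_iff_forall_notMem]
  intro x hx
  rw [Finset.mem_inter, mem_cl] at hx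
  obtain ⟨hcl, hxSA⟩ := hx
  have hxA : x ∈ A := hSA hxSA
  rcases hcl with h | h
  · subst h; exact Finset.disjoint_right.mp hD hv hxA
  · exact hvb (hcross x hxA v hv h.symm).2

include hD hcross hbB in
lemma cl_b_inter_subset (hSA : SA ⊆ A) : cl T b ∩ SA ⊆ {r} := by
  intro x hx
  rw [Finset.mem_inter, mem_cl] at hx
  obtain ⟨hcl, hxSA⟩ := hx
  have hxA : x ∈ A := hSA hxSA
  rcases hcl with h | h
  · exact absurd (h ▸ hxA) (Finset.disjoint_right.mp hD hbB)
  · rw [Finset.mem_singleton]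
    exact (hcross x hxA b hbB h.symm).1

include hU hD hcross in
lemma pack_union (PA : Pack T A SA) (PB : Pack T B SB)
    (hr2 : (cl T r ∩ (SA ∪ SB)).card ≤ 2) (hb2 : (cl T b ∩ (SA ∪ SB)).card ≤ 2) :
    Pack T S (SA ∪ SB) := by
  obtain ⟨hSA, hPA⟩ := PA
  obtain ⟨hSB, hPB⟩ := PB
  constructor
  · intro x hx
    rw [Finset.mem_union] at hx
    rcases hx with h | h
    · exact mem_S_of_A hU (hSA h)
    · exact mem_S_of_B hU (hSB h)
  · intro v hv
    by_cases hvr : v = r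
    · subst hvr; exact hr2
    by_cases hvb : v = b
    · subst hvb; exact hb2
    rw [← hU, Finset.mem_union] at hv
    rcases hv with hv | hv
    · rw [Finset.inter_union_distrib_left, cl_inter_empty_A (T := T) hD hcross hSB hv hvr,
        Finset.union_empty]
      exact hPA v hv
    · rw [Finset.inter_union_distrib_left, cl_inter_empty_B (T := T) hD hcross hSA hv hvb,
        Finset.union_comm, Finset.union_empty]
      exact hPB v hv

include hD in
lemma card_union_SA_SB (hSA : SA ⊆ A) (hSB : SB ⊆ B) :
    (SA ∪ SB).card = SA.card + SB.card := by
  rw [Finset.card_union_of_disjoint]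
  exact Finset.disjoint_of_subset_left hSA (Finset.disjoint_of_subset_right hSB hD)

include hD hcross hrA in
lemma card_cl_r_union (hSB : SB ⊆ B) :
    (cl T r ∩ (SA ∪ SB)).card ≤ (cl T r ∩ SA).card + 1 := by
  rw [Finset.inter_union_distrib_left]
  calc (cl T r ∩ SA ∪ cl T r ∩ SB).card ≤ (cl T r ∩ SA).card + (cl T r ∩ SB).card :=
        Finset.card_union_le _ _
  _ ≤ (cl T r ∩ SA).card + 1 := by
    have := Finset.card_le_card (cl_r_inter_subset (T := T) hD hrA hcross hSB)
    simp only [Finset.card_singleton] at this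
    omega

include hD hcross hrA in
lemma card_cl_r_union_no_b (hSB : SB ⊆ B) (hbSB : b ∉ SB) :
    (cl T r ∩ (SA ∪ SB)).card ≤ (cl T r ∩ SA).card := by
  rw [Finset.inter_union_distrib_left]
  have h0 : cl T r ∩ SB = ∅ := by
    rw [Finset.eq_empty_iff_forall_notMem]
    intro x hx
    have := cl_r_inter_subset (T := T) hD hrA hcross hSB hx
    rw [Finset.mem_singleton] at this
    subst this
    exact hbSB (Finset.mem_inter.mp hx).2
  rw [h0, Finset.union_empty]

include hD hcross hbB in
lemma card_cl_b_union (hSA : SA ⊆ A) :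
    (cl T b ∩ (SA ∪ SB)).card ≤ (cl T b ∩ SB).card + 1 := by
  rw [Finset.inter_union_distrib_left]
  calc (cl T b ∩ SA ∪ cl T b ∩ SB).card ≤ (cl T b ∩ SA).card + (cl T b ∩ SB).card :=
        Finset.card_union_le _ _
  _ ≤ (cl T b ∩ SB).card + 1 := by
    have := Finset.card_le_card (cl_b_inter_subset (T := T) hD hbB hcross hSA)
    simp only [Finset.card_singleton] at this
    omega

include hD hcross hbB in
lemma card_cl_b_union_no_r (hSA : SA ⊆ A) (hrSA : r ∉ SA) :
    (cl T b ∩ (SA ∪ SB)).card ≤ (cl T b ∩ SB).card := by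
  rw [Finset.inter_union_distrib_left]
  have h0 : cl T b ∩ SA = ∅ := by
    rw [Finset.eq_empty_iff_forall_notMem]
    intro x hx
    have := cl_b_inter_subset (T := T) hD hbB hcross hSA hx
    rw [Finset.mem_singleton] at this
    subst this
    exact hrSA (Finset.mem_inter.mp hx).2
  rw [h0, Finset.union_comm, Finset.union_empty]

end packmerge
end merge

lemma exists_nbr {S : Finset V} {r : V} (hS2 : 1 < S.card) (hr : r ∈ S)
    (hconn : ∀ v ∈ S, Rch T S v r) : ∃ b ∈ S, T.Adj r b := by
  obtain ⟨v, hv, hvr⟩ := Finset.exists_mem_ne hS2 r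
  obtain ⟨p, hp⟩ := hconn v hv
  have hp' : ∀ x ∈ p.reverse.support, x ∈ S := by
    intro x hx; rw [Walk.support_reverse] at hx; exact hp x (List.mem_reverse.mp hx)
  cases hq : p.reverse with
  | nil =>
    exfalso
    have hlen := congrArg Walk.length hq
    simp only [Walk.length_reverse, Walk.length_nil] at hlen
    exact hvr (Walk.eq_of_length_eq_zero hlen)
  | cons h q =>
    rename_i b
    refine ⟨b, ?_, h⟩
    apply hp'
    rw [hq]
    simp [Walk.support_cons]

end RomanDual

namespace RomanDual2
open RomanDual Classical
variable {V : Type*} [Fintype V] {T : SimpleGraph V}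

/-- the big split lemma -/
lemma split (hacy : T.IsAcyclic) {S : Finset V} {r b : V} (hr : r ∈ S) (hb : b ∈ S)
    (hadj : T.Adj r b) (hconn : ∀ v ∈ S, Rch T S v r) :
    ∃ A B : Finset V, A ∪ B = S ∧ Disjoint A B ∧ r ∈ A ∧ b ∈ B ∧
      (∀ u ∈ A, ∀ v ∈ B, T.Adj u v → u = r ∧ v = b) ∧
      (∀ v ∈ A, Rch T A v r) ∧ (∀ v ∈ B, Rch T B v b) := by
  classical
  set B : Finset V := S.filter
    (fun v => ∃ p : T.Walk b v, (∀ x ∈ p.support, x ∈ S) ∧ r ∉ p.support) with hB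
  set A : Finset V := S \ B with hA
  have hBS : B ⊆ S := Finset.filter_subset _ _
  have hrb : r ≠ b := hadj.ne
  have hbB : b ∈ B := by
    rw [hB, Finset.mem_filter]
    exact ⟨hb, Walk.nil, by simpa using hb, by simpa using hrb⟩
  have hrA : r ∈ A := by
    rw [hA, Finset.mem_sdiff]
    refine ⟨hr, ?_⟩
    rw [hB, Finset.mem_filter]
    rintro ⟨-, p, -, hrp⟩
    exact hrp p.end_mem_support
  have hdisj : Disjoint A B := Finset.sdiff_disjoint
  have hunion : A ∪ B = S := by
    rw [hA]
    exact Finset.sdiff_union_of_subset hBS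
  have hmemA : ∀ {v}, v ∈ A ↔ v ∈ S ∧ ¬ (∃ p : T.Walk b v, (∀ x ∈ p.support, x ∈ S) ∧ r ∉ p.support) := by
    intro v
    rw [hA, Finset.mem_sdiff, hB, Finset.mem_filter]
    constructor
    · rintro ⟨h1, h2⟩; exact ⟨h1, fun hc => h2 ⟨h1, hc⟩⟩
    · rintro ⟨h1, h2⟩; exact ⟨h1, fun hc => h2 hc.2⟩
  have hcross1 : ∀ u ∈ A, ∀ v ∈ B, T.Adj u v → u = r := by
    intro u hu v hv huv
    by_contra hur
    rw [hB, Finset.mem_filter] at hv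
    obtain ⟨hvS, p, hpS, hrp⟩ := hv
    have huS : u ∈ S := (hmemA.mp hu).1
    refine (hmemA.mp hu).2 ⟨p.concat huv.symm, ?_, ?_⟩
    · intro x hx
      rw [Walk.support_concat] at hx
      rcases List.mem_append.mp hx with h | h
      · exact hpS x h
      · rw [List.mem_singleton] at h; subst h; exact huS
    · rw [Walk.support_concat]
      intro hx
      rcases List.mem_append.mp hx with h | h
      · exact hrp h
      · rw [List.mem_singleton] at h; exact hur h.symm
  have hcross2 : ∀ v ∈ B, T.Adj r v → v = b := by
    intro v hv hrv
    by_contra hvb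
    rw [hB, Finset.mem_filter] at hv
    obtain ⟨hvS, p, hpS, hrp⟩ := hv
    have hP1 : r ∉ p.bypass.support := fun h => hrp (p.support_bypass_subset h)
    have hbv : b ≠ v := fun h => hvb h.symm
    have hP2path : (Walk.cons hadj.symm (Walk.cons hrv Walk.nil) : T.Walk b v).IsPath := by
      rw [Walk.isPath_def]
      simp only [Walk.support_cons, Walk.support_nil]
      refine List.nodup_cons.mpr ⟨?_, List.nodup_cons.mpr ⟨?_, List.nodup_singleton _⟩⟩
      · intro hmem
        rcases List.mem_cons.mp hmem with h | h
        · exact hrb h.symm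
        · rw [List.mem_singleton] at h; exact hbv h
      · rw [List.mem_singleton]; exact hrv.ne
    have hEq := hacy.path_unique ⟨p.bypass, p.bypass_isPath⟩
      ⟨Walk.cons hadj.symm (Walk.cons hrv Walk.nil), hP2path⟩
    have hEq' : p.bypass = Walk.cons hadj.symm (Walk.cons hrv Walk.nil) :=
      congrArg Subtype.val hEq
    apply hP1
    rw [hEq']
    simp [Walk.support_cons]
  -- connectivity of A
  have auxA : ∀ (n : ℕ) (v : V) (p : T.Walk v r), p.length ≤ n →
      (∀ x ∈ p.support, x ∈ S) → v ∈ A → Rch T A v r := by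
    intro n
    induction n with
    | zero =>
      intro v p hlen _ _
      have hv : v = r := p.eq_of_length_eq_zero (Nat.le_zero.mp hlen)
      subst hv
      exact ⟨Walk.nil, by simpa using hrA⟩
    | succ n ih =>
      intro v p hlen hsup hvA
      cases p with
      | nil => exact ⟨Walk.nil, by simpa using hrA⟩
      | @cons _ u' _ h q =>
        have hu'S : u' ∈ S := hsup u' (by rw [Walk.support_cons]; exact List.mem_cons_of_mem _ q.start_mem_support)
        by_cases hu'B : u' ∈ B
        · have hvr : v = r := hcross1 v hvA u' hu'B h
          subst hvr
          exact ⟨Walk.nil, by simpa using hrA⟩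
        · have hu'A : u' ∈ A := by rw [hA, Finset.mem_sdiff]; exact ⟨hu'S, hu'B⟩
          have hlen' : q.length ≤ n := by
            rw [Walk.length_cons] at hlen; omega
          obtain ⟨q', hq'⟩ := ih u' q hlen' (fun x hx => hsup x (by rw [Walk.support_cons]; exact List.mem_cons_of_mem _ hx)) hu'A
          refine ⟨Walk.cons h q', ?_⟩
          intro x hx
          rw [Walk.support_cons] at hx
          rcases List.mem_cons.mp hx with h' | h'
          · subst h'; exact hvA
          · exact hq' x h'
  have hconnA : ∀ v ∈ A, Rch T A v r := by
    intro v hv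
    obtain ⟨p, hp⟩ := hconn v ((hmemA.mp hv).1)
    exact auxA p.length v p le_rfl hp hv
  -- connectivity of B
  have hconnB : ∀ v ∈ B, Rch T B v b := by
    intro v hv
    rw [hB, Finset.mem_filter] at hv
    obtain ⟨hvS, p, hpS, hrp⟩ := hv
    have hsupB : ∀ x ∈ p.support, x ∈ B := by
      intro x hx
      rw [hB, Finset.mem_filter]
      refine ⟨hpS x hx, p.takeUntil x hx, ?_, ?_⟩
      · intro y hy; exact hpS y (p.support_takeUntil_subset hx hy)
      · intro hy; exact hrp (p.support_takeUntil_subset hx hy)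
    refine ⟨p.reverse, ?_⟩
    intro x hx
    rw [Walk.support_reverse] at hx
    exact hsupB x (List.mem_reverse.mp hx)
  exact ⟨A, B, hunion, hdisj, hrA, hbB, fun u hu v hv huv => ⟨hcross1 u hu v hv huv, hcross2 v hv ((hcross1 u hu v hv huv) ▸ huv)⟩, hconnA, hconnB⟩

end RomanDual2


namespace RomanDual
open Classical Finset
variable {V : Type*} [Fintype V] (T : SimpleGraph V)

/-- equality versions of the emptiness lemmas -/
lemma cl_r_inter_empty {A B : Finset V} {r b : V} (hD : Disjoint A B) (hrA : r ∈ A)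
    (hcross : ∀ u ∈ A, ∀ v ∈ B, T.Adj u v → u = r ∧ v = b) {SB : Finset V}
    (hSB : SB ⊆ B) (hbSB : b ∉ SB) : cl T r ∩ SB = ∅ := by
  rw [Finset.eq_empty_iff_forall_notMem]
  intro x hx
  have := cl_r_inter_subset T hD hrA hcross hSB hx
  rw [Finset.mem_singleton] at this
  subst this
  exact hbSB (Finset.mem_inter.mp hx).2

lemma cl_b_inter_empty {A B : Finset V} {r b : V} (hD : Disjoint A B) (hbB : b ∈ B)
    (hcross : ∀ u ∈ A, ∀ v ∈ B, T.Adj u v → u = r ∧ v = b) {SA : Finset V}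
    (hSA : SA ⊆ A) (hrSA : r ∉ SA) : cl T b ∩ SA = ∅ := by
  rw [Finset.eq_empty_iff_forall_notMem]
  intro x hx
  have := cl_b_inter_subset T hD hbB hcross hSA hx
  rw [Finset.mem_singleton] at this
  subst this
  exact hrSA (Finset.mem_inter.mp hx).2

lemma mem_cl_self (v : V) : v ∈ cl T v := by rw [mem_cl]; left; rfl

/-- The inductive invariant -/
def Inv (S : Finset V) (r : V) : Prop :=
  (eN T S r + 1 ≤ gam T S → zN T S r ≤ gam T S + 1) ∧
  (∃ A, Pack T S A ∧ r ∉ A ∧ min (eN T S r) (zN T S r) ≤ A.card) ∧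
  (∃ A, Pack T S A ∧ r ∉ A ∧ (cl T r ∩ A).card ≤ 1 ∧
    min (eN T S r + 1) (zN T S r) ≤ A.card + 1) ∧
  (∃ A, Pack T S A ∧ cl T r ∩ A = ∅ ∧ zN T S r ≤ A.card + 2) ∧
  (eN T S r + 1 ≤ gam T S → ∃ A, Pack T S A ∧ r ∈ A ∧ gam T S ≤ A.card) ∧
  (eN T S r + 1 ≤ gam T S → gam T S + 1 ≤ zN T S r →
    ∃ A, Pack T S A ∧ r ∈ A ∧ cl T r ∩ A = {r} ∧ gam T S ≤ A.card)

/-- base case : single vertex -/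
lemma inv_singleton (r : V) : Inv T {r} r := by
  classical
  have hgam_le : gam T {r} ≤ 1 := by
    have := gam_le T (S := {r}) (f := fun _ => 1) (fun _ => one_le_two)
      (fun v _ h => by simp at h)
    simpa using this
  have hgam_ge : 1 ≤ gam T {r} := one_le_gam T (Finset.mem_singleton_self r)
  have he : eN T {r} r ≤ 0 := by
    have := eN_le T (S := {r}) (r := r) (f := fun _ => 0) (fun _ => by simp) rfl
      (fun v hv hvr _ => absurd (Finset.mem_singleton.mp hv) hvr)
    simpa using this
  have hz_le : zN T {r} r ≤ 2 := by
    have := zN_le T (S := {r}) (r := r) (f := fun _ => 2) (fun _ => le_refl 2) rfl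
      (fun v _ h => by simp at h)
    simpa using this
  have hz_ge : 2 ≤ zN T {r} r := by
    obtain ⟨f, _, h2, _, hw⟩ := zN_spec T {r} r
    have : ∑ v ∈ {r}, f v = f r := Finset.sum_singleton _ _
    omega
  have hpack_empty : Pack T {r} (∅ : Finset V) := by
    refine ⟨Finset.empty_subset _, fun v _ => ?_⟩
    simp
  have hclr : ∀ v : V, cl T v ∩ {v} = {v} := by
    intro v
    apply Finset.inter_eq_right.mpr
    intro x hx
    rw [Finset.mem_singleton] at hx
    subst hx
    exact mem_cl_self T _
  have hpack_self : Pack T {r} {r} := by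
    refine ⟨Finset.Subset.refl _, fun v hv => ?_⟩
    rw [Finset.mem_singleton] at hv
    subst hv
    rw [hclr]
    simp
  refine ⟨by omega, ⟨∅, hpack_empty, by simp, by simp; omega⟩,
    ⟨∅, hpack_empty, by simp, by simp, by simp; omega⟩,
    ⟨∅, hpack_empty, by simp, by simp; omega⟩,
    fun _ => ⟨{r}, hpack_self, Finset.mem_singleton_self r, by simp; omega⟩,
    fun _ _ => ⟨{r}, hpack_self, Finset.mem_singleton_self r, hclr r, by simp; omega⟩⟩

end RomanDual

namespace RomanDual
open Classical Finset
variable {V : Type*} [Fintype V] (T : SimpleGraph V)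

lemma inv_step {S A B : Finset V} {r b : V} (hU : A ∪ B = S) (hD : Disjoint A B)
    (hrA : r ∈ A) (hbB : b ∈ B)
    (hcross : ∀ u ∈ A, ∀ v ∈ B, T.Adj u v → u = r ∧ v = b) (hadj : T.Adj r b)
    (IA : Inv T A r) (IB : Inv T B b) : Inv T S r := by
  classical
  obtain ⟨XA, Q0A, Q0pA, Q0ppA, Q1A, Q1pA⟩ := IA
  obtain ⟨XB, Q0B, Q0pB, Q0ppB, Q1B, Q1pB⟩ := IB
  have hrS : r ∈ S := mem_S_of_A hU hrA
  have hbS : b ∈ S := mem_S_of_B hU hbB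
  have F1T : gam T S ≤ eN T S r + 1 := gam_le_eN_add_one T S r hrS
  have F2T : gam T S ≤ zN T S r := gam_le_zN T S r
  have F1A : gam T A ≤ eN T A r + 1 := gam_le_eN_add_one T A r hrA
  have F2A : gam T A ≤ zN T A r := gam_le_zN T A r
  have F1B : gam T B ≤ eN T B b + 1 := gam_le_eN_add_one T B b hbB
  have F2B : gam T B ≤ zN T B b := gam_le_zN T B b
  have C1 : gam T S ≤ gam T A + gam T B := gam_union_le T hU hD hrA hbB hcross hadj
  have C2 : gam T S ≤ eN T A r + zN T B b := gam_le_eA_zB T hU hD hrA hbB hcross hadj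
  have C3 : eN T S r ≤ eN T A r + gam T B := eN_union_le T hU hD hrA hbB hcross hadj
  have C4 : zN T S r ≤ zN T A r + gam T B := zN_union_le_gam T hU hD hrA hbB hcross hadj
  have C5 : zN T S r ≤ zN T A r + eN T B b := zN_union_le_eN T hU hD hrA hbB hcross hadj
  have D1 : eN T A r + gam T B ≤ eN T S r := eN_split_ge T hU hD hrA hbB hcross hadj
  have hrnotB : ∀ {SB : Finset V}, SB ⊆ B → r ∉ SB :=
    fun hSB h => Finset.disjoint_left.mp hD hrA (hSB h)
  refine ⟨?_, ?_, ?_, ?_, ?_, ?_⟩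
  -- X
  · intro hx
    have h1 : eN T A r + 1 ≤ gam T A := by omega
    have hXA := XA h1
    rcases le_or_gt (gam T B) (eN T B b) with hBe | hBe
    · omega
    · omega
  -- Q0
  · rcases le_or_gt (gam T B) (eN T B b) with hBe | hBe
    · obtain ⟨SA, PA, hrSA, hcA⟩ := Q0A
      obtain ⟨SB, PB, hbSB, hcB⟩ := Q0B
      have hSA := PA.1
      have hSB := PB.1
      refine ⟨SA ∪ SB, pack_union T hU hD hcross PA PB
        (le_trans (card_cl_r_union_no_b T hD hrA hcross hSB hbSB) (PA.2 r hrA))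
        (le_trans (card_cl_b_union_no_r T hD hbB hcross hSA hrSA) (PB.2 b hbB)), ?_, ?_⟩
      · rw [Finset.mem_union]
        rintro (h | h)
        · exact hrSA h
        · exact hrnotB hSB h
      · rw [card_union_SA_SB hD hSA hSB]
        omega
    · obtain ⟨SA, PA, hrSA, hclrA, hcA⟩ := Q0pA
      obtain ⟨SB, PB, hbSB, hcB⟩ := Q1B (by omega)
      have hSA := PA.1
      have hSB := PB.1
      refine ⟨SA ∪ SB, pack_union T hU hD hcross PA PB
        (by have := card_cl_r_union T hD hrA hcross (SA := SA) hSB; omega)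
        (le_trans (card_cl_b_union_no_r T hD hbB hcross hSA hrSA) (PB.2 b hbB)), ?_, ?_⟩
      · rw [Finset.mem_union]
        rintro (h | h)
        · exact hrSA h
        · exact hrnotB hSB h
      · rw [card_union_SA_SB hD hSA hSB]
        omega
  -- Q0'
  · rcases le_or_gt (gam T B) (eN T B b) with hBe | hBe
    · obtain ⟨SA, PA, hrSA, hclrA, hcA⟩ := Q0pA
      obtain ⟨SB, PB, hbSB, hcB⟩ := Q0B
      have hSA := PA.1
      have hSB := PB.1
      have hcnt := card_cl_r_union_no_b T hD hrA hcross (SA := SA) hSB hbSB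
      refine ⟨SA ∪ SB, pack_union T hU hD hcross PA PB (by omega)
        (le_trans (card_cl_b_union_no_r T hD hbB hcross hSA hrSA) (PB.2 b hbB)), ?_, ?_, ?_⟩
      · rw [Finset.mem_union]
        rintro (h | h)
        · exact hrSA h
        · exact hrnotB hSB h
      · omega
      · rw [card_union_SA_SB hD hSA hSB]
        omega
    · obtain ⟨SA, PA, hclrA, hcA⟩ := Q0ppA
      obtain ⟨SB, PB, hbSB, hcB⟩ := Q1B (by omega)
      have hSA := PA.1
      have hSB := PB.1
      have hrSA : r ∉ SA := by
        intro h
        rw [Finset.eq_empty_iff_forall_notMem] at hclrA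
        exact hclrA r (Finset.mem_inter.mpr ⟨mem_cl_self T r, h⟩)
      have hcnt := card_cl_r_union T hD hrA hcross (SA := SA) hSB
      have hclrA0 : (cl T r ∩ SA).card = 0 := by rw [hclrA]; simp
      refine ⟨SA ∪ SB, pack_union T hU hD hcross PA PB (by omega)
        (le_trans (card_cl_b_union_no_r T hD hbB hcross hSA hrSA) (PB.2 b hbB)), ?_, ?_, ?_⟩
      · rw [Finset.mem_union]
        rintro (h | h)
        · exact hrSA h
        · exact hrnotB hSB h
      · omega
      · rw [card_union_SA_SB hD hSA hSB]
        omega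
  -- Q0''
  · obtain ⟨SA, PA, hclrA, hcA⟩ := Q0ppA
    obtain ⟨SB, PB, hbSB, hcB⟩ := Q0B
    have hSA := PA.1
    have hSB := PB.1
    have hrSA : r ∉ SA := by
      intro h
      rw [Finset.eq_empty_iff_forall_notMem] at hclrA
      exact hclrA r (Finset.mem_inter.mpr ⟨mem_cl_self T r, h⟩)
    have hempty : cl T r ∩ (SA ∪ SB) = ∅ := by
      rw [Finset.inter_union_distrib_left, hclrA,
        cl_r_inter_empty T hD hrA hcross hSB hbSB]
      simp
    refine ⟨SA ∪ SB, pack_union T hU hD hcross PA PB (by rw [hempty]; simp)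
      (le_trans (card_cl_b_union_no_r T hD hbB hcross hSA hrSA) (PB.2 b hbB)), hempty, ?_⟩
    rw [card_union_SA_SB hD hSA hSB]
    omega
  -- Q1
  · intro hx
    have h1 : eN T A r + 1 ≤ gam T A := by omega
    have hzB : gam T B + 1 ≤ zN T B b := by omega
    rcases le_or_gt (gam T B) (eN T B b) with hBe | hBe
    · obtain ⟨SA, PA, hrSA, hcA⟩ := Q1A h1
      obtain ⟨SB, PB, hbSB, hclbB, hcB⟩ := Q0pB
      have hSA := PA.1
      have hSB := PB.1
      have hcntb := card_cl_b_union T hD hbB hcross (SB := SB) hSA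
      refine ⟨SA ∪ SB, pack_union T hU hD hcross PA PB
        (le_trans (card_cl_r_union_no_b T hD hrA hcross hSB hbSB) (PA.2 r hrA))
        (by omega), Finset.mem_union_left _ hrSA, ?_⟩
      rw [card_union_SA_SB hD hSA hSB]
      omega
    · have hzA : gam T A + 1 ≤ zN T A r := by omega
      obtain ⟨SA, PA, hrSA, hclrA, hcA⟩ := Q1pA h1 hzA
      obtain ⟨SB, PB, hbSB, hclbB, hcB⟩ := Q1pB (by omega) hzB
      have hSA := PA.1
      have hSB := PB.1
      have hcntr := card_cl_r_union T hD hrA hcross (SA := SA) hSB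
      have hcntb := card_cl_b_union T hD hbB hcross (SB := SB) hSA
      have e1 : (cl T r ∩ SA).card = 1 := by rw [hclrA]; simp
      have e2 : (cl T b ∩ SB).card = 1 := by rw [hclbB]; simp
      refine ⟨SA ∪ SB, pack_union T hU hD hcross PA PB (by omega) (by omega),
        Finset.mem_union_left _ hrSA, ?_⟩
      rw [card_union_SA_SB hD hSA hSB]
      omega
  -- Q1'
  · intro hx hz
    have h1 : eN T A r + 1 ≤ gam T A := by omega
    have hzB : gam T B + 1 ≤ zN T B b := by omega
    rcases le_or_gt (gam T B) (eN T B b) with hBe | hBe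
    · have hzA : gam T A + 1 ≤ zN T A r := by omega
      obtain ⟨SA, PA, hrSA, hclrA, hcA⟩ := Q1pA h1 hzA
      obtain ⟨SB, PB, hbSB, hclbB, hcB⟩ := Q0pB
      have hSA := PA.1
      have hSB := PB.1
      have hcntb := card_cl_b_union T hD hbB hcross (SB := SB) hSA
      have hclr : cl T r ∩ (SA ∪ SB) = {r} := by
        rw [Finset.inter_union_distrib_left, hclrA,
          cl_r_inter_empty T hD hrA hcross hSB hbSB]
        simp
      refine ⟨SA ∪ SB, pack_union T hU hD hcross PA PB (by rw [hclr]; simp)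
        (by omega), Finset.mem_union_left _ hrSA, hclr, ?_⟩
      rw [card_union_SA_SB hD hSA hSB]
      omega
    · exfalso
      have hXA := XA h1
      have hXB := XB (by omega)
      omega

end RomanDual

namespace RomanDual
open Classical Finset
variable {V : Type*} [Fintype V] (T : SimpleGraph V)

/-- weak duality -/
lemma weak_duality {f : V → ℕ} (hf : IsRomanDominating T f) {A : Finset V}
    (hA : ∀ v, (cl T v ∩ A).card ≤ 2) : A.card ≤ ∑ v, f v := by
  classical
  obtain ⟨hf2, hfdom⟩ := hf
  have hw : ∀ a : V, ∃ u, f a ≠ 0 ∨ (T.Adj a u ∧ f u = 2) := by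
    intro a
    by_cases h : f a = 0
    · obtain ⟨u, hu⟩ := hfdom a h
      exact ⟨u, Or.inr hu⟩
    · exact ⟨a, Or.inl h⟩
  choose φ hφ using hw
  let ψ : V → V := fun a => if f a = 0 then φ a else a
  have key : A.card = ∑ t ∈ Finset.univ, (A.filter (fun a => ψ a = t)).card :=
    Finset.card_eq_sum_card_fiberwise (fun a _ => Finset.mem_univ (ψ a))
  rw [key]
  apply Finset.sum_le_sum
  intro t _
  by_cases ht0 : f t = 0
  · have : (A.filter (fun a => ψ a = t)) = ∅ := by
      rw [Finset.filter_eq_empty_iff]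
      intro a _ hat
      by_cases ha0 : f a = 0
      · have hψ : ψ a = φ a := if_pos ha0
        rcases hφ a with h | ⟨_, h2⟩
        · exact h ha0
        · rw [hψ] at hat; rw [hat] at h2; omega
      · have hψ : ψ a = a := if_neg ha0
        rw [hψ] at hat; subst hat; exact ha0 ht0
    rw [this]; simp
  · rcases Nat.lt_or_ge (f t) 2 with ht1 | ht2
    · have : (A.filter (fun a => ψ a = t)) ⊆ {t} := by
        intro a ha
        rw [Finset.mem_filter] at ha
        obtain ⟨_, hat⟩ := ha
        by_cases ha0 : f a = 0
        · have hψ : ψ a = φ a := if_pos ha0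
          rcases hφ a with h | ⟨_, h2⟩
          · exact absurd ha0 h
          · rw [hψ] at hat; rw [hat] at h2; omega
        · have hψ : ψ a = a := if_neg ha0
          rw [hψ] at hat; subst hat; exact Finset.mem_singleton_self _
      calc (A.filter (fun a => ψ a = t)).card ≤ ({t} : Finset V).card :=
            Finset.card_le_card this
      _ = 1 := Finset.card_singleton t
      _ ≤ f t := by omega
    · have hsub : (A.filter (fun a => ψ a = t)) ⊆ cl T t ∩ A := by
        intro a ha
        rw [Finset.mem_filter] at ha
        obtain ⟨haA, hat⟩ := ha
        rw [Finset.mem_inter]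
        refine ⟨?_, haA⟩
        by_cases ha0 : f a = 0
        · have hψ : ψ a = φ a := if_pos ha0
          rcases hφ a with h | ⟨hadj, _⟩
          · exact absurd ha0 h
          · rw [hψ] at hat
            rw [mem_cl]
            right
            rw [← hat]
            exact hadj.symm
        · have hψ : ψ a = a := if_neg ha0
          rw [hψ] at hat; subst hat
          rw [mem_cl]; left; rfl
      calc (A.filter (fun a => ψ a = t)).card ≤ (cl T t ∩ A).card :=
            Finset.card_le_card hsub
      _ ≤ 2 := hA t
      _ ≤ f t := ht2

/-- the main induction -/
theorem inv_all (hacy : T.IsAcyclic) :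
    ∀ (n : ℕ) (S : Finset V) (r : V), S.card ≤ n → r ∈ S →
      (∀ v ∈ S, Rch T S v r) → Inv T S r := by
  intro n
  induction n with
  | zero =>
    intro S r hcard hr _
    have := Finset.card_pos.mpr ⟨r, hr⟩
    omega
  | succ n ih =>
    intro S r hcard hr hconn
    by_cases hsmall : S.card ≤ n
    · exact ih S r hsmall hr hconn
    by_cases h1 : S.card ≤ 1
    · have hSr : S = {r} := by
        apply Finset.eq_singleton_iff_unique_mem.mpr
        refine ⟨hr, fun x hx => ?_⟩
        by_contra hxr
        have := Finset.one_lt_card.mpr ⟨x, hx, r, hr, hxr⟩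
        omega
      rw [hSr]
      exact inv_singleton T r
    · push_neg at h1
      obtain ⟨b, hb, hadj⟩ := exists_nbr T h1 hr hconn
      obtain ⟨A, B, hU, hD, hrA, hbB, hcross, hconnA, hconnB⟩ :=
        RomanDual2.split hacy hr hb hadj hconn
      have hcardAB : A.card + B.card = S.card := by
        rw [← hU, Finset.card_union_of_disjoint hD]
      have hA1 : 1 ≤ A.card := Finset.card_pos.mpr ⟨r, hrA⟩
      have hB1 : 1 ≤ B.card := Finset.card_pos.mpr ⟨b, hbB⟩
      have IA := ih A r (by omega) hrA hconnA
      have IB := ih B b (by omega) hbB hconnB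
      exact inv_step T hU hD hrA hbB hcross hadj IA IB

/-- romanNumber is gam on univ -/
lemma roman_eq_gam : romanNumber T = gam T Finset.univ := by
  unfold romanNumber gam
  congr 1
  ext w
  constructor
  · rintro ⟨f, ⟨h1, h2⟩, hw⟩
    exact ⟨f, h1, fun v _ h0 => by
      obtain ⟨u, hu⟩ := h2 v h0
      exact ⟨u, Finset.mem_univ u, hu⟩, hw⟩
  · rintro ⟨f, h1, h2, hw⟩
    exact ⟨f, ⟨h1, fun v h0 => by
      obtain ⟨u, _, hu⟩ := h2 v (Finset.mem_univ v) h0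
      exact ⟨u, hu⟩⟩, hw⟩

lemma closedNbhd_eq_cl (v : V) : closedNbhd T v = ↑(cl T v) := by
  unfold closedNbhd cl
  ext x
  simp [SimpleGraph.mem_neighborSet]

/-- the full theorem -/
theorem strong_duality (hT : T.IsTree) : romanNumber T = tnpNumber T := by
  classical
  have hne : Nonempty V := hT.isConnected.nonempty
  obtain ⟨r⟩ := hne
  have hconn : ∀ v ∈ (Finset.univ : Finset V), Rch T Finset.univ v r := by
    intro v _
    obtain ⟨p⟩ := hT.isConnected v r
    exact ⟨p, fun x _ => Finset.mem_univ x⟩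
  have hInv := inv_all T hT.IsAcyclic (Finset.univ.card) Finset.univ r le_rfl
    (Finset.mem_univ r) hconn
  obtain ⟨_, Q0, _, _, Q1, _⟩ := hInv
  have F1 : gam T Finset.univ ≤ eN T Finset.univ r + 1 :=
    gam_le_eN_add_one T _ r (Finset.mem_univ r)
  have F2 : gam T Finset.univ ≤ zN T Finset.univ r := gam_le_zN T _ r
  -- a packing of size ≥ gam
  have hbig : ∃ A : Finset V, Pack T Finset.univ A ∧ gam T Finset.univ ≤ A.card := by
    rcases le_or_gt (gam T Finset.univ) (eN T Finset.univ r) with h | h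
    · obtain ⟨A, PA, _, hc⟩ := Q0
      exact ⟨A, PA, by omega⟩
    · obtain ⟨A, PA, _, hc⟩ := Q1 (by omega)
      exact ⟨A, PA, hc⟩
  obtain ⟨A, ⟨_, hPA⟩, hA⟩ := hbig
  -- bounded above
  have hbdd : BddAbove {n | ∃ A : Set V, IsTwoNbrPacking T A ∧ A.ncard = n} := by
    refine ⟨Fintype.card V, ?_⟩
    rintro n ⟨B, _, hB⟩
    rw [← hB]
    calc B.ncard ≤ (Set.univ : Set V).ncard := Set.ncard_le_ncard (Set.subset_univ B)
          (Set.finite_univ)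
    _ = Fintype.card V := by rw [Set.ncard_univ]; simp
  -- tnp ≥ gam
  have h1 : gam T Finset.univ ≤ tnpNumber T := by
    have hmem : A.card ∈ {n | ∃ A : Set V, IsTwoNbrPacking T A ∧ A.ncard = n} := by
      refine ⟨↑A, ?_, Set.ncard_coe_finset A⟩
      intro v
      rw [closedNbhd_eq_cl, ← Finset.coe_inter, Set.ncard_coe_finset]
      exact hPA v (Finset.mem_univ v)
    calc gam T Finset.univ ≤ A.card := hA
    _ ≤ tnpNumber T := le_csSup hbdd hmem
  -- tnp ≤ roman
  have h2 : tnpNumber T ≤ romanNumber T := by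
    apply csSup_le
    · exact ⟨0, ∅, fun v => by simp, by simp⟩
    · rintro n ⟨B, hB, hBn⟩
      obtain ⟨f, hf, hfw⟩ := Nat.sInf_mem (s := {w | ∃ f : V → ℕ,
        IsRomanDominating T f ∧ ∑ v, f v = w}) ⟨∑ v : V, 1, fun _ => 1,
        ⟨fun _ => one_le_two, fun v h => by simp at h⟩, rfl⟩
      have hBfin : B.toFinset.card = n := by rw [← Set.ncard_eq_toFinset_card', hBn]
      have hcond : ∀ v, (cl T v ∩ B.toFinset).card ≤ 2 := by
        intro v
        have := hB v
        rw [closedNbhd_eq_cl] at this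
        rw [← Set.ncard_coe_finset, Finset.coe_inter, Set.coe_toFinset]
        exact this
      calc n = B.toFinset.card := hBfin.symm
      _ ≤ ∑ v, f v := weak_duality T hf hcond
      _ = romanNumber T := hfw
  rw [roman_eq_gam] at h2 ⊢
  omega

end RomanDual


theorem strong_duality_trees {V : Type*} [Fintype V] (T : SimpleGraph V)
    (hT : T.IsTree) : romanNumber T = tnpNumber T :=
  RomanDual.strong_duality T hT
end

section
/- For every n ≥ 1, the two-neighbour packing number of the path graph on n vertices satisfies γ̄_R(P_n) = ⌈2n/3⌉. -/
open SimpleGraph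

lemma card_filter_range_mod3 (n : ℕ) :
    ((Finset.range n).filter (fun i => i % 3 ≠ 2)).card = (2 * n + 2) / 3 := by
  induction n with
  | zero => simp
  | succ n ih =>
    rw [Finset.range_add_one, Finset.filter_insert]
    by_cases h : n % 3 = 2
    · rw [if_neg (by simp [h]), ih]
      obtain ⟨m, hm⟩ : ∃ m, n = 3 * m + 2 := ⟨n / 3, by omega⟩
      subst hm; omega
    · rw [if_pos h, Finset.card_insert_of_notMem (by simp), ih]
      obtain ⟨m, hm | hm⟩ : ∃ m, n = 3 * m ∨ n = 3 * m + 1 := ⟨n / 3, by omega⟩ <;>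
        subst hm <;> omega

lemma pathPacking_le (n : ℕ) (A : Set (Fin n))
    (hA : IsTwoNbrPacking (SimpleGraph.pathGraph n) A) :
    A.ncard ≤ (2 * n + 2) / 3 := by
  classical
  set k := (n + 2) / 3 with hk
  have hcard : A.toFinset.card =
      ∑ j ∈ Finset.range k, (A.toFinset.filter (fun i => i.val / 3 = j)).card := by
    apply Finset.card_eq_sum_card_fiberwise
    intro x _
    simp only [Finset.coe_range, Set.mem_Iio, Finset.mem_range]
    have := x.isLt
    omega
  have hfib : ∀ j ∈ Finset.range k,
      (A.toFinset.filter (fun i => i.val / 3 = j)).card ≤ if 3 * j + 1 < n then 2 else 1 := by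
    intro j _
    by_cases h : 3 * j + 1 < n
    · rw [if_pos h]
      have hsub : A.toFinset.filter (fun i => i.val / 3 = j) ⊆
          (closedNbhd (SimpleGraph.pathGraph n) ⟨3 * j + 1, h⟩ ∩ A).toFinset := by
        intro i hi
        simp only [Finset.mem_filter, Set.mem_toFinset] at hi
        obtain ⟨hiA, hij⟩ := hi
        rw [Set.mem_toFinset]
        simp only [Set.mem_toFinset, Set.mem_inter_iff, closedNbhd, Set.mem_insert_iff,
          SimpleGraph.mem_neighborSet, SimpleGraph.pathGraph_adj]
        refine ⟨?_, hiA⟩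
        rcases (show i.val = 3 * j + 1 ∨ (i.val + 1 = 3 * j + 1 ∨ (3 * j + 1) + 1 = i.val) by
            omega) with h1 | h1
        · left; exact Fin.ext h1
        · right; simpa using h1.symm
      calc (A.toFinset.filter (fun i => i.val / 3 = j)).card
          ≤ ((closedNbhd (SimpleGraph.pathGraph n) ⟨3 * j + 1, h⟩ ∩ A).toFinset).card :=
            Finset.card_le_card hsub
        _ = (closedNbhd (SimpleGraph.pathGraph n) ⟨3 * j + 1, h⟩ ∩ A).ncard :=
            (Set.ncard_eq_toFinset_card' _).symm
        _ ≤ 2 := hA _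
    · rw [if_neg h]
      apply Finset.card_le_one.mpr
      intro a ha b hb
      simp only [Finset.mem_filter, Set.mem_toFinset] at ha hb
      have ha' := a.isLt
      have hb' := b.isLt
      apply Fin.ext
      omega
  have hsum : ∑ j ∈ Finset.range k, (if 3 * j + 1 < n then 2 else 1) = (2 * n + 2) / 3 := by
    have hm : (n + 1) / 3 ≤ k := by omega
    rw [Finset.range_eq_Ico, ← Finset.sum_Ico_consecutive _ (Nat.zero_le ((n + 1) / 3)) hm]
    have e1 : ∑ j ∈ Finset.Ico 0 ((n + 1) / 3), (if 3 * j + 1 < n then 2 else 1)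
        = ∑ _j ∈ Finset.Ico 0 ((n + 1) / 3), 2 :=
      Finset.sum_congr rfl (fun j hj => by
        rw [Finset.mem_Ico] at hj; rw [if_pos (by omega)])
    have e2 : ∑ j ∈ Finset.Ico ((n + 1) / 3) k, (if 3 * j + 1 < n then 2 else 1)
        = ∑ _j ∈ Finset.Ico ((n + 1) / 3) k, 1 :=
      Finset.sum_congr rfl (fun j hj => by
        rw [Finset.mem_Ico] at hj; rw [if_neg (by omega)])
    rw [e1, e2, Finset.sum_const, Finset.sum_const, Nat.card_Ico, Nat.card_Ico,
      smul_eq_mul, smul_eq_mul]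
    omega
  calc A.ncard = A.toFinset.card := Set.ncard_eq_toFinset_card' A
    _ ≤ ∑ j ∈ Finset.range k, (if 3 * j + 1 < n then 2 else 1) :=
        hcard ▸ Finset.sum_le_sum hfib
    _ = (2 * n + 2) / 3 := hsum

lemma pathPacking_exists (n : ℕ) :
    ∃ A : Set (Fin n), IsTwoNbrPacking (SimpleGraph.pathGraph n) A ∧
      A.ncard = (2 * n + 2) / 3 := by
  classical
  refine ⟨{i | i.val % 3 ≠ 2}, ?_, ?_⟩
  · intro v
    have key : ∀ u ∈ closedNbhd (SimpleGraph.pathGraph n) v ∩ {i : Fin n | i.val % 3 ≠ 2},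
        (u.val + 1 = v.val ∨ u.val = v.val ∨ u.val = v.val + 1) ∧ u.val % 3 ≠ 2 := by
      rintro u ⟨hu, hA⟩
      refine ⟨?_, hA⟩
      rcases hu with rfl | h
      · right; left; rfl
      · rw [SimpleGraph.mem_neighborSet, SimpleGraph.pathGraph_adj] at h
        omega
    obtain ⟨x, y, hxy⟩ : ∃ x y : ℕ,
        ∀ u ∈ closedNbhd (SimpleGraph.pathGraph n) v ∩ {i : Fin n | i.val % 3 ≠ 2},
          u.val = x ∨ u.val = y := by
      rcases (show v.val % 3 = 0 ∨ v.val % 3 = 1 ∨ v.val % 3 = 2 by omega) with h | h | h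
      · exact ⟨v.val, v.val + 1, fun u hu => by have := key u hu; omega⟩
      · exact ⟨v.val - 1, v.val, fun u hu => by have := key u hu; omega⟩
      · exact ⟨v.val - 1, v.val + 1, fun u hu => by have := key u hu; omega⟩
    calc (closedNbhd (SimpleGraph.pathGraph n) v ∩ {i : Fin n | i.val % 3 ≠ 2}).ncard
        = (Fin.val '' (closedNbhd (SimpleGraph.pathGraph n) v ∩ {i : Fin n | i.val % 3 ≠ 2})).ncard :=
          (Set.ncard_image_of_injective _ Fin.val_injective).symm
      _ ≤ ({x, y} : Set ℕ).ncard := Set.ncard_le_ncard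
          (by rintro _ ⟨u, hu, rfl⟩; exact hxy u hu) (Set.toFinite _)
      _ ≤ 2 := le_trans (Set.ncard_insert_le _ _) (by simp)
  · rw [Set.ncard_eq_toFinset_card']
    rw [← card_filter_range_mod3 n]
    apply Finset.card_bij (fun i _ => i.val)
    · intro a ha
      simp only [Set.toFinset_setOf, Finset.mem_filter, Finset.mem_univ, true_and] at ha
      simp only [Finset.mem_filter, Finset.mem_range]
      exact ⟨a.isLt, ha⟩
    · intro a _ b _ h; exact Fin.ext h
    · intro b hb
      simp only [Finset.mem_filter, Finset.mem_range] at hb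
      exact ⟨⟨b, hb.1⟩, by simp [hb.2], rfl⟩

theorem tnpNumber_pathGraph (n : ℕ) (hn : 1 ≤ n) :
    tnpNumber (SimpleGraph.pathGraph n) = (2 * n + 2) / 3 := by
  apply le_antisymm
  · apply csSup_le
    · exact ⟨0, ∅, fun v => by simp, by simp⟩
    · rintro x ⟨A, hA, rfl⟩
      exact pathPacking_le n A hA
  · apply le_csSup
    · refine ⟨n, ?_⟩
      rintro x ⟨A, _, rfl⟩
      calc A.ncard ≤ (Set.univ : Set (Fin n)).ncard :=
            Set.ncard_le_ncard (Set.subset_univ A) Set.finite_univ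
        _ = n := by simp [Set.ncard_univ]
    · obtain ⟨A, h1, h2⟩ := pathPacking_exists n
      exact ⟨A, h1, h2⟩
end

section
/- For every n ≥ 3, the two-neighbour packing number of the cycle graph on n vertices satisfies γ̄_R(C_n) = ⌊2n/3⌋. -/
open SimpleGraph

namespace TNPAux
open Finset

lemma one_ne_zero' (m : ℕ) : (1 : Fin (m + 3)) ≠ 0 := by
  intro h
  have := congrArg Fin.val h
  simp [Fin.val_one] at this

lemma two_ne_zero' (m : ℕ) : (1 + 1 : Fin (m + 3)) ≠ 0 := by
  intro h
  have := congrArg Fin.val h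
  rw [Fin.val_add] at this
  simp [Fin.val_one, Nat.mod_eq_of_lt (show 1+1 < m+3 by omega)] at this

lemma triple_card (m : ℕ) (a : Fin (m + 3)) :
    ({a - 1, a, a + 1} : Finset (Fin (m + 3))).card = 3 := by
  rw [card_insert_of_notMem, card_insert_of_notMem, card_singleton]
  · simp only [mem_singleton]
    intro h
    exact two_ne_zero' m (by simpa using left_eq_add.mp h)
  · simp only [mem_insert, mem_singleton]
    rintro (h | h)
    · exact one_ne_zero' m (sub_eq_self.mp h)
    · have := sub_eq_iff_eq_add.mp h
      rw [add_assoc] at this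
      exact two_ne_zero' m (left_eq_add.mp this)

lemma mem_triple_iff (m : ℕ) (a v : Fin (m + 3)) :
    a ∈ ({v - 1, v, v + 1} : Finset (Fin (m + 3))) ↔
      v ∈ ({a - 1, a, a + 1} : Finset (Fin (m + 3))) := by
  have key : ∀ a v : Fin (m + 3),
      a ∈ ({v - 1, v, v + 1} : Finset (Fin (m + 3))) →
        v ∈ ({a - 1, a, a + 1} : Finset (Fin (m + 3))) := by
    intro a v
    simp only [mem_insert, mem_singleton]
    rintro (h | h | h)
    · right; right; exact sub_eq_iff_eq_add.mp h.symm
    · right; left; exact h.symm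
    · left; exact eq_sub_iff_add_eq.mpr h.symm
  exact ⟨key a v, key v a⟩

lemma closedNbhd_cycle (m : ℕ) (v : Fin (m + 3)) :
    closedNbhd (cycleGraph (m + 3)) v = ↑({v - 1, v, v + 1} : Finset (Fin (m + 3))) := by
  unfold closedNbhd
  rw [show (cycleGraph (m + 3)).neighborSet v = {v - 1, v + 1} from
    cycleGraph_neighborSet (n := m + 1) (v := v)]
  simp only [Finset.coe_insert, Finset.coe_singleton]
  rw [Set.insert_comm]

lemma ncard_inter_eq (m : ℕ) (v : Fin (m + 3)) (A : Set (Fin (m + 3))) :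
    (closedNbhd (cycleGraph (m + 3)) v ∩ A).ncard
      = (({v - 1, v, v + 1} : Finset (Fin (m + 3))) ∩ A.toFinite.toFinset).card := by
  classical
  rw [← Set.ncard_coe_finset]
  congr 1
  rw [Finset.coe_inter, Set.Finite.coe_toFinset, closedNbhd_cycle]

lemma packing_card_le (m : ℕ) (A : Set (Fin (m + 3)))
    (hA : IsTwoNbrPacking (cycleGraph (m + 3)) A) :
    A.ncard ≤ 2 * (m + 3) / 3 := by
  classical
  set A' : Finset (Fin (m + 3)) := A.toFinite.toFinset with hA'
  have hcard : A.ncard = A'.card := Set.ncard_eq_toFinset_card A A.toFinite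
  have key : ∀ v : Fin (m + 3),
      (({v - 1, v, v + 1} : Finset (Fin (m + 3))) ∩ A').card ≤ 2 := by
    intro v
    have := hA v
    rwa [ncard_inter_eq] at this
  have count : ∑ v : Fin (m + 3),
      (({v - 1, v, v + 1} : Finset (Fin (m + 3))) ∩ A').card = 3 * A'.card := by
    have step : ∀ v : Fin (m + 3),
        (({v - 1, v, v + 1} : Finset (Fin (m + 3))) ∩ A').card
          = ∑ a ∈ A', if a ∈ ({v - 1, v, v + 1} : Finset (Fin (m + 3))) then 1 else 0 := by
      intro v
      rw [Finset.inter_comm, ← Finset.filter_mem_eq_inter, Finset.card_filter]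
    simp only [step]
    rw [Finset.sum_comm]
    have inner : ∀ a : Fin (m + 3),
        ∑ v : Fin (m + 3), (if a ∈ ({v - 1, v, v + 1} : Finset (Fin (m + 3))) then 1 else 0) = 3 := by
      intro a
      rw [← Finset.card_filter]
      have : Finset.univ.filter
            (fun v => a ∈ ({v - 1, v, v + 1} : Finset (Fin (m + 3))))
          = ({a - 1, a, a + 1} : Finset (Fin (m + 3))) := by
        ext v
        simp only [Finset.mem_filter, Finset.mem_univ, true_and]
        exact mem_triple_iff m a v
      rw [this, triple_card]
    rw [Finset.sum_congr rfl (fun a _ => inner a), Finset.sum_const, smul_eq_mul, mul_comm]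
  have hle : 3 * A'.card ≤ 2 * (m + 3) := by
    rw [← count]
    calc ∑ v : Fin (m + 3), (({v - 1, v, v + 1} : Finset (Fin (m + 3))) ∩ A').card
        ≤ ∑ _v : Fin (m + 3), 2 := Finset.sum_le_sum (fun v _ => key v)
      _ = 2 * (m + 3) := by simp [mul_comm]
  rw [hcard]
  omega

lemma card_range_filter (M : ℕ) :
    ((Finset.range M).filter (fun i => ¬ i % 3 = 2)).card = M - M / 3 := by
  induction M with
  | zero => simp
  | succ M ih =>
    rw [Finset.range_add_one, Finset.filter_insert]
    by_cases h : ¬ M % 3 = 2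
    · rw [if_pos h, Finset.card_insert_of_notMem (by simp), ih]
      omega
    · rw [if_neg h, ih]
      omega

/-- The extremal packing: vertices whose value is not `2 mod 3` and not the last vertex. -/
def goodSet (m : ℕ) : Finset (Fin (m + 3)) :=
  Finset.univ.filter (fun i => ¬ i.val % 3 = 2 ∧ i.val < m + 2)

lemma goodSet_card (m : ℕ) : (goodSet m).card = 2 * (m + 3) / 3 := by
  have : (goodSet m).card = ((Finset.range (m + 2)).filter (fun i => ¬ i % 3 = 2)).card := by
    apply Finset.card_bij (fun (v : Fin (m + 3)) _ => v.val)
    · intro v hv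
      simp only [goodSet, Finset.mem_filter, Finset.mem_univ, true_and] at hv
      simp only [Finset.mem_filter, Finset.mem_range]
      exact ⟨hv.2, hv.1⟩
    · intro a₁ _ a₂ _ h
      exact Fin.ext h
    · intro b hb
      simp only [Finset.mem_filter, Finset.mem_range] at hb
      refine ⟨⟨b, by omega⟩, ?_, rfl⟩
      simp only [goodSet, Finset.mem_filter, Finset.mem_univ, true_and]
      exact ⟨hb.2, hb.1⟩
  rw [this, card_range_filter]
  omega

lemma goodSet_packing (m : ℕ) :
    IsTwoNbrPacking (cycleGraph (m + 3)) (↑(goodSet m) : Set (Fin (m + 3))) := by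
  classical
  intro v
  rw [ncard_inter_eq]
  have hAeq : (↑(goodSet m) : Set (Fin (m + 3))).toFinite.toFinset = goodSet m := by
    ext x; simp; exact Iff.rfl
  rw [hAeq]
  -- find an element of the triple not in goodSet
  have hv1 : ((v - 1 : Fin (m + 3))).val = if v = 0 then m + 2 else v.val - 1 :=
    Fin.coe_sub_one v
  have hv2 : ((v + 1 : Fin (m + 3))).val = if v = Fin.last (m + 2) then 0 else v.val + 1 :=
    Fin.val_add_one v
  have hvlt : v.val < m + 3 := v.isLt
  have main : ∃ x ∈ ({v - 1, v, v + 1} : Finset (Fin (m + 3))), x ∉ goodSet m := by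
    by_cases h0 : v = 0
    · refine ⟨v - 1, by simp, ?_⟩
      simp only [goodSet, Finset.mem_filter, Finset.mem_univ, true_and, not_and, not_lt]
      rw [hv1, if_pos h0]
      omega
    · by_cases hlast : v = Fin.last (m + 2)
      · refine ⟨v, by simp, ?_⟩
        simp only [goodSet, Finset.mem_filter, Finset.mem_univ, true_and, not_and, not_lt]
        have : v.val = m + 2 := by rw [hlast]; rfl
        omega
      · have hvne0 : v.val ≠ 0 := fun h => h0 (Fin.ext h)
        have hvnelast : v.val ≠ m + 2 := fun h => hlast (Fin.ext h)
        by_cases h2 : v.val % 3 = 2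
        · refine ⟨v, by simp, ?_⟩
          simp only [goodSet, Finset.mem_filter, Finset.mem_univ, true_and, not_and, not_lt]
          omega
        · by_cases hmod : v.val % 3 = 0
          · refine ⟨v - 1, by simp, ?_⟩
            simp only [goodSet, Finset.mem_filter, Finset.mem_univ, true_and, not_and, not_lt]
            rw [hv1, if_neg h0]
            omega
          · refine ⟨v + 1, by simp, ?_⟩
            simp only [goodSet, Finset.mem_filter, Finset.mem_univ, true_and, not_and, not_lt]
            rw [hv2, if_neg hlast]
            omega
  obtain ⟨x, hxmem, hxnot⟩ := main
  have hsub : ({v - 1, v, v + 1} : Finset (Fin (m + 3))) ∩ goodSet m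
      ⊆ ({v - 1, v, v + 1} : Finset (Fin (m + 3))).erase x := by
    intro y hy
    rw [Finset.mem_inter] at hy
    rw [Finset.mem_erase]
    exact ⟨fun h => hxnot (h ▸ hy.2), hy.1⟩
  calc (({v - 1, v, v + 1} : Finset (Fin (m + 3))) ∩ goodSet m).card
      ≤ (({v - 1, v, v + 1} : Finset (Fin (m + 3))).erase x).card := Finset.card_le_card hsub
    _ = 3 - 1 := by rw [Finset.card_erase_of_mem hxmem, triple_card]
    _ ≤ 2 := by omega

end TNPAux

theorem tnpNumber_cycleGraph (n : ℕ) (hn : 3 ≤ n) :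
    tnpNumber (SimpleGraph.cycleGraph n) = 2 * n / 3 := by
  obtain ⟨m, rfl⟩ : ∃ m, n = m + 3 := ⟨n - 3, by omega⟩
  unfold tnpNumber
  apply le_antisymm
  · apply csSup_le
    · exact ⟨2 * (m + 3) / 3, ↑(TNPAux.goodSet m), TNPAux.goodSet_packing m,
        by rw [Set.ncard_coe_finset, TNPAux.goodSet_card]⟩
    · rintro s ⟨A, hA, rfl⟩
      exact TNPAux.packing_card_le m A hA
  · apply le_csSup
    · exact ⟨2 * (m + 3) / 3, by rintro s ⟨A, hA, rfl⟩; exact TNPAux.packing_card_le m A hA⟩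
    · exact ⟨↑(TNPAux.goodSet m), TNPAux.goodSet_packing m,
        by rw [Set.ncard_coe_finset, TNPAux.goodSet_card]⟩
end

section
/- For every k ≥ 1, the disjoint union kC_4 of k copies of the cycle graph C_4 satisfies γ_R(kC_4) = 3k and γ̄_R(kC_4) = 2k; in particular γ_R(kC_4) − γ̄_R(kC_4) = k, so the additive duality gap between the Roman domination number and the two-neighbour packing number is unbounded. -/
open SimpleGraph

/-- The disjoint union of `k` copies of the cycle `C₄`, on vertex set `Fin k × Fin 4`:
two vertices are adjacent iff they lie in the same copy and are adjacent on the 4-cycle. -/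
def kC4 (k : ℕ) : SimpleGraph (Fin k × Fin 4) where
  Adj x y := x.1 = y.1 ∧ (SimpleGraph.cycleGraph 4).Adj x.2 y.2
  symm := by
    constructor
    rintro x y ⟨h1, h2⟩
    exact ⟨h1.symm, h2.symm⟩
  loopless := by
    constructor
    rintro x ⟨-, h⟩
    exact (SimpleGraph.cycleGraph 4).loopless.irrefl _ h


lemma copy_lb (g : Fin 4 → ℕ) (hle : ∀ j, g j ≤ 2)
    (h : ∀ j, g j = 0 → ∃ j', (cycleGraph 4).Adj j j' ∧ g j' = 2) :
    3 ≤ ∑ j, g j := by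
  have c0 : g 0 = 0 → g 1 = 2 ∨ g 3 = 2 := by
    intro hz; obtain ⟨j', ha, hv⟩ := h 0 hz
    fin_cases j'
    · exact absurd ha (by decide)
    · exact Or.inl hv
    · exact absurd ha (by decide)
    · exact Or.inr hv
  have c1 : g 1 = 0 → g 0 = 2 ∨ g 2 = 2 := by
    intro hz; obtain ⟨j', ha, hv⟩ := h 1 hz
    fin_cases j'
    · exact Or.inl hv
    · exact absurd ha (by decide)
    · exact Or.inr hv
    · exact absurd ha (by decide)
  have c2 : g 2 = 0 → g 1 = 2 ∨ g 3 = 2 := by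
    intro hz; obtain ⟨j', ha, hv⟩ := h 2 hz
    fin_cases j'
    · exact absurd ha (by decide)
    · exact Or.inl hv
    · exact absurd ha (by decide)
    · exact Or.inr hv
  have c3 : g 3 = 0 → g 0 = 2 ∨ g 2 = 2 := by
    intro hz; obtain ⟨j', ha, hv⟩ := h 3 hz
    fin_cases j'
    · exact Or.inl hv
    · exact absurd ha (by decide)
    · exact Or.inr hv
    · exact absurd ha (by decide)
  rw [Fin.sum_univ_four]
  have := hle 0; have := hle 1; have := hle 2; have := hle 3
  omega

lemma roman_mem (k : ℕ) :
    ∃ f : Fin k × Fin 4 → ℕ, IsRomanDominating (kC4 k) f ∧ ∑ v, f v = 3 * k := by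
  refine ⟨fun p => if p.2 = 0 then 2 else if p.2 = 2 then 1 else 0, ⟨?_, ?_⟩, ?_⟩
  · intro v; dsimp only; split_ifs <;> omega
  · rintro ⟨i, j⟩ hz
    refine ⟨(i, 0), ⟨rfl, ?_⟩, by simp⟩
    simp only at hz
    split_ifs at hz with h1 h2
    fin_cases j
    · exact absurd rfl h1
    · exact (by decide : (cycleGraph 4).Adj 1 0)
    · exact absurd rfl h2
    · exact (by decide : (cycleGraph 4).Adj 3 0)
  · rw [Fintype.sum_prod_type]
    simp [Fin.sum_univ_four, mul_comm]

lemma roman_lb (k : ℕ) (f : Fin k × Fin 4 → ℕ)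
    (hf : IsRomanDominating (kC4 k) f) : 3 * k ≤ ∑ v, f v := by
  rw [Fintype.sum_prod_type]
  calc 3 * k = ∑ _i : Fin k, 3 := by simp [mul_comm]
    _ ≤ ∑ i : Fin k, ∑ j : Fin 4, f (i, j) := by
        refine Finset.sum_le_sum fun i _ => ?_
        refine copy_lb (fun j => f (i, j)) (fun j => hf.1 (i, j)) ?_
        intro j hz
        obtain ⟨u, ⟨hu1, hu2⟩, hv⟩ := hf.2 (i, j) hz
        refine ⟨u.2, hu2, ?_⟩
        have : (i, u.2) = u := Prod.ext hu1 rfl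
        show f (i, u.2) = 2
        rw [this]; exact hv

lemma tnp_mem (k : ℕ) :
    ∃ A : Set (Fin k × Fin 4), IsTwoNbrPacking (kC4 k) A ∧ A.ncard = 2 * k := by
  refine ⟨{p | p.2 = 0 ∨ p.2 = 1}, ?_, ?_⟩
  · rintro ⟨i, j⟩
    have hsub : closedNbhd (kC4 k) (i, j) ∩ {p | p.2 = 0 ∨ p.2 = 1}
        ⊆ {(i, 0), (i, 1)} := by
      rintro ⟨i', j'⟩ ⟨hc, hm⟩
      have hi : i' = i := by
        rcases hc with h | h
        · exact congrArg Prod.fst h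
        · exact ((h : (kC4 k).Adj (i,j) (i',j')).1).symm
      rcases hm with h | h <;> simp_all [Set.mem_insert_iff, Prod.ext_iff]
    calc (closedNbhd (kC4 k) (i, j) ∩ {p | p.2 = 0 ∨ p.2 = 1}).ncard
        ≤ ({(i, 0), (i, 1)} : Set (Fin k × Fin 4)).ncard :=
          Set.ncard_le_ncard hsub (Set.toFinite _)
      _ ≤ 2 := by
          refine le_trans (Set.ncard_insert_le _ _) ?_
          simp
  · have : {p : Fin k × Fin 4 | p.2 = 0 ∨ p.2 = 1}
        = ((Finset.univ ×ˢ ({0, 1} : Finset (Fin 4)) : Finset (Fin k × Fin 4)) : Set _) := by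
      ext ⟨i, j⟩; simp
    rw [this, Set.ncard_coe_finset, Finset.card_product]
    simp [mul_comm]

lemma fin4_sub : ∀ S : Finset (Fin 4), 3 ≤ S.card →
    ∃ j : Fin 4, (j + 1) ∈ S ∧ (j + 2) ∈ S ∧ (j + 3) ∈ S := by decide

lemma fin4_adj : ∀ j : Fin 4, (cycleGraph 4).Adj (j + 2) (j + 1) ∧
    (cycleGraph 4).Adj (j + 2) (j + 3) := by decide

lemma fin4_ne : ∀ j : Fin 4, (j:Fin 4) + 1 ≠ j + 2 ∧ (j:Fin 4) + 1 ≠ j + 3 ∧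
    (j:Fin 4) + 2 ≠ j + 3 := by decide

lemma tnp_ub (k : ℕ) (A : Set (Fin k × Fin 4)) (hA : IsTwoNbrPacking (kC4 k) A) :
    A.ncard ≤ 2 * k := by
  classical
  have hfin : A.Finite := Set.toFinite A
  set B := hfin.toFinset with hB
  have hcard : A.ncard = B.card := by rw [Set.ncard_eq_toFinset_card A hfin]
  rw [hcard]
  rw [Finset.card_eq_sum_card_fiberwise (f := Prod.fst) (t := Finset.univ)
    (fun x _ => Finset.mem_univ _)]
  have hfib : ∀ i : Fin k, (B.filter fun p => p.1 = i).card ≤ 2 := by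
    intro i
    by_contra hgt
    push_neg at hgt
    set F := B.filter fun p => p.1 = i with hF
    have himg : 3 ≤ (F.image Prod.snd).card := by
      rw [Finset.card_image_of_injOn]
      · omega
      · rintro ⟨a, b⟩ ha ⟨c, d⟩ hc h
        simp only [hF, Finset.mem_coe, Finset.mem_filter] at ha hc
        simp only at h
        exact Prod.ext (ha.2.trans hc.2.symm) h
    obtain ⟨j, h1, h2, h3⟩ := fin4_sub _ himg
    have hmem : ∀ x : Fin 4, x ∈ F.image Prod.snd → (i, x) ∈ A := by
      intro x hx
      obtain ⟨⟨a, b⟩, ha, hab⟩ := Finset.mem_image.mp hx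
      simp only [hF, Finset.mem_filter, hB, Set.Finite.mem_toFinset] at ha
      obtain ⟨hmA, hfst⟩ := ha
      cases hab; cases hfst; exact hmA
    have hp := hA (i, j + 2)
    have hsub : ({(i, j+1), (i, j+2), (i, j+3)} : Set (Fin k × Fin 4))
        ⊆ closedNbhd (kC4 k) (i, j + 2) ∩ A := by
      rintro p (rfl | rfl | rfl)
      · exact ⟨Or.inr ⟨rfl, (fin4_adj j).1⟩, hmem _ h1⟩
      · exact ⟨Or.inl rfl, hmem _ h2⟩
      · exact ⟨Or.inr ⟨rfl, (fin4_adj j).2⟩, hmem _ h3⟩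
    have h3le : 3 ≤ (closedNbhd (kC4 k) (i, j + 2) ∩ A).ncard := by
      have hne := fin4_ne j
      have : ({(i, j+1), (i, j+2), (i, j+3)} : Set (Fin k × Fin 4)).ncard = 3 := by
        rw [Set.ncard_insert_of_notMem (by simp [Prod.ext_iff, hne.1, hne.2.1]),
          Set.ncard_insert_of_notMem (by simp [Prod.ext_iff, hne.2.2]),
          Set.ncard_singleton]
      exact le_of_eq_of_le this.symm (Set.ncard_le_ncard hsub (Set.toFinite _))
    omega
  calc ∑ i : Fin k, (B.filter fun p => p.1 = i).card ≤ ∑ _i : Fin k, 2 :=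
        Finset.sum_le_sum fun i _ => hfib i
    _ = 2 * k := by simp [mul_comm]

theorem duality_gap_kC4 (k : ℕ) (hk : 1 ≤ k) :
    romanNumber (kC4 k) = 3 * k ∧ tnpNumber (kC4 k) = 2 * k ∧
      romanNumber (kC4 k) - tnpNumber (kC4 k) = k := by
  have hroman : romanNumber (kC4 k) = 3 * k := by
    obtain ⟨f, hf, hsum⟩ := roman_mem k
    apply le_antisymm
    · exact Nat.sInf_le ⟨f, hf, hsum⟩
    · refine le_csInf ⟨3 * k, f, hf, hsum⟩ ?_
      rintro w ⟨g, hg, rfl⟩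
      exact roman_lb k g hg
  have htnp : tnpNumber (kC4 k) = 2 * k := by
    obtain ⟨A, hA, hcard⟩ := tnp_mem k
    apply le_antisymm
    · refine csSup_le ⟨2 * k, A, hA, hcard⟩ ?_
      rintro n ⟨B, hB, rfl⟩
      exact tnp_ub k B hB
    · refine le_csSup ⟨2 * k, ?_⟩ ⟨A, hA, hcard⟩
      rintro n ⟨B, hB, rfl⟩
      exact tnp_ub k B hB
  exact ⟨hroman, htnp, by rw [hroman, htnp]; omega⟩
end

section
/- For every n ≥ 3 there exists a finite connected simple graph G with γ̄_R(G) = 2 and γ_R(G) ≥ 2n/3. Hence the multiplicative duality gap between the Roman domination number and the two-neighbour packing number is unbounded even for connected graphs. -/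
open SimpleGraph

-- auxiliary construction
abbrev BSet (n : ℕ) := {s : Finset (Fin n) // s.card = 3}

abbrev Vtx (n : ℕ) : Type := Fin n ⊕ BSet n

def gapAdj (n : ℕ) : Vtx n → Vtx n → Prop
  | .inl _, .inl _ => False
  | .inl x, .inr b => x ∈ b.1
  | .inr b, .inl x => x ∈ b.1
  | .inr b, .inr b' => b ≠ b'

def gapG (n : ℕ) : SimpleGraph (Vtx n) where
  Adj := gapAdj n
  symm := by
    constructor
    rintro (x | b) (y | b') h
    · exact h
    · exact h
    · exact h
    · exact Ne.symm h
  loopless := by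
    constructor
    rintro (x | b) h
    · exact h
    · exact h rfl

@[simp] lemma gap_adj_inl_inr {n : ℕ} (x : Fin n) (b : BSet n) :
    (gapG n).Adj (Sum.inl x) (Sum.inr b) ↔ x ∈ b.1 := Iff.rfl
@[simp] lemma gap_adj_inr_inl {n : ℕ} (x : Fin n) (b : BSet n) :
    (gapG n).Adj (Sum.inr b) (Sum.inl x) ↔ x ∈ b.1 := Iff.rfl
@[simp] lemma gap_adj_inr_inr {n : ℕ} (b b' : BSet n) :
    (gapG n).Adj (Sum.inr b) (Sum.inr b') ↔ b ≠ b' := Iff.rfl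
@[simp] lemma gap_adj_inl_inl {n : ℕ} (x y : Fin n) :
    ¬ (gapG n).Adj (Sum.inl x) (Sum.inl y) := fun h => h

lemma mem_closedNbhd_iff {V : Type*} (G : SimpleGraph V) (v u : V) :
    u ∈ closedNbhd G v ↔ u = v ∨ G.Adj v u := by
  simp [closedNbhd]

lemma exists_three {n : ℕ} (hn : 3 ≤ n) (s : Finset (Fin n)) (hs : s.card ≤ 3) :
    ∃ b : BSet n, s ⊆ b.1 := by
  obtain ⟨u, hsu, -, hu⟩ := Finset.exists_subsuperset_card_eq (Finset.subset_univ s) hs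
    (by simpa using hn)
  exact ⟨⟨u, hu⟩, hsu⟩

/-- every triple of vertices lies in some closed neighbourhood -/
lemma triple_cover {n : ℕ} (hn : 3 ≤ n) (a b c : Vtx n) :
    ∃ v, a ∈ closedNbhd (gapG n) v ∧ b ∈ closedNbhd (gapG n) v ∧
      c ∈ closedNbhd (gapG n) v := by
  -- helper lemmas by case on the shapes
  have cov3 : ∀ x y z : Fin n, ∃ v, Sum.inl x ∈ closedNbhd (gapG n) v ∧
      Sum.inl y ∈ closedNbhd (gapG n) v ∧ (Sum.inl z : Vtx n) ∈ closedNbhd (gapG n) v := by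
    intro x y z
    obtain ⟨t, ht⟩ := exists_three hn {x, y, z} (Finset.card_le_three ..)
    refine ⟨Sum.inr t, ?_, ?_, ?_⟩ <;>
      simp only [mem_closedNbhd_iff, gap_adj_inr_inl] <;>
      exact Or.inr (ht (by simp))
  have cov2 : ∀ (x y : Fin n) (s : BSet n), ∃ v, Sum.inl x ∈ closedNbhd (gapG n) v ∧
      Sum.inl y ∈ closedNbhd (gapG n) v ∧ Sum.inr s ∈ closedNbhd (gapG n) v := by
    intro x y s
    by_cases hxy : x ∈ s.1 ∧ y ∈ s.1
    · exact ⟨Sum.inr s, by simp [mem_closedNbhd_iff, hxy.1], by simp [mem_closedNbhd_iff, hxy.2],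
        by simp [mem_closedNbhd_iff]⟩
    · obtain ⟨t, ht⟩ := exists_three hn {x, y} (by
        exact le_trans (Finset.card_insert_le _ _) (by simp))
      have hxt : x ∈ t.1 := ht (by simp)
      have hyt : y ∈ t.1 := ht (by simp)
      have hts : t ≠ s := by
        rintro rfl; exact hxy ⟨hxt, hyt⟩
      exact ⟨Sum.inr t, by simp [mem_closedNbhd_iff, hxt], by simp [mem_closedNbhd_iff, hyt],
        by simp [mem_closedNbhd_iff, hts]⟩
  have cov1 : ∀ (x : Fin n) (s t : BSet n), ∃ v, Sum.inl x ∈ closedNbhd (gapG n) v ∧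
      Sum.inr s ∈ closedNbhd (gapG n) v ∧ Sum.inr t ∈ closedNbhd (gapG n) v := by
    intro x s t
    obtain ⟨u, hu⟩ := exists_three hn {x} (by simp)
    have hxu : x ∈ u.1 := hu (by simp)
    by_cases hus : u = s
    · subst hus
      refine ⟨Sum.inr u, by simp [mem_closedNbhd_iff, hxu], by simp [mem_closedNbhd_iff], ?_⟩
      by_cases hut : u = t
      · simp [mem_closedNbhd_iff, hut]
      · simp [mem_closedNbhd_iff, hut]
    · by_cases hut : u = t
      · subst hut
        exact ⟨Sum.inr u, by simp [mem_closedNbhd_iff, hxu],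
          by simp [mem_closedNbhd_iff, hus], by simp [mem_closedNbhd_iff]⟩
      · exact ⟨Sum.inr u, by simp [mem_closedNbhd_iff, hxu],
          by simp [mem_closedNbhd_iff, hus], by simp [mem_closedNbhd_iff, hut]⟩
  have cov0 : ∀ (s t u : BSet n), ∃ v, Sum.inr s ∈ closedNbhd (gapG n) v ∧
      Sum.inr t ∈ closedNbhd (gapG n) v ∧ (Sum.inr u : Vtx n) ∈ closedNbhd (gapG n) v := by
    intro s t u
    refine ⟨Sum.inr s, by simp [mem_closedNbhd_iff], ?_, ?_⟩
    · by_cases h : s = t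
      · simp [mem_closedNbhd_iff, h]
      · simp [mem_closedNbhd_iff, h]
    · by_cases h : s = u
      · simp [mem_closedNbhd_iff, h]
      · simp [mem_closedNbhd_iff, h]
  rcases a with x | s <;> rcases b with y | t <;> rcases c with z | u
  · exact cov3 x y z
  · exact cov2 x y u
  · obtain ⟨v, h1, h2, h3⟩ := cov2 x z t; exact ⟨v, h1, h3, h2⟩
  · obtain ⟨v, h1, h2, h3⟩ := cov1 x t u; exact ⟨v, h1, h2, h3⟩
  · obtain ⟨v, h1, h2, h3⟩ := cov2 y z s; exact ⟨v, h3, h1, h2⟩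
  · obtain ⟨v, h1, h2, h3⟩ := cov1 y s u; exact ⟨v, h2, h1, h3⟩
  · obtain ⟨v, h1, h2, h3⟩ := cov1 z s t; exact ⟨v, h2, h3, h1⟩
  · exact cov0 s t u

theorem multiplicative_duality_gap_unbounded (n : ℕ) (hn : 3 ≤ n) :
    ∃ (V : Type) (_ : Fintype V) (G : SimpleGraph V),
      G.Connected ∧ tnpNumber G = 2 ∧ 2 * n ≤ 3 * romanNumber G := by
  classical
  refine ⟨Vtx n, inferInstance, gapG n, ?_, ?_, ?_⟩
  · -- Connected
    obtain ⟨b0, -⟩ := exists_three hn ∅ (by simp)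
    rw [connected_iff]
    refine ⟨?_, ⟨Sum.inr b0⟩⟩
    have key : ∀ w : Vtx n, (gapG n).Reachable (Sum.inr b0) w := by
      rintro (x | b)
      · obtain ⟨b, hb⟩ := exists_three hn {x} (by simp)
        have hxb : x ∈ b.1 := hb (by simp)
        have h1 : (gapG n).Reachable (Sum.inr b0) (Sum.inr b) := by
          by_cases h : b0 = b
          · rw [h]
          · exact ((gap_adj_inr_inr b0 b).mpr h).reachable
        exact h1.trans ((gap_adj_inr_inl x b).mpr hxb).reachable
      · by_cases h : b0 = b
        · rw [h]
        · exact ((gap_adj_inr_inr b0 b).mpr h).reachable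
    intro u v
    exact (key u).symm.trans (key v)
  · -- tnpNumber = 2
    have hbound : ∀ k ∈ {m | ∃ A : Set (Vtx n), IsTwoNbrPacking (gapG n) A ∧ A.ncard = m},
        k ≤ 2 := by
      rintro k ⟨A, hA, rfl⟩
      by_contra h
      push_neg at h
      obtain ⟨a, ha, b, hb, c, hc, hab, hac, hbc⟩ := (Set.two_lt_ncard A.toFinite).mp h
      obtain ⟨v, h1, h2, h3⟩ := triple_cover hn a b c
      have hsub : ({a, b, c} : Set (Vtx n)) ⊆ closedNbhd (gapG n) v ∩ A := by
        rintro w (rfl | rfl | rfl)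
        · exact ⟨h1, ha⟩
        · exact ⟨h2, hb⟩
        · exact ⟨h3, hc⟩
      have h3le : 3 ≤ (closedNbhd (gapG n) v ∩ A).ncard := by
        have := Set.ncard_le_ncard hsub (Set.toFinite _)
        rwa [Set.ncard_eq_three.mpr ⟨a, b, c, hab, hac, hbc, rfl⟩] at this
      have := hA v
      omega
    have hx01 : (Sum.inl (⟨0, by omega⟩ : Fin n) : Vtx n) ≠ Sum.inl ⟨1, by omega⟩ := by
      simp [Fin.ext_iff]
    have hmem : 2 ∈ {m | ∃ A : Set (Vtx n), IsTwoNbrPacking (gapG n) A ∧ A.ncard = m} := by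
      refine ⟨{Sum.inl ⟨0, by omega⟩, Sum.inl ⟨1, by omega⟩}, ?_, Set.ncard_pair hx01⟩
      intro v
      calc (closedNbhd (gapG n) v ∩ _).ncard ≤
          ({Sum.inl ⟨0, by omega⟩, Sum.inl ⟨1, by omega⟩} : Set (Vtx n)).ncard :=
            Set.ncard_le_ncard Set.inter_subset_right (Set.toFinite _)
        _ = 2 := Set.ncard_pair hx01
    exact le_antisymm (csSup_le ⟨2, hmem⟩ hbound) (le_csSup ⟨2, fun k hk => hbound k hk⟩ hmem)
  · -- roman number bound
    have hne : {w | ∃ f : Vtx n → ℕ, IsRomanDominating (gapG n) f ∧ ∑ v, f v = w}.Nonempty := by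
      exact ⟨∑ _v : Vtx n, 1, fun _ => 1, ⟨fun v => by norm_num, fun _ h => absurd h one_ne_zero⟩, rfl⟩
    obtain ⟨f, hf, hsum⟩ := Nat.sInf_mem hne
    rw [romanNumber, ← hsum]
    -- now show 2 * n ≤ 3 * ∑ v, f v
    set P : Finset (Fin n) := Finset.univ.filter (fun x => f (Sum.inl x) = 0) with hP
    set K : Finset (BSet n) := Finset.univ.filter (fun b => f (Sum.inr b) = 2) with hK
    haveI : Nonempty (BSet n) := ⟨(exists_three hn ∅ (by simp)).choose⟩
    have hg : ∀ x ∈ P, ∃ b : BSet n, x ∈ b.1 ∧ f (Sum.inr b) = 2 := by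
      intro x hx
      have hx0 : f (Sum.inl x) = 0 := (Finset.mem_filter.mp hx).2
      obtain ⟨u, hadj, hu2⟩ := hf.2 (Sum.inl x) hx0
      rcases u with y | b
      · exact absurd hadj (gap_adj_inl_inl x y)
      · exact ⟨b, hadj, hu2⟩
    choose! g hg1 hg2 using hg
    have hPK : P.card ≤ 3 * K.card := by
      refine Finset.card_le_mul_card_image_of_maps_to (f := g) (t := K) ?_ 3 ?_
      · intro x hx
        exact Finset.mem_filter.mpr ⟨Finset.mem_univ _, hg2 x hx⟩
      · intro b hb
        calc (P.filter fun x => g x = b).card ≤ b.1.card := by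
              apply Finset.card_le_card
              intro x hx
              obtain ⟨hxP, hgx⟩ := Finset.mem_filter.mp hx
              have := hg1 x hxP
              rwa [hgx] at this
          _ = 3 := b.2
    have hPc : Pᶜ.card ≤ ∑ x, f (Sum.inl x) := by
      calc Pᶜ.card = ∑ _x ∈ Pᶜ, 1 := by simp
        _ ≤ ∑ x ∈ Pᶜ, f (Sum.inl x) := by
            apply Finset.sum_le_sum
            intro x hx
            have : ¬ (f (Sum.inl x) = 0) := by
              have := Finset.mem_compl.mp hx
              simpa [hP] using this
            exact Nat.one_le_iff_ne_zero.mpr this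
        _ ≤ ∑ x, f (Sum.inl x) := Finset.sum_le_sum_of_subset (Finset.subset_univ _)
    have hcard : P.card + Pᶜ.card = n := by
      rw [Finset.card_add_card_compl]; simp
    have hKsum : 2 * K.card ≤ ∑ b, f (Sum.inr b) := by
      calc 2 * K.card = ∑ _b ∈ K, 2 := by simp [mul_comm]
        _ = ∑ b ∈ K, f (Sum.inr b) :=
            Finset.sum_congr rfl (fun b hb => ((Finset.mem_filter.mp hb).2).symm)
        _ ≤ ∑ b, f (Sum.inr b) := Finset.sum_le_sum_of_subset (Finset.subset_univ _)
    have hsplit : ∑ v, f v = ∑ x, f (Sum.inl x) + ∑ b, f (Sum.inr b) :=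
      Fintype.sum_sum_type f
    clear_value P K
    clear hg1 hg2 hP hK hne hsum hf g
    omega
end

section
/- Let G be a finite simple graph, let f be a γ_R-function on G, and let V_i = {v ∈ V(G) : f(v) = i} for i ∈ {0,1,2}. Then the subgraph of G induced by V_1 has maximum degree at most 1. -/
open SimpleGraph

/-!
If two distinct vertices `u, w` of `V₁` are both adjacent to a vertex `v` of `V₁`, move their
weight onto `v`: the values `v ↦ 2`, `u, w ↦ 0` still give a Roman dominating function, because
`v` now dominates `u` and `w`, and its weight is smaller by one, contradicting minimality.
-/

section Gather

variable {V : Type*} [DecidableEq V]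

def gatherAt (f : V → ℕ) (v : V) (S : Finset V) : V → ℕ :=
  fun x => if x = v then 2 else if x ∈ S then 0 else f x

theorem sum_gatherAt_add [Fintype V] (f : V → ℕ) {v : V} {S : Finset V} (hv : v ∉ S) :
    ∑ x, gatherAt f v S x + (f v + ∑ x ∈ S, f x) = ∑ x, f x + 2 := by
  have hout : ∀ x ∈ (insert v S)ᶜ, gatherAt f v S x = f x := by
    intro x hx
    simp only [Finset.mem_compl, Finset.mem_insert, not_or] at hx
    simp [gatherAt, hx.1, hx.2]
  have hin : ∑ x ∈ insert v S, gatherAt f v S x = 2 := by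
    rw [Finset.sum_insert hv, Finset.sum_eq_zero fun x hx => ?_]
    · simp [gatherAt]
    · simp [gatherAt, hx, ne_of_mem_of_not_mem hx hv]
  rw [← Finset.sum_add_sum_compl (insert v S), ← Finset.sum_add_sum_compl (insert v S) f,
    Finset.sum_congr rfl hout, hin, Finset.sum_insert hv]
  ring

theorem IsRomanDominating.gatherAt {G : SimpleGraph V} {f : V → ℕ} (hf : IsRomanDominating G f)
    {v : V} {S : Finset V} (hadj : ∀ u ∈ S, G.Adj v u) (hS : ∀ u ∈ S, f u ≠ 2) :
    IsRomanDominating G (gatherAt f v S) := by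
  refine ⟨fun x => ?_, fun x hx => ?_⟩
  · simp only [_root_.gatherAt]
    split_ifs <;> first | omega | exact hf.1 x
  by_cases hxv : x = v
  · simp [_root_.gatherAt, hxv] at hx
  by_cases hxS : x ∈ S
  · exact ⟨v, (hadj x hxS).symm, by simp [_root_.gatherAt]⟩
  have hfx : f x = 0 := by simpa [_root_.gatherAt, hxv, hxS] using hx
  obtain ⟨y, hxy, hfy⟩ := hf.2 x hfx
  have hyS : y ∉ S := fun hy => hS y hy hfy
  refine ⟨y, hxy, ?_⟩
  by_cases hyv : y = v <;> simp [_root_.gatherAt, hyv, hyS, hfy]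

end Gather

theorem romanNumber_le {V : Type*} [Fintype V] {G : SimpleGraph V} {f : V → ℕ}
    (hf : IsRomanDominating G f) : romanNumber G ≤ ∑ v, f v :=
  Nat.sInf_le ⟨f, hf, rfl⟩

theorem maxDegree_induced_V1_le_one {V : Type*} [Fintype V] (G : SimpleGraph V)
    (f : V → ℕ) (hf : IsRomanDominating G f) (hmin : ∑ v, f v = romanNumber G) :
    ∀ v : {v : V | f v = 1},
      ((G.induce {v : V | f v = 1}).neighborSet v).ncard ≤ 1 := by
  classical
  rintro ⟨v, hv⟩
  by_contra! h
  obtain ⟨⟨u, hu⟩, ⟨w, hw⟩, hvu, hvw, hne⟩ := (Set.one_lt_ncard_iff (Set.toFinite _)).mp h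
  have huw : u ≠ w := fun h => hne (Subtype.ext h)
  have hadj : ∀ x ∈ ({u, w} : Finset V), G.Adj v x := by
    simpa using ⟨hvu, hvw⟩
  have hone : ∀ x ∈ ({u, w} : Finset V), f x = 1 := by
    simpa using ⟨hu, hw⟩
  have hgather := hf.gatherAt hadj fun x hx => by simp [hone x hx]
  have hsum := sum_gatherAt_add f (S := {u, w}) fun h => (hadj v h).ne rfl
  rw [Finset.sum_pair huw, hv.out, hone u (by simp), hone w (by simp)] at hsum
  have hle := romanNumber_le hgather
  omega
end

section
/- Let G be a finite simple graph, let f be a γ_R-function on G, and let V_i = {v ∈ V(G) : f(v) = i} for i ∈ {0,1,2}. Then every vertex in V_0 is adjacent to at most two vertices in V_1. -/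
open SimpleGraph

theorem V0_adj_at_most_two_V1 {V : Type*} [Fintype V] (G : SimpleGraph V)
    (f : V → ℕ) (hf : IsRomanDominating G f) (hmin : ∑ v, f v = romanNumber G) :
    ∀ v : V, f v = 0 → (G.neighborSet v ∩ {u : V | f u = 1}).ncard ≤ 2 := by
  classical
  intro v hv
  by_contra h
  push_neg at h
  obtain ⟨S, hSsub, hScard⟩ := Set.exists_subset_card_eq
    (show 3 ≤ (G.neighborSet v ∩ {u : V | f u = 1}).ncard by omega)
  have hSfin : S.Finite := Set.toFinite S
  set T : Finset V := hSfin.toFinset with hT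
  have hTmem : ∀ u ∈ T, G.Adj v u ∧ f u = 1 := by
    intro u hu
    have := hSsub (hSfin.mem_toFinset.mp hu)
    exact ⟨this.1, this.2⟩
  have hTcard : T.card = 3 := by
    rwa [Set.ncard_eq_toFinset_card _ hSfin] at hScard
  have hvT : v ∉ T := by
    intro hvmem
    exact G.irrefl (hTmem v hvmem).1
  set g : V → ℕ := fun u => if u = v then 2 else if u ∈ T then 0 else f u with hg
  have hgRD : IsRomanDominating G g := by
    constructor
    · intro u
      simp only [hg]
      split_ifs with h1 h2
      · exact le_refl 2
      · omega
      · exact hf.1 u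
    · intro u hu
      by_cases h1 : u = v
      · simp [hg, h1] at hu
      by_cases h2 : u ∈ T
      · refine ⟨v, ((hTmem u h2).1).symm, by simp [hg]⟩
      · have hfu : f u = 0 := by simpa [hg, h1, h2] using hu
        obtain ⟨w, hadj, hw2⟩ := hf.2 u hfu
        have hwv : w ≠ v := fun e => by rw [e, hv] at hw2; omega
        have hwT : w ∉ T := fun hm => by have := (hTmem w hm).2; omega
        exact ⟨w, hadj, by simp [hg, hwv, hwT, hw2]⟩
  set A : Finset V := insert v T with hA
  have hsplit : ∀ (F : V → ℕ), ∑ u, F u = ∑ u ∈ A, F u + ∑ u ∈ Finset.univ \ A, F u := by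
    intro F
    rw [← Finset.sum_union (Finset.disjoint_sdiff)]
    congr 1
    simp [Finset.union_comm]
  have hAg : ∑ u ∈ A, g u = 2 := by
    rw [hA, Finset.sum_insert hvT]
    have : ∑ u ∈ T, g u = 0 := Finset.sum_eq_zero (fun u hu => by
      have huv : u ≠ v := fun e => hvT (e ▸ hu)
      simp [hg, huv, hu])
    rw [this]; simp [hg]
  have hAf : ∑ u ∈ A, f u = 3 := by
    rw [hA, Finset.sum_insert hvT, hv]
    have : ∑ u ∈ T, f u = ∑ u ∈ T, 1 := Finset.sum_congr rfl (fun u hu => (hTmem u hu).2)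
    simp [this, hTcard]
  have hout : ∑ u ∈ Finset.univ \ A, g u = ∑ u ∈ Finset.univ \ A, f u := by
    refine Finset.sum_congr rfl (fun u hu => ?_)
    rw [Finset.mem_sdiff, hA, Finset.mem_insert] at hu
    push_neg at hu
    simp [hg, hu.2.1, hu.2.2]
  have hsum : ∑ u, g u + 1 = ∑ u, f u := by
    rw [hsplit g, hsplit f, hAg, hAf, hout]; ring
  have hle : romanNumber G ≤ ∑ u, g u :=
    Nat.sInf_le ⟨g, hgRD, rfl⟩
  omega
end

section
/- Let G be a finite simple graph, let f be a γ_R-function on G, and let V_2 = {v ∈ V(G) : f(v) = 2}. Then every vertex v ∈ V_2 has at least two private neighbours with respect to V_2. -/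
open SimpleGraph

/-- `u` is a private neighbour of `v` with respect to `V₂`: `u ∈ N[v]` but `u ∉ N[v']`
for every `v' ∈ V₂ \ {v}`. -/
def IsPrivateNbr {V : Type*} (G : SimpleGraph V) (V₂ : Set V) (u v : V) : Prop :=
  u ∈ closedNbhd G v ∧ ∀ v' ∈ V₂, v' ≠ v → u ∉ closedNbhd G v'

/-!
If `v ∈ V₂` had at most one private neighbour, lower `f v` from `2` to `0` and raise every
private neighbour of `v` to `1`. Every vertex that lost its domination by `v` is either a
private neighbour, now of value `1`, or still adjacent to another vertex of `V₂`. The result is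
again Roman dominating, and its weight is at most `w(f) - 2 + 1`, contradicting minimality.
-/

section

variable {V : Type*} {G : SimpleGraph V}

theorem self_mem_closedNbhd (v : V) : v ∈ closedNbhd G v :=
  Set.mem_insert v _

theorem adj_of_mem_closedNbhd {v w : V} (hw : w ∈ closedNbhd G v) (hne : w ≠ v) : G.Adj v w :=
  (Set.mem_insert_iff.mp hw).resolve_left hne

theorem not_isPrivateNbr_of_mem {V₂ : Set V} {v x : V} (hx : x ∈ V₂) (hxv : x ≠ v) :
    ¬ IsPrivateNbr G V₂ x v :=
  fun h => h.2 x hx hxv (self_mem_closedNbhd x)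

theorem romanNumber_le_s15 [Fintype V] {g : V → ℕ} (hg : IsRomanDominating G g) :
    romanNumber G ≤ ∑ w, g w :=
  Nat.sInf_le ⟨g, hg, rfl⟩

open scoped Classical in
noncomputable def privateShift (G : SimpleGraph V) (f : V → ℕ) (v : V) : V → ℕ :=
  fun w => if IsPrivateNbr G {x | f x = 2} w v then 1 else if w = v then 0 else f w

variable {f : V → ℕ} {v : V}

theorem privateShift_eq_two {x : V} (hx : f x = 2) (hxv : x ≠ v) : privateShift G f v x = 2 := by
  simp [privateShift, not_isPrivateNbr_of_mem (G := G) (V₂ := {x | f x = 2}) hx hxv, hxv, hx]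

theorem isRomanDominating_privateShift (hf : IsRomanDominating G f) :
    IsRomanDominating G (privateShift G f v) := by
  classical
  constructor
  · intro w
    unfold privateShift
    split_ifs <;> first | omega | exact hf.1 w
  · intro w hw
    have hwP : ¬ IsPrivateNbr G {x | f x = 2} w v := by
      intro h; simp [privateShift, h] at hw
    obtain ⟨y, hy, hyv, hwy⟩ : ∃ y, f y = 2 ∧ y ≠ v ∧ w ∈ closedNbhd G y := by
      by_cases hwv : w ∈ closedNbhd G v
      · simpa [IsPrivateNbr, hwv] using hwP
      · have hw0 : f w = 0 := by
          have : w ≠ v := fun h => hwv (h ▸ self_mem_closedNbhd w)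
          simpa [privateShift, hwP, this] using hw
        obtain ⟨y, hadj, hy⟩ := hf.2 w hw0
        refine ⟨y, hy, ?_, Set.mem_insert_of_mem _ hadj.symm⟩
        rintro rfl
        exact hwv (Set.mem_insert_of_mem _ hadj.symm)
    have hwy' : w ≠ y := by
      rintro rfl
      simp [privateShift, hwP, hyv, hy] at hw
    exact ⟨y, (adj_of_mem_closedNbhd hwy hwy').symm, privateShift_eq_two hy hyv⟩

theorem sum_privateShift_add_two_le [Fintype V] (hv : f v = 2) :
    ∑ w, privateShift G f v w + 2 ≤ ∑ w, f w + {u | IsPrivateNbr G {x | f x = 2} u v}.ncard := by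
  classical
  have hpoint : ∀ w, privateShift G f v w + (if w = v then 2 else 0)
      ≤ f w + (if IsPrivateNbr G {x | f x = 2} w v then 1 else 0) := by
    intro w
    unfold privateShift
    split_ifs <;> subst_vars <;> omega
  calc ∑ w, privateShift G f v w + 2
      = ∑ w, (privateShift G f v w + if w = v then 2 else 0) := by
        simp [Finset.sum_add_distrib]
    _ ≤ ∑ w, (f w + if IsPrivateNbr G {x | f x = 2} w v then 1 else 0) :=
        Finset.sum_le_sum fun w _ => hpoint w
    _ = ∑ w, f w + {u | IsPrivateNbr G {x | f x = 2} u v}.ncard := by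
        simp [Finset.sum_add_distrib, Finset.sum_boole, Set.ncard_eq_toFinset_card']

end

theorem V2_two_private_neighbours {V : Type*} [Fintype V] (G : SimpleGraph V)
    (f : V → ℕ) (hf : IsRomanDominating G f) (hmin : ∑ v, f v = romanNumber G) :
    ∀ v : V, f v = 2 →
      2 ≤ {u : V | IsPrivateNbr G {w : V | f w = 2} u v}.ncard := by
  intro v hv
  by_contra! hfew
  have hle := romanNumber_le_s15 (isRomanDominating_privateShift (v := v) hf)
  have hsum := sum_privateShift_add_two_le (G := G) hv
  omega
end

section
/- Let T be a finite tree rooted at a vertex r. Then there exists a γ_R-function f on T such that for every vertex v, writing T_v for the subtree of T rooted at v (the set of vertices whose path to r passes through v) and V_2 = {u : f(u) = 2}: (1) the set N[v] ∩ T_v contains at most one vertex u with f(u) = 1; (2) if f(v) = 2, then N[v] ∩ T_v contains at least two private neighbours of v with respect to V_2; and (3) if f(v) = 0, then N[v] ∩ T_v contains at most one vertex u such that either f(u) = 1, or f(u) = 2 and u has exactly one external private neighbour with respect to V_2. -/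
open SimpleGraph

/-- The vertex set of the subtree rooted at `v` of a tree rooted at `r`: those vertices
all of whose walks to `r` pass through `v`. -/
def subtreeSet {V : Type*} (T : SimpleGraph V) (r v : V) : Set V :=
  {u : V | ∀ p : T.Walk u r, v ∈ p.support}

namespace RomanTreeAux

variable {V : Type*} [DecidableEq V] {T : SimpleGraph V}

/-- The chosen path from `u` to `r` in the tree. -/
noncomputable def pth (hT : T.IsTree) (r u : V) : T.Walk u r :=
  ((hT.isConnected.preconnected u r).some).bypass

lemma pth_isPath (hT : T.IsTree) (r u : V) : (pth hT r u).IsPath :=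
  SimpleGraph.Walk.bypass_isPath _

lemma walk_eq_pth (hT : T.IsTree) {r u : V} (w : T.Walk u r) (hw : w.IsPath) :
    w = pth hT r u :=
  congrArg Subtype.val (hT.IsAcyclic.path_unique ⟨w, hw⟩ ⟨pth hT r u, pth_isPath hT r u⟩)

lemma pth_support_subset (hT : T.IsTree) {r u : V} (w : T.Walk u r) :
    (pth hT r u).support ⊆ w.support := by
  rw [← walk_eq_pth hT w.bypass w.bypass_isPath]
  exact w.support_bypass_subset

lemma mem_subtreeSet_iff (hT : T.IsTree) {r v u : V} :
    u ∈ subtreeSet T r v ↔ v ∈ (pth hT r u).support :=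
  ⟨fun h => h (pth hT r u), fun h w => pth_support_subset hT w h⟩

lemma self_mem_subtreeSet (r v : V) : v ∈ subtreeSet T r v :=
  fun w => w.start_mem_support

lemma subtreeSet_root (r : V) : subtreeSet T r r = Set.univ := by
  ext u; simp only [Set.mem_univ, iff_true]
  exact fun w => w.end_mem_support

lemma pth_cons_of_mem (hT : T.IsTree) {r u v : V} (h : T.Adj u v)
    (hv : v ∈ (pth hT r u).support) : pth hT r u = SimpleGraph.Walk.cons h (pth hT r v) := by
  have hp := pth_isPath hT r u
  have hdrop : ((pth hT r u).dropUntil v hv).IsPath := hp.dropUntil hv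
  have htake : ((pth hT r u).takeUntil v hv).IsPath := hp.takeUntil hv
  have h1 : (pth hT r u).dropUntil v hv = pth hT r v := walk_eq_pth hT _ hdrop
  have h2 : (pth hT r u).takeUntil v hv = SimpleGraph.Walk.cons h SimpleGraph.Walk.nil := by
    have hcp : (SimpleGraph.Walk.cons h (SimpleGraph.Walk.nil : T.Walk v v)).IsPath := by
      simp [SimpleGraph.Walk.cons_isPath_iff, h.ne]
    have := hT.IsAcyclic.path_unique ⟨(pth hT r u).takeUntil v hv, htake⟩
      ⟨SimpleGraph.Walk.cons h SimpleGraph.Walk.nil, hcp⟩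
    exact congrArg Subtype.val this
  have := ((pth hT r u).take_spec hv).symm
  rw [h1, h2] at this
  simpa using this

lemma pth_cons_of_not_mem (hT : T.IsTree) {r u v : V} (h : T.Adj u v)
    (hv : v ∉ (pth hT r u).support) :
    pth hT r v = SimpleGraph.Walk.cons h.symm (pth hT r u) :=
  (walk_eq_pth hT _ ((pth_isPath hT r u).cons hv)).symm

lemma second_unique (hT : T.IsTree) {r v u1 u2 : V} {h1 : T.Adj v u1} {h2 : T.Adj v u2}
    (e1 : pth hT r v = SimpleGraph.Walk.cons h1 (pth hT r u1))
    (e2 : pth hT r v = SimpleGraph.Walk.cons h2 (pth hT r u2)) : u1 = u2 := by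
  have g1 : (pth hT r v).getVert 1 = u1 := by
    rw [e1, SimpleGraph.Walk.getVert_cons_succ, SimpleGraph.Walk.getVert_zero]
  have g2 : (pth hT r v).getVert 1 = u2 := by
    rw [e2, SimpleGraph.Walk.getVert_cons_succ, SimpleGraph.Walk.getVert_zero]
  rw [g1] at g2; exact g2

/-- depth of a vertex -/
noncomputable def dpt (hT : T.IsTree) (r u : V) : ℕ := (pth hT r u).length

lemma dpt_child (hT : T.IsTree) {r v c : V} (h : T.Adj v c) (hc : c ∈ subtreeSet T r v) :
    pth hT r c = SimpleGraph.Walk.cons h.symm (pth hT r v) ∧ dpt hT r c = dpt hT r v + 1 := by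
  have hv : v ∈ (pth hT r c).support := (mem_subtreeSet_iff hT).1 hc
  have e := pth_cons_of_mem hT h.symm hv
  exact ⟨e, by rw [dpt, dpt, e, SimpleGraph.Walk.length_cons]⟩

lemma dpt_parent (hT : T.IsTree) {r v p : V} (h : T.Adj v p) (hp : p ∉ subtreeSet T r v) :
    pth hT r v = SimpleGraph.Walk.cons h (pth hT r p) ∧ dpt hT r v = dpt hT r p + 1 := by
  have hv : v ∉ (pth hT r p).support := fun hmem => hp ((mem_subtreeSet_iff hT).2 hmem)
  have e := pth_cons_of_not_mem hT h.symm hv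
  exact ⟨e, by rw [dpt, dpt, e, SimpleGraph.Walk.length_cons]⟩

section Key

set_option linter.unusedSectionVars false

variable [Fintype V]

/-- Base for the lexicographic key. -/
def BB (V : Type*) [Fintype V] : ℕ :=
  2 * Fintype.card V * Fintype.card V + Fintype.card V + 1

noncomputable def Phi (hT : T.IsTree) (r : V) (f : V → ℕ) : ℕ := ∑ v, f v * dpt hT r v

noncomputable def Ione (f : V → ℕ) : ℕ := ∑ v, (if f v = 1 then 1 else 0)

noncomputable def KK (hT : T.IsTree) (r : V) (f : V → ℕ) : ℕ :=
  (∑ v, f v) * (BB V) ^ 2 + Phi hT r f * BB V + (Fintype.card V - Ione f)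

lemma dpt_lt_card (hT : T.IsTree) (r u : V) : dpt hT r u < Fintype.card V := by
  have h1 : (pth hT r u).support.length = (pth hT r u).length + 1 :=
    SimpleGraph.Walk.length_support _
  have h2 : (pth hT r u).support.length ≤ Fintype.card V :=
    (pth_isPath hT r u).support_nodup.length_le_card
  simp only [dpt]; omega

lemma Phi_lt (hT : T.IsTree) (r : V) {f : V → ℕ} (hf2 : ∀ x, f x ≤ 2) :
    Phi hT r f < BB V := by
  have h : Phi hT r f ≤ ∑ _v : V, 2 * Fintype.card V := by
    apply Finset.sum_le_sum
    intro i _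
    exact Nat.mul_le_mul (hf2 i) (dpt_lt_card hT r i).le
  simp only [Finset.sum_const, Finset.card_univ, smul_eq_mul] at h
  have : Fintype.card V * (2 * Fintype.card V) = 2 * Fintype.card V * Fintype.card V := by ring
  rw [this] at h
  simp only [BB]; omega

lemma Ione_le (f : V → ℕ) : Ione f ≤ Fintype.card V := by
  have : Ione f ≤ ∑ _v : V, 1 := by
    apply Finset.sum_le_sum; intro i _; split <;> omega
  simpa using this

lemma card_lt_BB (V : Type*) [Fintype V] : Fintype.card V < BB V := by
  simp only [BB]; omega

lemma lex_arith {Bq n Wf Wg Pf Pg If Ig : ℕ} (hPf : Pf < Bq) (hPg : Pg < Bq)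
    (hIf : If ≤ n) (hIg : Ig ≤ n) (hn : n < Bq)
    (h : Wg < Wf ∨ (Wg = Wf ∧ (Pg < Pf ∨ (Pg = Pf ∧ If < Ig)))) :
    Wg * Bq ^ 2 + Pg * Bq + (n - Ig) < Wf * Bq ^ 2 + Pf * Bq + (n - If) := by
  have hB2 : Bq ^ 2 = Bq * Bq := sq Bq
  rcases h with h | ⟨hW, h⟩
  · have h1 : Pg * Bq + (n - Ig) < Bq * Bq := by
      have : Pg * Bq + Bq ≤ Bq * Bq := by
        calc Pg * Bq + Bq = (Pg + 1) * Bq := by ring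
        _ ≤ Bq * Bq := Nat.mul_le_mul_right _ hPg
      omega
    have h2 : (Wg + 1) * Bq ^ 2 ≤ Wf * Bq ^ 2 := Nat.mul_le_mul_right _ h
    nlinarith [Nat.sub_le n If]
  · rcases h with h | ⟨hP, hI⟩
    · have h1 : (n - Ig) < Bq := by omega
      have h2 : (Pg + 1) * Bq ≤ Pf * Bq := Nat.mul_le_mul_right _ h
      rw [hW]
      nlinarith [Nat.sub_le n If]
    · rw [hW, hP]
      have : n - Ig < n - If := Nat.sub_lt_sub_left (by omega) hI
      omega

lemma KK_lt (hT : T.IsTree) (r : V) {f g : V → ℕ}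
    (hf2 : ∀ x, f x ≤ 2) (hg2 : ∀ x, g x ≤ 2) (s : Finset V)
    (hoff : ∀ x ∉ s, g x = f x)
    (hlex : (∑ x ∈ s, g x < ∑ x ∈ s, f x) ∨
      ((∑ x ∈ s, g x = ∑ x ∈ s, f x) ∧
        ((∑ x ∈ s, g x * dpt hT r x < ∑ x ∈ s, f x * dpt hT r x) ∨
          ((∑ x ∈ s, g x * dpt hT r x = ∑ x ∈ s, f x * dpt hT r x) ∧
            (∑ x ∈ s, if f x = 1 then 1 else 0) < ∑ x ∈ s, if g x = 1 then 1 else 0)))) :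
    KK hT r g < KK hT r f := by
  have hsplit : ∀ F : V → ℕ, ∑ v, F v = ∑ x ∈ s, F x + ∑ x ∈ Finset.univ \ s, F x := by
    intro F
    rw [← Finset.sum_sdiff (Finset.subset_univ s)]; ring
  have hcongr : ∀ F G : V → ℕ, (∀ x ∉ s, G x = F x) →
      ∑ x ∈ Finset.univ \ s, G x = ∑ x ∈ Finset.univ \ s, F x := by
    intro F G h
    apply Finset.sum_congr rfl
    intro x hx
    exact h x (Finset.mem_sdiff.1 hx).2
  have eW : ∑ v, g v = ∑ x ∈ s, g x + ∑ x ∈ Finset.univ \ s, f x := by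
    rw [hsplit g, hcongr f g hoff]
  have eW' : ∑ v, f v = ∑ x ∈ s, f x + ∑ x ∈ Finset.univ \ s, f x := hsplit f
  have eP : Phi hT r g = (∑ x ∈ s, g x * dpt hT r x) + ∑ x ∈ Finset.univ \ s, f x * dpt hT r x := by
    rw [Phi, hsplit (fun v => g v * dpt hT r v),
      hcongr (fun v => f v * dpt hT r v) (fun v => g v * dpt hT r v)
        (fun x hx => by simp only [hoff x hx])]
  have eP' : Phi hT r f = (∑ x ∈ s, f x * dpt hT r x) + ∑ x ∈ Finset.univ \ s, f x * dpt hT r x :=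
    hsplit _
  have eI : Ione g = (∑ x ∈ s, if g x = 1 then 1 else 0) +
      ∑ x ∈ Finset.univ \ s, (if f x = 1 then 1 else 0) := by
    rw [Ione, hsplit (fun v => if g v = 1 then 1 else 0),
      hcongr (fun v => if f v = 1 then 1 else 0) (fun v => if g v = 1 then 1 else 0)
        (fun x hx => by simp only [hoff x hx])]
  have eI' : Ione f = (∑ x ∈ s, if f x = 1 then 1 else 0) +
      ∑ x ∈ Finset.univ \ s, (if f x = 1 then 1 else 0) := hsplit _
  rw [KK, KK, eW, eW', eP, eP', eI, eI']
  apply lex_arith (eP' ▸ Phi_lt hT r hf2) (eP ▸ Phi_lt hT r hg2)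
    (eI' ▸ Ione_le f) (eI ▸ Ione_le g) (card_lt_BB V)
  rcases hlex with h | ⟨h1, h⟩
  · left; omega
  · right; refine ⟨by omega, ?_⟩
    rcases h with h | ⟨h2, h3⟩
    · left; omega
    · right; exact ⟨by omega, by omega⟩

lemma sum_pair {a b : V} (h : a ≠ b) (F : V → ℕ) :
    ∑ x ∈ ({a, b} : Finset V), F x = F a + F b := by
  rw [Finset.sum_insert (by simp [h]), Finset.sum_singleton]

lemma sum_triple {a b c : V} (hab : a ≠ b) (hac : a ≠ c) (hbc : b ≠ c) (F : V → ℕ) :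
    ∑ x ∈ ({a, b, c} : Finset V), F x = F a + (F b + F c) := by
  rw [Finset.sum_insert (by simp [hab, hac]), sum_pair hbc]

lemma sum_quad {a b c d : V} (hab : a ≠ b) (hac : a ≠ c) (had : a ≠ d)
    (hbc : b ≠ c) (hbd : b ≠ d) (hcd : c ≠ d) (F : V → ℕ) :
    ∑ x ∈ ({a, b, c, d} : Finset V), F x = F a + (F b + (F c + F d)) := by
  rw [Finset.sum_insert (by simp [hab, hac, had]), sum_triple hbc hbd hcd]

lemma sum_quint {a b c d e : V} (hab : a ≠ b) (hac : a ≠ c) (had : a ≠ d) (hae : a ≠ e)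
    (hbc : b ≠ c) (hbd : b ≠ d) (hbe : b ≠ e) (hcd : c ≠ d) (hce : c ≠ e) (hde : d ≠ e)
    (F : V → ℕ) :
    ∑ x ∈ ({a, b, c, d, e} : Finset V), F x = F a + (F b + (F c + (F d + F e))) := by
  rw [Finset.sum_insert (by simp [hab, hac, had, hae]), sum_quad hbc hbd hbe hcd hce hde]

end Key

section Main

set_option linter.unusedSectionVars false

variable [Fintype V] {hT : T.IsTree} {r : V} {f : V → ℕ}

lemma mem_cn {u v : V} : u ∈ closedNbhd T v ↔ u = v ∨ T.Adj v u := by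
  simp [closedNbhd]

/-- If `f` is key-minimal, no vertex of value 1 is adjacent to a vertex of value 2. -/
lemma L_P1 (hf : IsRomanDominating T f)
    (hmin : ∀ g : V → ℕ, IsRomanDominating T g → KK hT r f ≤ KK hT r g)
    {u v : V} (hadj : T.Adj u v) (hu : f u = 1) (hv : f v = 2) : False := by
  have hvu : v ≠ u := fun h => by rw [h, hu] at hv; omega
  set g : V → ℕ := Function.update f u 0 with hg
  have hgu : g u = 0 := Function.update_self u 0 f
  have hgoff : ∀ x, x ≠ u → g x = f x := fun x hx => Function.update_of_ne hx 0 f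
  have hgRD : IsRomanDominating T g := by
    constructor
    · intro x
      by_cases hx : x = u
      · rw [hx, hgu]; omega
      · rw [hgoff x hx]; exact hf.1 x
    · intro x hx
      by_cases hxu : x = u
      · subst hxu
        exact ⟨v, hadj, by rw [hgoff v hvu]; exact hv⟩
      · obtain ⟨w, hw, hw2⟩ := hf.2 x (by rw [← hgoff x hxu]; exact hx)
        have hwu : w ≠ u := fun h => by rw [h, hu] at hw2; omega
        exact ⟨w, hw, by rw [hgoff w hwu]; exact hw2⟩
  have hKK : KK hT r g < KK hT r f := by
    apply KK_lt hT r hf.1 hgRD.1 {u} (fun x hx => hgoff x (by simpa using hx))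
    left
    rw [Finset.sum_singleton, Finset.sum_singleton, hgu, hu]
    omega
  exact absurd (hmin g hgRD) (not_le.2 hKK)

/-- Exchange: `f v = 1` and a child of value 1. -/
lemma L_E1 (hf : IsRomanDominating T f)
    (hmin : ∀ g : V → ℕ, IsRomanDominating T g → KK hT r f ≤ KK hT r g)
    {v c : V} (hadj : T.Adj v c) (hcT : c ∈ subtreeSet T r v)
    (hv : f v = 1) (hc : f c = 1) : False := by
  have hcv : c ≠ v := hadj.ne'
  have hdc : dpt hT r c = dpt hT r v + 1 := (dpt_child hT hadj hcT).2
  set g : V → ℕ := Function.update (Function.update f v 2) c 0 with hgdef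
  have hgc : g c = 0 := Function.update_self c 0 _
  have hgv : g v = 2 := by
    rw [hgdef, Function.update_of_ne (Ne.symm hcv) 0 _]; exact Function.update_self v 2 f
  have hgoff : ∀ x, x ≠ v → x ≠ c → g x = f x := fun x hxv hxc => by
    rw [hgdef, Function.update_of_ne hxc 0 _, Function.update_of_ne hxv 2 f]
  have hgRD : IsRomanDominating T g := by
    constructor
    · intro x
      by_cases h1 : x = c
      · rw [h1, hgc]; omega
      by_cases h2 : x = v
      · rw [h2, hgv]
      · rw [hgoff x h2 h1]; exact hf.1 x
    · intro x hx
      by_cases h1 : x = c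
      · exact ⟨v, (h1 ▸ hadj.symm), hgv⟩
      by_cases h2 : x = v
      · rw [h2, hgv] at hx; omega
      · obtain ⟨w, hw, hw2⟩ := hf.2 x (by rw [← hgoff x h2 h1]; exact hx)
        have hwc : w ≠ c := fun h => by rw [h, hc] at hw2; omega
        by_cases hwv : w = v
        · exact ⟨w, hw, by rw [hwv, hgv]⟩
        · exact ⟨w, hw, by rw [hgoff w hwv hwc]; exact hw2⟩
  have hKK : KK hT r g < KK hT r f := by
    apply KK_lt hT r hf.1 hgRD.1 {v, c}
      (fun x hx => by
        simp only [Finset.mem_insert, Finset.mem_singleton, not_or] at hx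
        exact hgoff x hx.1 hx.2)
    rw [sum_pair (Ne.symm hcv), sum_pair (Ne.symm hcv), sum_pair (Ne.symm hcv),
      sum_pair (Ne.symm hcv)]
    right
    constructor
    · rw [hgv, hgc, hv, hc]
    · left
      rw [hgv, hgc, hv, hc, hdc]
      omega
  exact absurd (hmin g hgRD) (not_le.2 hKK)

/-- Exchange: `f v = 0` and two children of value 1. -/
lemma L_E2 (hf : IsRomanDominating T f)
    (hmin : ∀ g : V → ℕ, IsRomanDominating T g → KK hT r f ≤ KK hT r g)
    {v c1 c2 : V} (hadj1 : T.Adj v c1) (hadj2 : T.Adj v c2)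
    (hc1T : c1 ∈ subtreeSet T r v) (hc2T : c2 ∈ subtreeSet T r v) (h12 : c1 ≠ c2)
    (hv : f v = 0) (hc1 : f c1 = 1) (hc2 : f c2 = 1) : False := by
  have h1v : c1 ≠ v := hadj1.ne'
  have h2v : c2 ≠ v := hadj2.ne'
  have hd1 : dpt hT r c1 = dpt hT r v + 1 := (dpt_child hT hadj1 hc1T).2
  have hd2 : dpt hT r c2 = dpt hT r v + 1 := (dpt_child hT hadj2 hc2T).2
  set g : V → ℕ := Function.update (Function.update (Function.update f v 2) c1 0) c2 0
    with hgdef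
  have hgc2 : g c2 = 0 := Function.update_self c2 0 _
  have hgc1 : g c1 = 0 := by
    rw [hgdef, Function.update_of_ne h12 0 _]; exact Function.update_self c1 0 _
  have hgv : g v = 2 := by
    rw [hgdef, Function.update_of_ne (Ne.symm h2v) 0 _, Function.update_of_ne (Ne.symm h1v) 0 _]
    exact Function.update_self v 2 f
  have hgoff : ∀ x, x ≠ v → x ≠ c1 → x ≠ c2 → g x = f x := fun x hxv hx1 hx2 => by
    rw [hgdef, Function.update_of_ne hx2 0 _, Function.update_of_ne hx1 0 _,
      Function.update_of_ne hxv 2 f]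
  have hgRD : IsRomanDominating T g := by
    constructor
    · intro x
      by_cases h1 : x = c2
      · rw [h1, hgc2]; omega
      by_cases h2 : x = c1
      · rw [h2, hgc1]; omega
      by_cases h3 : x = v
      · rw [h3, hgv]
      · rw [hgoff x h3 h2 h1]; exact hf.1 x
    · intro x hx
      by_cases h1 : x = c2
      · exact ⟨v, (h1 ▸ hadj2.symm), hgv⟩
      by_cases h2 : x = c1
      · exact ⟨v, (h2 ▸ hadj1.symm), hgv⟩
      by_cases h3 : x = v
      · rw [h3, hgv] at hx; omega
      · obtain ⟨w, hw, hw2⟩ := hf.2 x (by rw [← hgoff x h3 h2 h1]; exact hx)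
        have hwc1 : w ≠ c1 := fun h => by rw [h, hc1] at hw2; omega
        have hwc2 : w ≠ c2 := fun h => by rw [h, hc2] at hw2; omega
        by_cases hwv : w = v
        · exact ⟨w, hw, by rw [hwv, hgv]⟩
        · exact ⟨w, hw, by rw [hgoff w hwv hwc1 hwc2]; exact hw2⟩
  have hKK : KK hT r g < KK hT r f := by
    apply KK_lt hT r hf.1 hgRD.1 {v, c1, c2}
      (fun x hx => by
        simp only [Finset.mem_insert, Finset.mem_singleton, not_or] at hx
        exact hgoff x hx.1 hx.2.1 hx.2.2)
    rw [sum_triple (Ne.symm h1v) (Ne.symm h2v) h12, sum_triple (Ne.symm h1v) (Ne.symm h2v) h12,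
      sum_triple (Ne.symm h1v) (Ne.symm h2v) h12, sum_triple (Ne.symm h1v) (Ne.symm h2v) h12]
    right
    constructor
    · rw [hgv, hgc1, hgc2, hv, hc1, hc2]
    · left
      rw [hgv, hgc1, hgc2, hv, hc1, hc2, hd1, hd2]
      omega
  exact absurd (hmin g hgRD) (not_le.2 hKK)


/-- Condition (1). -/
lemma cond1 (hf : IsRomanDominating T f)
    (hmin : ∀ g : V → ℕ, IsRomanDominating T g → KK hT r f ≤ KK hT r g) (v : V) :
    (closedNbhd T v ∩ subtreeSet T r v ∩ {u : V | f u = 1}).ncard ≤ 1 := by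
  by_contra h
  push_neg at h
  obtain ⟨a, b, ha, hb, hab⟩ := (Set.one_lt_ncard_iff (Set.toFinite _)).1 h
  have ha1 : f a = 1 := ha.2
  have hb1 : f b = 1 := hb.2
  have haN := ha.1.1
  have hbN := hb.1.1
  have haT := ha.1.2
  have hbT := hb.1.2
  by_cases hav : a = v
  · subst hav
    have hadj : T.Adj a b := (mem_cn.1 hbN).resolve_left (Ne.symm hab)
    exact L_E1 hf hmin hadj hbT ha1 hb1
  by_cases hbv : b = v
  · subst hbv
    have hadj : T.Adj b a := (mem_cn.1 haN).resolve_left hav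
    exact L_E1 hf hmin hadj haT hb1 ha1
  · have hadja : T.Adj v a := (mem_cn.1 haN).resolve_left hav
    have hadjb : T.Adj v b := (mem_cn.1 hbN).resolve_left hbv
    have hfv := hf.1 v
    by_cases h0 : f v = 0
    · exact L_E2 hf hmin hadja hadjb haT hbT hab h0 ha1 hb1
    by_cases h1 : f v = 1
    · exact L_E1 hf hmin hadja haT h1 ha1
    · have h2 : f v = 2 := by omega
      exact L_P1 hf hmin hadja.symm ha1 h2

/-- Condition (2). -/
lemma cond2 (hf : IsRomanDominating T f)
    (hmin : ∀ g : V → ℕ, IsRomanDominating T g → KK hT r f ≤ KK hT r g) (v : V)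
    (hv2 : f v = 2) :
    2 ≤ (closedNbhd T v ∩ subtreeSet T r v ∩
      {u : V | IsPrivateNbr T {x : V | f x = 2} u v}).ncard := by
  by_contra hlt
  push_neg at hlt
  set PV : Set V := {u : V | IsPrivateNbr T {x : V | f x = 2} u v} with hPVdef
  -- private neighbours lie in the closed neighbourhood
  have hP_sub : ∀ u ∈ PV, u ∈ closedNbhd T v := fun u hu => hu.1
  have hA_eq : closedNbhd T v ∩ subtreeSet T r v ∩ PV = PV ∩ subtreeSet T r v := by
    ext u
    exact ⟨fun h => ⟨h.2, h.1.2⟩, fun h => ⟨⟨hP_sub u h.1, h.2⟩, h.1⟩⟩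
  rw [hA_eq] at hlt
  have hAcard : (PV ∩ subtreeSet T r v).ncard ≤ 1 := by omega
  -- a private neighbour other than v has value 0
  have hP0 : ∀ u ∈ PV, u ≠ v → f u = 0 := by
    intro u hu huv
    have hu2 : f u ≠ 2 := by
      intro h2
      exact hu.2 u h2 huv (mem_cn.2 (Or.inl rfl))
    have hadj : T.Adj v u := (mem_cn.1 (hP_sub u hu)).resolve_left huv
    have hu1 : f u ≠ 1 := fun h1 => L_P1 hf hmin hadj.symm h1 hv2
    have := hf.1 u
    omega
  -- a non-private vertex in the closed neighbourhood has another dominator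
  have hnotP : ∀ x, x ∈ closedNbhd T v → x ∉ PV → (f x = 2 → x = v) →
      ∃ w, T.Adj x w ∧ f w = 2 ∧ w ≠ v := by
    intro x hxN hxP hx2
    have h1 : ¬ (∀ v' ∈ {x : V | f x = 2}, v' ≠ v → x ∉ closedNbhd T v') :=
      fun hall => hxP ⟨hxN, hall⟩
    push_neg at h1
    obtain ⟨w, hw2, hwv, hxw⟩ := h1
    have hxw' : T.Adj w x := by
      rcases mem_cn.1 hxw with h | h
      · exfalso
        have hx2' : x = v := hx2 (by rw [h]; exact hw2)
        exact hwv (h.symm.trans hx2')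
      · exact h
    exact ⟨w, hxw'.symm, hw2, hwv⟩
  -- value bounds
  have hf2 := hf.1
  -- Case analysis on the size of PV
  by_cases hPcard : PV.ncard ≤ 1
  · rcases (Set.ncard_le_one_iff_eq (Set.toFinite _)).1 hPcard with hemp | ⟨u0, hu0⟩
    · -- PV = ∅ : reduce f v to 0
      have hvP : v ∉ PV := by rw [hemp]; exact Set.notMem_empty v
      obtain ⟨w, hadjvw, hw2, hwv⟩ := hnotP v (mem_cn.2 (Or.inl rfl)) hvP (fun _ => rfl)
      set g : V → ℕ := Function.update f v 0 with hgdef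
      have hgv : g v = 0 := Function.update_self v 0 f
      have hgoff : ∀ x, x ≠ v → g x = f x := fun x hx => Function.update_of_ne hx 0 f
      have hgRD : IsRomanDominating T g := by
        constructor
        · intro x
          by_cases hx : x = v
          · rw [hx, hgv]; omega
          · rw [hgoff x hx]; exact hf2 x
        · intro x hx
          by_cases hxv : x = v
          · subst hxv
            exact ⟨w, hadjvw, by rw [hgoff w hwv]; exact hw2⟩
          · have hfx : f x = 0 := by rw [← hgoff x hxv]; exact hx
            obtain ⟨u, hu, hu2⟩ := hf.2 x hfx
            by_cases huv : u = v
            · subst huv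
              have hxN : x ∈ closedNbhd T u := mem_cn.2 (Or.inr hu.symm)
              have hxP : x ∉ PV := by rw [hemp]; exact Set.notMem_empty x
              obtain ⟨w', hw', hw'2, hw'v⟩ := hnotP x hxN hxP (fun h2 => absurd h2 (by omega))
              exact ⟨w', hw', by rw [hgoff w' hw'v]; exact hw'2⟩
            · exact ⟨u, hu, by rw [hgoff u huv]; exact hu2⟩
      have hKK : KK hT r g < KK hT r f := by
        apply KK_lt hT r hf2 hgRD.1 {v} (fun x hx => hgoff x (by simpa using hx))
        left
        rw [Finset.sum_singleton, Finset.sum_singleton, hgv, hv2]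
        omega
      exact absurd (hmin g hgRD) (not_le.2 hKK)
    · by_cases hu0v : u0 = v
      · -- PV = {v} : reduce f v to 1
        subst hu0v
        set g : V → ℕ := Function.update f u0 1 with hgdef
        have hgv : g u0 = 1 := Function.update_self u0 1 f
        have hgoff : ∀ x, x ≠ u0 → g x = f x := fun x hx => Function.update_of_ne hx 1 f
        have hgRD : IsRomanDominating T g := by
          constructor
          · intro x
            by_cases hx : x = u0
            · rw [hx, hgv]; omega
            · rw [hgoff x hx]; exact hf2 x
          · intro x hx
            by_cases hxv : x = u0
            · rw [hxv, hgv] at hx; omega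
            · have hfx : f x = 0 := by rw [← hgoff x hxv]; exact hx
              obtain ⟨u, hu, hu2⟩ := hf.2 x hfx
              by_cases huv : u = u0
              · subst huv
                have hxN : x ∈ closedNbhd T u := mem_cn.2 (Or.inr hu.symm)
                have hxP : x ∉ PV := by rw [hu0]; simpa using hxv
                obtain ⟨w', hw', hw'2, hw'v⟩ := hnotP x hxN hxP (fun h2 => absurd h2 (by omega))
                exact ⟨w', hw', by rw [hgoff w' hw'v]; exact hw'2⟩
              · exact ⟨u, hu, by rw [hgoff u huv]; exact hu2⟩
        have hKK : KK hT r g < KK hT r f := by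
          apply KK_lt hT r hf2 hgRD.1 {u0} (fun x hx => hgoff x (by simpa using hx))
          left
          rw [Finset.sum_singleton, Finset.sum_singleton, hgv, hv2]
          omega
        exact absurd (hmin g hgRD) (not_le.2 hKK)
      · -- PV = {u0}, u0 ≠ v : set f v = 0, f u0 = 1
        have hu0P : u0 ∈ PV := by rw [hu0]; rfl
        have hfu0 : f u0 = 0 := hP0 u0 hu0P hu0v
        have hvP : v ∉ PV := by rw [hu0]; simpa using (Ne.symm hu0v)
        obtain ⟨w, hadjvw, hw2, hwv⟩ := hnotP v (mem_cn.2 (Or.inl rfl)) hvP (fun _ => rfl)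
        have hwu0 : w ≠ u0 := fun h => by rw [h, hfu0] at hw2; omega
        have hu0vne : u0 ≠ v := hu0v
        set g : V → ℕ := Function.update (Function.update f v 0) u0 1 with hgdef
        have hgu0 : g u0 = 1 := Function.update_self u0 1 _
        have hgv : g v = 0 := by
          rw [hgdef, Function.update_of_ne (Ne.symm hu0vne) 1 _]
          exact Function.update_self v 0 f
        have hgoff : ∀ x, x ≠ v → x ≠ u0 → g x = f x := fun x hxv hxu => by
          rw [hgdef, Function.update_of_ne hxu 1 _, Function.update_of_ne hxv 0 f]
        have hgRD : IsRomanDominating T g := by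
          constructor
          · intro x
            by_cases h1 : x = u0
            · rw [h1, hgu0]; omega
            by_cases h2 : x = v
            · rw [h2, hgv]; omega
            · rw [hgoff x h2 h1]; exact hf2 x
          · intro x hx
            by_cases h1 : x = u0
            · rw [h1, hgu0] at hx; omega
            by_cases h2 : x = v
            · subst h2
              exact ⟨w, hadjvw, by rw [hgoff w hwv hwu0]; exact hw2⟩
            · have hfx : f x = 0 := by rw [← hgoff x h2 h1]; exact hx
              obtain ⟨u, hu, hu2⟩ := hf.2 x hfx
              have huu0 : u ≠ u0 := fun h => by rw [h, hfu0] at hu2; omega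
              by_cases huv : u = v
              · subst huv
                have hxN : x ∈ closedNbhd T u := mem_cn.2 (Or.inr hu.symm)
                have hxP : x ∉ PV := by rw [hu0]; simpa using h1
                obtain ⟨w', hw', hw'2, hw'v⟩ := hnotP x hxN hxP (fun h2 => absurd h2 (by omega))
                have hw'u0 : w' ≠ u0 := fun h => by rw [h, hfu0] at hw'2; omega
                exact ⟨w', hw', by rw [hgoff w' hw'v hw'u0]; exact hw'2⟩
              · exact ⟨u, hu, by rw [hgoff u huv huu0]; exact hu2⟩
        have hKK : KK hT r g < KK hT r f := by
          apply KK_lt hT r hf2 hgRD.1 {v, u0}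
            (fun x hx => by
              simp only [Finset.mem_insert, Finset.mem_singleton, not_or] at hx
              exact hgoff x hx.1 hx.2)
          left
          rw [sum_pair (Ne.symm hu0vne), sum_pair (Ne.symm hu0vne), hgv, hgu0, hv2, hfu0]
          omega
        exact absurd (hmin g hgRD) (not_le.2 hKK)
  · -- PV has at least two elements; exactly one of them is outside the subtree
    push_neg at hPcard
    obtain ⟨a, b, haP, hbP, habne⟩ := (Set.one_lt_ncard_iff (Set.toFinite _)).1 hPcard
    have hout : ∃ p ∈ PV, p ∉ subtreeSet T r v := by
      by_contra hno
      push_neg at hno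
      have : PV ∩ subtreeSet T r v = PV := Set.inter_eq_self_of_subset_left hno
      rw [this] at hAcard
      omega
    obtain ⟨p, hpP, hpT⟩ := hout
    have hpv : p ≠ v := fun h => hpT (by rw [h]; exact self_mem_subtreeSet r v)
    have hadjvp : T.Adj v p := (mem_cn.1 (hP_sub p hpP)).resolve_left hpv
    have hdp := dpt_parent hT hadjvp hpT
    have hfp : f p = 0 := hP0 p hpP hpv
    -- uniqueness of the outside neighbour
    have houtu : ∀ u, T.Adj v u → u ∉ subtreeSet T r v → u = p := by
      intro u hadju huT
      have hdu := dpt_parent hT hadju huT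
      exact second_unique hT hdu.1 hdp.1
    -- every member of PV other than p is in the subtree
    have hPin : ∀ u ∈ PV, u ≠ p → u ∈ PV ∩ subtreeSet T r v := by
      intro u hu hup
      refine ⟨hu, ?_⟩
      by_contra huT
      by_cases huv : u = v
      · exact huT (by rw [huv]; exact self_mem_subtreeSet r v)
      · exact hup (houtu u ((mem_cn.1 (hP_sub u hu)).resolve_left huv) huT)
    -- the subtree part of PV is a singleton {x0}
    have hAne : (PV ∩ subtreeSet T r v).Nonempty := by
      by_cases hap : a = p
      · exact ⟨b, hPin b hbP (fun h => habne (hap ▸ h ▸ rfl))⟩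
      · exact ⟨a, hPin a haP hap⟩
    obtain ⟨x0, hx0⟩ := hAne
    have hA1 : ∀ y ∈ PV ∩ subtreeSet T r v, y = x0 :=
      fun y hy => (Set.ncard_le_one_iff (Set.toFinite _)).1 hAcard hy hx0
    have hx0P : x0 ∈ PV := hx0.1
    have hx0T : x0 ∈ subtreeSet T r v := hx0.2
    have hx0p : x0 ≠ p := fun h => hpT (h ▸ hx0T)
    have hPV_sub : PV ⊆ {p, x0} := by
      intro u hu
      by_cases hup : u = p
      · exact Or.inl hup
      · exact Or.inr (hA1 u (hPin u hu hup))
    by_cases hx0v : x0 = v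
    · -- E5 : privates are {p, v}; move the 2 to the parent
      subst hx0v
      set g : V → ℕ := Function.update (Function.update f x0 0) p 2 with hgdef
      have hgp : g p = 2 := Function.update_self p 2 _
      have hgv : g x0 = 0 := by
        rw [hgdef, Function.update_of_ne (Ne.symm hpv) 2 _]
        exact Function.update_self x0 0 f
      have hgoff : ∀ x, x ≠ x0 → x ≠ p → g x = f x := fun x hxv hxp => by
        rw [hgdef, Function.update_of_ne hxp 2 _, Function.update_of_ne hxv 0 f]
      have hgRD : IsRomanDominating T g := by
        constructor
        · intro x
          by_cases h1 : x = p
          · rw [h1, hgp]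
          by_cases h2 : x = x0
          · rw [h2, hgv]; omega
          · rw [hgoff x h2 h1]; exact hf2 x
        · intro x hx
          by_cases h1 : x = p
          · rw [h1, hgp] at hx; omega
          by_cases h2 : x = x0
          · exact ⟨p, (h2 ▸ hadjvp), hgp⟩
          · have hfx : f x = 0 := by rw [← hgoff x h2 h1]; exact hx
            obtain ⟨u, hu, hu2⟩ := hf.2 x hfx
            have hup : u ≠ p := fun h => by rw [h, hfp] at hu2; omega
            by_cases huv : u = x0
            · subst huv
              have hxN : x ∈ closedNbhd T u := mem_cn.2 (Or.inr hu.symm)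
              have hxP : x ∉ PV := fun hmem => by
                rcases hPV_sub hmem with h | h
                · exact h1 h
                · exact h2 h
              obtain ⟨w', hw', hw'2, hw'v⟩ := hnotP x hxN hxP (fun h2 => absurd h2 (by omega))
              have hw'p : w' ≠ p := fun h => by rw [h, hfp] at hw'2; omega
              exact ⟨w', hw', by rw [hgoff w' hw'v hw'p]; exact hw'2⟩
            · exact ⟨u, hu, by rw [hgoff u huv hup]; exact hu2⟩
      have hKK : KK hT r g < KK hT r f := by
        apply KK_lt hT r hf2 hgRD.1 {x0, p}
          (fun x hx => by
            simp only [Finset.mem_insert, Finset.mem_singleton, not_or] at hx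
            exact hgoff x hx.1 hx.2)
        rw [sum_pair (Ne.symm hpv), sum_pair (Ne.symm hpv), sum_pair (Ne.symm hpv),
          sum_pair (Ne.symm hpv)]
        right
        constructor
        · rw [hgv, hgp, hv2, hfp]
        · left
          rw [hgv, hgp, hv2, hfp, hdp.2]
          omega
      exact absurd (hmin g hgRD) (not_le.2 hKK)
    · -- E6 : privates are {p, c} with c a child: v := 0, p := 1, c := 1
      have hadjvc : T.Adj v x0 := (mem_cn.1 (hP_sub x0 hx0P)).resolve_left hx0v
      have hdc := dpt_child hT hadjvc hx0T
      have hfc : f x0 = 0 := hP0 x0 hx0P hx0v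
      have hvP : v ∉ PV := fun hmem => by
        rcases hPV_sub hmem with h | h
        · exact hpv h.symm
        · exact hx0v h.symm
      obtain ⟨w, hadjvw, hw2, hwv⟩ := hnotP v (mem_cn.2 (Or.inl rfl)) hvP (fun _ => rfl)
      have hwp : w ≠ p := fun h => by rw [h, hfp] at hw2; omega
      have hwc : w ≠ x0 := fun h => by rw [h, hfc] at hw2; omega
      have hvp : v ≠ p := Ne.symm hpv
      have hvc : v ≠ x0 := Ne.symm hx0v
      have hpc : p ≠ x0 := Ne.symm hx0p
      set g : V → ℕ := Function.update (Function.update (Function.update f v 0) p 1) x0 1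
        with hgdef
      have hgc : g x0 = 1 := Function.update_self x0 1 _
      have hgp : g p = 1 := by
        rw [hgdef, Function.update_of_ne hpc 1 _]
        exact Function.update_self p 1 _
      have hgv : g v = 0 := by
        rw [hgdef, Function.update_of_ne hvc 1 _, Function.update_of_ne hvp 1 _]
        exact Function.update_self v 0 f
      have hgoff : ∀ x, x ≠ v → x ≠ p → x ≠ x0 → g x = f x := fun x h1 h2 h3 => by
        rw [hgdef, Function.update_of_ne h3 1 _, Function.update_of_ne h2 1 _,
          Function.update_of_ne h1 0 f]
      have hgRD : IsRomanDominating T g := by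
        constructor
        · intro x
          by_cases h1 : x = x0
          · rw [h1, hgc]; omega
          by_cases h2 : x = p
          · rw [h2, hgp]; omega
          by_cases h3 : x = v
          · rw [h3, hgv]; omega
          · rw [hgoff x h3 h2 h1]; exact hf2 x
        · intro x hx
          by_cases h1 : x = x0
          · rw [h1, hgc] at hx; omega
          by_cases h2 : x = p
          · rw [h2, hgp] at hx; omega
          by_cases h3 : x = v
          · subst h3
            exact ⟨w, hadjvw, by rw [hgoff w hwv hwp hwc]; exact hw2⟩
          · have hfx : f x = 0 := by rw [← hgoff x h3 h2 h1]; exact hx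
            obtain ⟨u, hu, hu2⟩ := hf.2 x hfx
            have hup : u ≠ p := fun h => by rw [h, hfp] at hu2; omega
            have huc : u ≠ x0 := fun h => by rw [h, hfc] at hu2; omega
            by_cases huv : u = v
            · subst huv
              have hxN : x ∈ closedNbhd T u := mem_cn.2 (Or.inr hu.symm)
              have hxP : x ∉ PV := fun hmem => by
                rcases hPV_sub hmem with h | h
                · exact h2 h
                · exact h1 h
              obtain ⟨w', hw', hw'2, hw'v⟩ := hnotP x hxN hxP (fun h2 => absurd h2 (by omega))
              have hw'p : w' ≠ p := fun h => by rw [h, hfp] at hw'2; omega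
              have hw'c : w' ≠ x0 := fun h => by rw [h, hfc] at hw'2; omega
              exact ⟨w', hw', by rw [hgoff w' hw'v hw'p hw'c]; exact hw'2⟩
            · exact ⟨u, hu, by rw [hgoff u huv hup huc]; exact hu2⟩
      have hKK : KK hT r g < KK hT r f := by
        apply KK_lt hT r hf2 hgRD.1 {v, p, x0}
          (fun x hx => by
            simp only [Finset.mem_insert, Finset.mem_singleton, not_or] at hx
            exact hgoff x hx.1 hx.2.1 hx.2.2)
        rw [sum_triple hvp hvc hpc, sum_triple hvp hvc hpc,
          sum_triple hvp hvc hpc, sum_triple hvp hvc hpc,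
          sum_triple hvp hvc hpc, sum_triple hvp hvc hpc]
        right
        refine ⟨by rw [hgv, hgp, hgc, hv2, hfp, hfc], ?_⟩
        right
        constructor
        · rw [hgv, hgp, hgc, hv2, hfp, hfc, hdc.2, hdp.2]
          ring
        · simp only [hgv, hgp, hgc, hv2, hfp, hfc]
          norm_num
      exact absurd (hmin g hgRD) (not_le.2 hKK)


/-- A non-private vertex in a closed neighbourhood has another dominator. -/
lemma L_nonpriv {c x : V} (hxN : x ∈ closedNbhd T c)
    (hxP : ¬ IsPrivateNbr T {y : V | f y = 2} x c) (hx2 : f x = 2 → x = c) :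
    ∃ w, T.Adj x w ∧ f w = 2 ∧ w ≠ c := by
  have h1 : ¬ (∀ v' ∈ {y : V | f y = 2}, v' ≠ c → x ∉ closedNbhd T v') :=
    fun hall => hxP ⟨hxN, hall⟩
  push_neg at h1
  obtain ⟨w, hw2, hwc, hxw⟩ := h1
  have hxw' : T.Adj w x := by
    rcases mem_cn.1 hxw with h | h
    · exfalso
      exact hwc (h.symm.trans (hx2 (by rw [h]; exact hw2)))
    · exact h
  exact ⟨w, hxw'.symm, hw2, hwc⟩

include hT in
lemma L_common {v c1 c2 x : V} (hadj1 : T.Adj v c1) (hadj2 : T.Adj v c2)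
    (h1T : c1 ∈ subtreeSet T r v) (h2T : c2 ∈ subtreeSet T r v) (h12 : c1 ≠ c2)
    (hx1 : T.Adj c1 x) (hx2 : T.Adj c2 x) : x = v := by
  have e1 := (dpt_child hT hadj1 h1T).1
  have e2 := (dpt_child hT hadj2 h2T).1
  by_cases hxT : x ∈ subtreeSet T r c1
  · have ex := (dpt_child hT hx1 hxT).1
    by_cases hxT2 : x ∈ subtreeSet T r c2
    · have ex2 := (dpt_child hT hx2 hxT2).1
      exact absurd (second_unique hT ex ex2) h12
    · have e := (dpt_parent hT hx2 hxT2).1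
      exact second_unique hT e e2
  · have e := (dpt_parent hT hx1 hxT).1
    exact second_unique hT e e1

/-- Exchange for condition (3), one child of value 1 and one of value 2 with a unique
external private neighbour. -/
lemma mixedAB (hf : IsRomanDominating T f)
    (hmin : ∀ g : V → ℕ, IsRomanDominating T g → KK hT r f ≤ KK hT r g)
    {v c1 c2 w0 : V} (hadj1 : T.Adj v c1) (hadj2 : T.Adj v c2)
    (h1T : c1 ∈ subtreeSet T r v) (h2T : c2 ∈ subtreeSet T r v) (h12 : c1 ≠ c2)
    (hv0 : f v = 0) (hc1 : f c1 = 1) (hc2 : f c2 = 2)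
    (hE : {w : V | IsPrivateNbr T {x : V | f x = 2} w c2 ∧ f w ≠ 2} = {w0})
    (hfw0 : f w0 = 0)
    (hw0cases : w0 = v ∨ (T.Adj c2 w0 ∧ w0 ∈ subtreeSet T r c2 ∧
      dpt hT r w0 = dpt hT r v + 2)) : False := by
  have hf2 := hf.1
  have h1v : c1 ≠ v := hadj1.ne'
  have h2v : c2 ≠ v := hadj2.ne'
  have hd1 : dpt hT r c1 = dpt hT r v + 1 := (dpt_child hT hadj1 h1T).2
  have hd2 : dpt hT r c2 = dpt hT r v + 1 := (dpt_child hT hadj2 h2T).2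
  -- helper: a zero vertex adjacent to c2, other than w0, has a dominator other than c2
  have hrep : ∀ x, f x = 0 → x ≠ w0 → T.Adj x c2 →
      ∃ w', T.Adj x w' ∧ f w' = 2 ∧ w' ≠ c2 := by
    intro x hx0 hxw0 hadjx
    have hxE : x ∉ {w : V | IsPrivateNbr T {x : V | f x = 2} w c2 ∧ f w ≠ 2} := by
      rw [hE]; simpa using hxw0
    have hnp : ¬ IsPrivateNbr T {y : V | f y = 2} x c2 := fun hp => hxE ⟨hp, by omega⟩
    exact L_nonpriv (mem_cn.2 (Or.inr hadjx.symm)) hnp (fun h => absurd h (by omega))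
  rcases hw0cases with hw0v | ⟨hadjcw0, hw0T, hdw0⟩
  · -- w0 = v : weight decreases by 1
    subst hw0v
    set g : V → ℕ := Function.update (Function.update (Function.update f w0 2) c1 0) c2 0
      with hgdef
    have hgc2 : g c2 = 0 := Function.update_self c2 0 _
    have hgc1 : g c1 = 0 := by
      rw [hgdef, Function.update_of_ne h12 0 _]; exact Function.update_self c1 0 _
    have hgv : g w0 = 2 := by
      rw [hgdef, Function.update_of_ne (Ne.symm h2v) 0 _,
        Function.update_of_ne (Ne.symm h1v) 0 _]
      exact Function.update_self w0 2 f
    have hgoff : ∀ x, x ≠ w0 → x ≠ c1 → x ≠ c2 → g x = f x := fun x hxv hx1 hx2 => by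
      rw [hgdef, Function.update_of_ne hx2 0 _, Function.update_of_ne hx1 0 _,
        Function.update_of_ne hxv 2 f]
    have hgRD : IsRomanDominating T g := by
      constructor
      · intro x
        by_cases e1 : x = c2
        · rw [e1, hgc2]; omega
        by_cases e2 : x = c1
        · rw [e2, hgc1]; omega
        by_cases e3 : x = w0
        · rw [e3, hgv]
        · rw [hgoff x e3 e2 e1]; exact hf2 x
      · intro x hx
        by_cases e1 : x = c2
        · exact ⟨w0, (e1 ▸ hadj2.symm), hgv⟩
        by_cases e2 : x = c1
        · exact ⟨w0, (e2 ▸ hadj1.symm), hgv⟩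
        by_cases e3 : x = w0
        · rw [e3, hgv] at hx; omega
        · have hfx : f x = 0 := by rw [← hgoff x e3 e2 e1]; exact hx
          obtain ⟨u, hu, hu2⟩ := hf.2 x hfx
          have hu1 : u ≠ c1 := fun h => by rw [h, hc1] at hu2; omega
          have huv : u ≠ w0 := fun h => by rw [h, hfw0] at hu2; omega
          by_cases hu2c : u = c2
          · subst hu2c
            obtain ⟨w', hw', hw'2, hw'c2⟩ := hrep x hfx e3 hu
            have hw'v : w' ≠ w0 := fun h => by rw [h, hfw0] at hw'2; omega
            have hw'1 : w' ≠ c1 := fun h => by rw [h, hc1] at hw'2; omega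
            exact ⟨w', hw', by rw [hgoff w' hw'v hw'1 hw'c2]; exact hw'2⟩
          · exact ⟨u, hu, by rw [hgoff u huv hu1 hu2c]; exact hu2⟩
    have hKK : KK hT r g < KK hT r f := by
      apply KK_lt hT r hf2 hgRD.1 {w0, c1, c2}
        (fun x hx => by
          simp only [Finset.mem_insert, Finset.mem_singleton, not_or] at hx
          exact hgoff x hx.1 hx.2.1 hx.2.2)
      left
      rw [sum_triple (Ne.symm h1v) (Ne.symm h2v) h12, sum_triple (Ne.symm h1v) (Ne.symm h2v) h12,
        hgv, hgc1, hgc2, hfw0, hc1, hc2]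
      omega
    exact absurd (hmin g hgRD) (not_le.2 hKK)
  · -- w0 is a child of c2
    have hw0c2 : w0 ≠ c2 := fun h => by rw [h, hc2] at hfw0; omega
    have hw0v : w0 ≠ v := by
      intro h
      rw [h] at hdw0
      omega
    have hw0c1 : c1 ≠ w0 := by
      intro h
      subst h
      have e1 := (dpt_child hT hadj1 h1T).1
      have e2 := (dpt_child hT hadjcw0 hw0T).1
      exact hadj2.ne (second_unique hT e1 e2)
    set g : V → ℕ := Function.update (Function.update (Function.update
      (Function.update f v 2) c1 0) c2 0) w0 1 with hgdef
    have hgw0 : g w0 = 1 := Function.update_self w0 1 _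
    have hgc2 : g c2 = 0 := by
      rw [hgdef, Function.update_of_ne (Ne.symm hw0c2) 1 _]
      exact Function.update_self c2 0 _
    have hgc1 : g c1 = 0 := by
      rw [hgdef, Function.update_of_ne hw0c1 1 _, Function.update_of_ne h12 0 _]
      exact Function.update_self c1 0 _
    have hgv : g v = 2 := by
      rw [hgdef, Function.update_of_ne (Ne.symm hw0v) 1 _,
        Function.update_of_ne (Ne.symm h2v) 0 _, Function.update_of_ne (Ne.symm h1v) 0 _]
      exact Function.update_self v 2 f
    have hgoff : ∀ x, x ≠ v → x ≠ c1 → x ≠ c2 → x ≠ w0 → g x = f x := fun x e1 e2 e3 e4 => by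
      rw [hgdef, Function.update_of_ne e4 1 _, Function.update_of_ne e3 0 _,
        Function.update_of_ne e2 0 _, Function.update_of_ne e1 2 f]
    have hgRD : IsRomanDominating T g := by
      constructor
      · intro x
        by_cases e4 : x = w0
        · rw [e4, hgw0]; omega
        by_cases e1 : x = c2
        · rw [e1, hgc2]; omega
        by_cases e2 : x = c1
        · rw [e2, hgc1]; omega
        by_cases e3 : x = v
        · rw [e3, hgv]
        · rw [hgoff x e3 e2 e1 e4]; exact hf2 x
      · intro x hx
        by_cases e4 : x = w0
        · rw [e4, hgw0] at hx; omega
        by_cases e1 : x = c2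
        · exact ⟨v, (e1 ▸ hadj2.symm), hgv⟩
        by_cases e2 : x = c1
        · exact ⟨v, (e2 ▸ hadj1.symm), hgv⟩
        by_cases e3 : x = v
        · rw [e3, hgv] at hx; omega
        · have hfx : f x = 0 := by rw [← hgoff x e3 e2 e1 e4]; exact hx
          obtain ⟨u, hu, hu2⟩ := hf.2 x hfx
          have hu1 : u ≠ c1 := fun h => by rw [h, hc1] at hu2; omega
          have huv : u ≠ v := fun h => by rw [h, hv0] at hu2; omega
          have huw0 : u ≠ w0 := fun h => by rw [h, hfw0] at hu2; omega
          by_cases hu2c : u = c2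
          · subst hu2c
            obtain ⟨w', hw', hw'2, hw'c2⟩ := hrep x hfx e4 hu
            have p1 : w' ≠ v := fun h => by rw [h, hv0] at hw'2; omega
            have p2 : w' ≠ c1 := fun h => by rw [h, hc1] at hw'2; omega
            have p3 : w' ≠ w0 := fun h => by rw [h, hfw0] at hw'2; omega
            exact ⟨w', hw', by rw [hgoff w' p1 p2 hw'c2 p3]; exact hw'2⟩
          · exact ⟨u, hu, by rw [hgoff u huv hu1 hu2c huw0]; exact hu2⟩
    have hKK : KK hT r g < KK hT r f := by
      apply KK_lt hT r hf2 hgRD.1 {v, c1, c2, w0}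
        (fun x hx => by
          simp only [Finset.mem_insert, Finset.mem_singleton, not_or] at hx
          exact hgoff x hx.1 hx.2.1 hx.2.2.1 hx.2.2.2)
      have q12 : c1 ≠ c2 := h12
      have q1w : c1 ≠ w0 := hw0c1
      have q2w : c2 ≠ w0 := (Ne.symm hw0c2)
      rw [sum_quad (Ne.symm h1v) (Ne.symm h2v) (Ne.symm hw0v) q12 q1w q2w,
        sum_quad (Ne.symm h1v) (Ne.symm h2v) (Ne.symm hw0v) q12 q1w q2w,
        sum_quad (Ne.symm h1v) (Ne.symm h2v) (Ne.symm hw0v) q12 q1w q2w,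
        sum_quad (Ne.symm h1v) (Ne.symm h2v) (Ne.symm hw0v) q12 q1w q2w]
      right
      constructor
      · rw [hgv, hgc1, hgc2, hgw0, hv0, hc1, hc2, hfw0]
      · left
        rw [hgv, hgc1, hgc2, hgw0, hv0, hc1, hc2, hfw0, hd1, hd2, hdw0]
        omega
    exact absurd (hmin g hgRD) (not_le.2 hKK)

/-- Exchange for condition (3), two children of value 2 each with a unique external
private neighbour. -/
lemma bothB (hf : IsRomanDominating T f)
    (hmin : ∀ g : V → ℕ, IsRomanDominating T g → KK hT r f ≤ KK hT r g)
    {v c1 c2 w1 w2 : V} (hadj1 : T.Adj v c1) (hadj2 : T.Adj v c2)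
    (h1T : c1 ∈ subtreeSet T r v) (h2T : c2 ∈ subtreeSet T r v) (h12 : c1 ≠ c2)
    (hv0 : f v = 0) (hc1 : f c1 = 2) (hc2 : f c2 = 2)
    (hE1 : {w : V | IsPrivateNbr T {x : V | f x = 2} w c1 ∧ f w ≠ 2} = {w1})
    (hE2 : {w : V | IsPrivateNbr T {x : V | f x = 2} w c2 ∧ f w ≠ 2} = {w2})
    (hB1 : f w1 = 0 ∧ (w1 = v ∨ (T.Adj c1 w1 ∧ w1 ∈ subtreeSet T r c1 ∧
      dpt hT r w1 = dpt hT r v + 2)))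
    (hB2 : f w2 = 0 ∧ (w2 = v ∨ (T.Adj c2 w2 ∧ w2 ∈ subtreeSet T r c2 ∧
      dpt hT r w2 = dpt hT r v + 2))) : False := by
  have hf2 := hf.1
  have h1v : c1 ≠ v := hadj1.ne'
  have h2v : c2 ≠ v := hadj2.ne'
  have hd1 : dpt hT r c1 = dpt hT r v + 1 := (dpt_child hT hadj1 h1T).2
  have hd2 : dpt hT r c2 = dpt hT r v + 1 := (dpt_child hT hadj2 h2T).2
  -- v is not a private neighbour of either child
  have hw1v : w1 ≠ v := by
    intro h
    have hP : IsPrivateNbr T {x : V | f x = 2} w1 c1 := by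
      have : w1 ∈ {w : V | IsPrivateNbr T {x : V | f x = 2} w c1 ∧ f w ≠ 2} := by
        rw [hE1]; rfl
      exact this.1
    exact hP.2 c2 hc2 (Ne.symm h12) (mem_cn.2 (Or.inr (by rw [h]; exact hadj2.symm)))
  have hw2v : w2 ≠ v := by
    intro h
    have hP : IsPrivateNbr T {x : V | f x = 2} w2 c2 := by
      have : w2 ∈ {w : V | IsPrivateNbr T {x : V | f x = 2} w c2 ∧ f w ≠ 2} := by
        rw [hE2]; rfl
      exact this.1
    exact hP.2 c1 hc1 h12 (mem_cn.2 (Or.inr (by rw [h]; exact hadj1.symm)))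
  obtain ⟨hfw1, hw1c⟩ := hB1
  obtain ⟨hfw2, hw2c⟩ := hB2
  rcases hw1c with h | hw1c
  · exact absurd h hw1v
  rcases hw2c with h | hw2c
  · exact absurd h hw2v
  obtain ⟨hadjc1w1, hw1T, hdw1⟩ := hw1c
  obtain ⟨hadjc2w2, hw2T, hdw2⟩ := hw2c
  have hw12 : w1 ≠ w2 := by
    intro h
    subst h
    have e1 := (dpt_child hT hadjc1w1 hw1T).1
    have e2 := (dpt_child hT hadjc2w2 hw2T).1
    exact h12 (second_unique hT e1 e2)
  have hw1c1 : w1 ≠ c1 := fun h => by rw [h, hc1] at hfw1; omega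
  have hw1c2 : w1 ≠ c2 := fun h => by rw [h, hc2] at hfw1; omega
  have hw2c1 : w2 ≠ c1 := fun h => by rw [h, hc1] at hfw2; omega
  have hw2c2 : w2 ≠ c2 := fun h => by rw [h, hc2] at hfw2; omega
  -- repair helpers
  have hrep : ∀ (c cw : V), T.Adj v c → f c = 2 →
      ({w : V | IsPrivateNbr T {x : V | f x = 2} w c ∧ f w ≠ 2} = {cw}) →
      ∀ x, f x = 0 → x ≠ cw → T.Adj x c →
      ∃ w', T.Adj x w' ∧ f w' = 2 ∧ w' ≠ c := by
    intro c cw _ hcval hEc x hx0 hxcw hadjx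
    have hxE : x ∉ {w : V | IsPrivateNbr T {x : V | f x = 2} w c ∧ f w ≠ 2} := by
      rw [hEc]; simpa using hxcw
    have hnp : ¬ IsPrivateNbr T {y : V | f y = 2} x c := fun hp => hxE ⟨hp, by omega⟩
    exact L_nonpriv (mem_cn.2 (Or.inr hadjx.symm)) hnp (fun h => absurd h (by omega))
  set g : V → ℕ := Function.update (Function.update (Function.update
    (Function.update (Function.update f v 2) c1 0) c2 0) w1 1) w2 1 with hgdef
  have hgw2 : g w2 = 1 := Function.update_self w2 1 _
  have hgw1 : g w1 = 1 := by
    rw [hgdef, Function.update_of_ne hw12 1 _]; exact Function.update_self w1 1 _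
  have hgc2 : g c2 = 0 := by
    rw [hgdef, Function.update_of_ne (Ne.symm hw2c2) 1 _, Function.update_of_ne (Ne.symm hw1c2) 1 _]
    exact Function.update_self c2 0 _
  have hgc1 : g c1 = 0 := by
    rw [hgdef, Function.update_of_ne (Ne.symm hw2c1) 1 _, Function.update_of_ne (Ne.symm hw1c1) 1 _,
      Function.update_of_ne h12 0 _]
    exact Function.update_self c1 0 _
  have hgv : g v = 2 := by
    rw [hgdef, Function.update_of_ne (Ne.symm hw2v) 1 _, Function.update_of_ne (Ne.symm hw1v) 1 _,
      Function.update_of_ne (Ne.symm h2v) 0 _, Function.update_of_ne (Ne.symm h1v) 0 _]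
    exact Function.update_self v 2 f
  have hgoff : ∀ x, x ≠ v → x ≠ c1 → x ≠ c2 → x ≠ w1 → x ≠ w2 → g x = f x :=
    fun x e1 e2 e3 e4 e5 => by
      rw [hgdef, Function.update_of_ne e5 1 _, Function.update_of_ne e4 1 _,
        Function.update_of_ne e3 0 _, Function.update_of_ne e2 0 _,
        Function.update_of_ne e1 2 f]
  have hgRD : IsRomanDominating T g := by
    constructor
    · intro x
      by_cases e5 : x = w2
      · rw [e5, hgw2]; omega
      by_cases e4 : x = w1
      · rw [e4, hgw1]; omega
      by_cases e1 : x = c2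
      · rw [e1, hgc2]; omega
      by_cases e2 : x = c1
      · rw [e2, hgc1]; omega
      by_cases e3 : x = v
      · rw [e3, hgv]
      · rw [hgoff x e3 e2 e1 e4 e5]; exact hf2 x
    · intro x hx
      by_cases e5 : x = w2
      · rw [e5, hgw2] at hx; omega
      by_cases e4 : x = w1
      · rw [e4, hgw1] at hx; omega
      by_cases e1 : x = c2
      · exact ⟨v, (e1 ▸ hadj2.symm), hgv⟩
      by_cases e2 : x = c1
      · exact ⟨v, (e2 ▸ hadj1.symm), hgv⟩
      by_cases e3 : x = v
      · rw [e3, hgv] at hx; omega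
      · have hfx : f x = 0 := by rw [← hgoff x e3 e2 e1 e4 e5]; exact hx
        obtain ⟨u, hu, hu2⟩ := hf.2 x hfx
        have huv : u ≠ v := fun h => by rw [h, hv0] at hu2; omega
        have huw1 : u ≠ w1 := fun h => by rw [h, hfw1] at hu2; omega
        have huw2 : u ≠ w2 := fun h => by rw [h, hfw2] at hu2; omega
        by_cases huc1 : u = c1
        · subst huc1
          obtain ⟨w', hw', hw'2, hw'c⟩ := hrep u w1 hadj1 hc1 hE1 x hfx e4 hu
          have p1 : w' ≠ v := fun h => by rw [h, hv0] at hw'2; omega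
          have p4 : w' ≠ w1 := fun h => by rw [h, hfw1] at hw'2; omega
          have p5 : w' ≠ w2 := fun h => by rw [h, hfw2] at hw'2; omega
          by_cases hw'c2 : w' = c2
          · exfalso
            have hxv : x = v := L_common (hT := hT) hadj1 hadj2 h1T h2T h12 hu.symm (hw'c2 ▸ hw').symm
            exact e3 hxv
          · exact ⟨w', hw', by rw [hgoff w' p1 hw'c hw'c2 p4 p5]; exact hw'2⟩
        by_cases huc2 : u = c2
        · subst huc2
          obtain ⟨w', hw', hw'2, hw'c⟩ := hrep u w2 hadj2 hc2 hE2 x hfx e5 hu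
          have p1 : w' ≠ v := fun h => by rw [h, hv0] at hw'2; omega
          have p4 : w' ≠ w1 := fun h => by rw [h, hfw1] at hw'2; omega
          have p5 : w' ≠ w2 := fun h => by rw [h, hfw2] at hw'2; omega
          by_cases hw'c1 : w' = c1
          · exfalso
            have hxv : x = v := L_common (hT := hT) hadj1 hadj2 h1T h2T h12 (hw'c1 ▸ hw').symm hu.symm
            exact e3 hxv
          · exact ⟨w', hw', by rw [hgoff w' p1 hw'c1 hw'c p4 p5]; exact hw'2⟩
        · exact ⟨u, hu, by rw [hgoff u huv huc1 huc2 huw1 huw2]; exact hu2⟩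
  have hKK : KK hT r g < KK hT r f := by
    apply KK_lt hT r hf2 hgRD.1 {v, c1, c2, w1, w2}
      (fun x hx => by
        simp only [Finset.mem_insert, Finset.mem_singleton, not_or] at hx
        exact hgoff x hx.1 hx.2.1 hx.2.2.1 hx.2.2.2.1 hx.2.2.2.2)
    rw [sum_quint (Ne.symm h1v) (Ne.symm h2v) (Ne.symm hw1v) (Ne.symm hw2v) h12
        (Ne.symm hw1c1) (Ne.symm hw2c1) (Ne.symm hw1c2) (Ne.symm hw2c2) hw12,
      sum_quint (Ne.symm h1v) (Ne.symm h2v) (Ne.symm hw1v) (Ne.symm hw2v) h12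
        (Ne.symm hw1c1) (Ne.symm hw2c1) (Ne.symm hw1c2) (Ne.symm hw2c2) hw12,
      sum_quint (Ne.symm h1v) (Ne.symm h2v) (Ne.symm hw1v) (Ne.symm hw2v) h12
        (Ne.symm hw1c1) (Ne.symm hw2c1) (Ne.symm hw1c2) (Ne.symm hw2c2) hw12,
      sum_quint (Ne.symm h1v) (Ne.symm h2v) (Ne.symm hw1v) (Ne.symm hw2v) h12
        (Ne.symm hw1c1) (Ne.symm hw2c1) (Ne.symm hw1c2) (Ne.symm hw2c2) hw12,
      sum_quint (Ne.symm h1v) (Ne.symm h2v) (Ne.symm hw1v) (Ne.symm hw2v) h12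
        (Ne.symm hw1c1) (Ne.symm hw2c1) (Ne.symm hw1c2) (Ne.symm hw2c2) hw12,
      sum_quint (Ne.symm h1v) (Ne.symm h2v) (Ne.symm hw1v) (Ne.symm hw2v) h12
        (Ne.symm hw1c1) (Ne.symm hw2c1) (Ne.symm hw1c2) (Ne.symm hw2c2) hw12]
    right
    refine ⟨by rw [hgv, hgc1, hgc2, hgw1, hgw2, hv0, hc1, hc2, hfw1, hfw2], ?_⟩
    right
    constructor
    · rw [hgv, hgc1, hgc2, hgw1, hgw2, hv0, hc1, hc2, hfw1, hfw2, hd1, hd2, hdw1, hdw2]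
      ring
    · simp only [hgv, hgc1, hgc2, hgw1, hgw2, hv0, hc1, hc2, hfw1, hfw2]
      norm_num
  exact absurd (hmin g hgRD) (not_le.2 hKK)

/-- Condition (3). -/
lemma cond3 (hf : IsRomanDominating T f)
    (hmin : ∀ g : V → ℕ, IsRomanDominating T g → KK hT r f ≤ KK hT r g) (v : V)
    (hv0 : f v = 0) :
    (closedNbhd T v ∩ subtreeSet T r v ∩
      {u : V | f u = 1 ∨ (f u = 2 ∧
        {w : V | IsPrivateNbr T {x : V | f x = 2} w u ∧ f w ≠ 2}.ncard = 1)}).ncard ≤ 1 := by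
  classical
  by_contra h
  push_neg at h
  have hf2 := hf.1
  obtain ⟨a, b, ha, hb, hab⟩ := (Set.one_lt_ncard_iff (Set.toFinite _)).1 h
  -- members of the bad set are children of v
  have hmem : ∀ c : V, (c ∈ closedNbhd T v ∩ subtreeSet T r v ∩
      {u : V | f u = 1 ∨ (f u = 2 ∧
        {w : V | IsPrivateNbr T {x : V | f x = 2} w u ∧ f w ≠ 2}.ncard = 1)}) →
      T.Adj v c ∧ c ∈ subtreeSet T r v ∧ (f c = 1 ∨ (f c = 2 ∧
        {w : V | IsPrivateNbr T {x : V | f x = 2} w c ∧ f w ≠ 2}.ncard = 1)) := by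
    intro c hc
    have hcv : c ≠ v := by
      intro h
      rcases hc.2 with h1 | h1
      · rw [h, hv0] at h1; omega
      · rw [h, hv0] at h1; omega
    exact ⟨(mem_cn.1 hc.1.1).resolve_left hcv, hc.1.2, hc.2⟩
  obtain ⟨hadja, haT, hatype⟩ := hmem a ha
  obtain ⟨hadjb, hbT, hbtype⟩ := hmem b hb
  have hdav : dpt hT r a = dpt hT r v + 1 := (dpt_child hT hadja haT).2
  have hdbv : dpt hT r b = dpt hT r v + 1 := (dpt_child hT hadjb hbT).2
  have hav : a ≠ v := hadja.ne'
  have hbv : b ≠ v := hadjb.ne'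
  -- facts about a type-B child and its unique external private neighbour
  have hBfact : ∀ c w0 : V, T.Adj v c → c ∈ subtreeSet T r v → f c = 2 →
      ({w : V | IsPrivateNbr T {x : V | f x = 2} w c ∧ f w ≠ 2} = {w0}) →
      f w0 = 0 ∧ (w0 = v ∨ (T.Adj c w0 ∧ w0 ∈ subtreeSet T r c ∧
        dpt hT r w0 = dpt hT r v + 2)) := by
    intro c w0 hadjc hcT hc2 hE
    have hw0E : w0 ∈ {w : V | IsPrivateNbr T {x : V | f x = 2} w c ∧ f w ≠ 2} := by
      rw [hE]; rfl
    have hw0c : w0 ≠ c := fun h => hw0E.2 (h ▸ hc2)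
    have hadjcw0 : T.Adj c w0 := (mem_cn.1 hw0E.1.1).resolve_left hw0c
    have hfw0 : f w0 = 0 := by
      have h1 : f w0 ≠ 1 := fun h1 => L_P1 hf hmin hadjcw0.symm h1 hc2
      have := hf2 w0
      have := hw0E.2
      omega
    refine ⟨hfw0, ?_⟩
    by_cases hw0T : w0 ∈ subtreeSet T r c
    · have hd := (dpt_child hT hadjcw0 hw0T).2
      have hdc := (dpt_child hT hadjc hcT).2
      exact Or.inr ⟨hadjcw0, hw0T, by omega⟩
    · have e1 := (dpt_parent hT hadjcw0 hw0T).1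
      have e2 := (dpt_child hT hadjc hcT).1
      exact Or.inl (second_unique hT e1 e2)
  -- case analysis on the types of a and b
  rcases hatype with ha1 | ⟨ha2, haE⟩
  · rcases hbtype with hb1 | ⟨hb2, hbE⟩
    · -- both type A
      exact L_E2 hf hmin hadja hadjb haT hbT hab hv0 ha1 hb1
    · -- a type A, b type B
      obtain ⟨w0, hE⟩ := Set.ncard_eq_one.1 hbE
      obtain ⟨hfw0, hw0cases⟩ := hBfact b w0 hadjb hbT hb2 hE
      exact mixedAB hf hmin hadja hadjb haT hbT hab hv0 ha1 hb2 hE hfw0 hw0cases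
  · rcases hbtype with hb1 | ⟨hb2, hbE⟩
    · -- b type A, a type B
      obtain ⟨w0, hE⟩ := Set.ncard_eq_one.1 haE
      obtain ⟨hfw0, hw0cases⟩ := hBfact a w0 hadja haT ha2 hE
      exact mixedAB hf hmin hadjb hadja hbT haT (Ne.symm hab) hv0 hb1 ha2 hE hfw0 hw0cases
    · -- both type B
      obtain ⟨w1, hE1⟩ := Set.ncard_eq_one.1 haE
      obtain ⟨w2, hE2⟩ := Set.ncard_eq_one.1 hbE
      exact bothB hf hmin hadja hadjb haT hbT hab hv0 ha2 hb2 hE1 hE2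
        (hBfact a w1 hadja haT ha2 hE1) (hBfact b w2 hadjb hbT hb2 hE2)

end Main

end RomanTreeAux

theorem exists_nice_gammaR_function {V : Type*} [Fintype V] (T : SimpleGraph V)
    (hT : T.IsTree) (r : V) :
    ∃ f : V → ℕ, IsRomanDominating T f ∧ ∑ v, f v = romanNumber T ∧
      ∀ v : V,
        (closedNbhd T v ∩ subtreeSet T r v ∩ {u : V | f u = 1}).ncard ≤ 1 ∧
        (f v = 2 → 2 ≤ (closedNbhd T v ∩ subtreeSet T r v ∩
            {u : V | IsPrivateNbr T {x : V | f x = 2} u v}).ncard) ∧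
        (f v = 0 → (closedNbhd T v ∩ subtreeSet T r v ∩
            {u : V | f u = 1 ∨ (f u = 2 ∧
              {w : V | IsPrivateNbr T {x : V | f x = 2} w u ∧ f w ≠ 2}.ncard = 1)}).ncard
          ≤ 1) := by
  classical
  have hSne : {k | ∃ f : V → ℕ, IsRomanDominating T f ∧ RomanTreeAux.KK hT r f = k}.Nonempty := by
    refine ⟨RomanTreeAux.KK hT r (fun _ => 2), fun _ => 2, ⟨fun v => le_refl 2, ?_⟩, rfl⟩
    intro v h
    simp at h
  obtain ⟨f, hf, hfK⟩ := Nat.sInf_mem hSne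
  have hmin : ∀ g : V → ℕ, IsRomanDominating T g →
      RomanTreeAux.KK hT r f ≤ RomanTreeAux.KK hT r g := fun g hg =>
    hfK ▸ Nat.sInf_le ⟨g, hg, rfl⟩
  have hWmin : ∀ g : V → ℕ, IsRomanDominating T g → ∑ v, f v ≤ ∑ v, g v := by
    intro g hg
    by_contra hlt
    push_neg at hlt
    have hKK : RomanTreeAux.KK hT r g < RomanTreeAux.KK hT r f :=
      RomanTreeAux.KK_lt hT r hf.1 hg.1 Finset.univ
        (fun x hx => absurd (Finset.mem_univ x) hx) (Or.inl hlt)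
    exact absurd (hmin g hg) (not_le.2 hKK)
  have hR : ∑ v, f v = romanNumber T := by
    rw [romanNumber]
    apply le_antisymm
    · have hmem : (∑ v, f v) ∈ {w | ∃ g : V → ℕ, IsRomanDominating T g ∧ ∑ v, g v = w} :=
        ⟨f, hf, rfl⟩
      apply le_csInf ⟨_, hmem⟩
      rintro w ⟨g, hg, rfl⟩
      exact hWmin g hg
    · exact Nat.sInf_le ⟨f, hf, rfl⟩
  exact ⟨f, hf, hR, fun v =>
    ⟨RomanTreeAux.cond1 hf hmin v, RomanTreeAux.cond2 hf hmin v, RomanTreeAux.cond3 hf hmin v⟩⟩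
end
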